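/- arXiv:2506.03309 — 13 statements merged into one kernel-verified Lean document; each statement's English description precedes it below -/
import Mathlib

section
/- Under the MNL model, the maximum of the payoff Σ_{i∈[n]} b_i π_i(x) over the set X of integral matchings equals its maximum over the fractional matching polytope X̄; that is, max_{x∈X} Σ_i b_i π_i(x) = max_{x∈X̄} Σ_i b_i π_i(x). -/
open Finset

/-- MNL click-through rate of advertiser `i` under (possibly fractional) allocation `x`,
given the matrix `ρ` of log-odds. -/
noncomputable def mnlCTR {n m : ℕ} (ρ : Fin n → Fin m → ℝ) (x : Fin n → Fin m → ℝ)
    (i : Fin n) : ℝ :=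
  (∑ j, x i j * Real.exp (ρ i j)) / (1 + ∑ i', ∑ j, x i' j * Real.exp (ρ i' j))

/-- The fractional matching polytope `X̄` with capacity `K`. -/
def FracMatching {n m : ℕ} (K : ℕ) (x : Fin n → Fin m → ℝ) : Prop :=
  (∀ i j, 0 ≤ x i j) ∧ (∀ i, ∑ j, x i j ≤ 1) ∧ (∀ j, ∑ i, x i j ≤ 1) ∧
    (∑ i, ∑ j, x i j ≤ (K : ℝ))

/-- The set `X` of integral matchings with capacity `K`. -/
def IntMatching {n m : ℕ} (K : ℕ) (x : Fin n → Fin m → ℝ) : Prop :=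
  (∀ i j, x i j = 0 ∨ x i j = 1) ∧ (∀ i, ∑ j, x i j ≤ 1) ∧ (∀ j, ∑ i, x i j ≤ 1) ∧
    (∑ i, ∑ j, x i j ≤ (K : ℝ))



/-- A real number is an integer. -/
def IsIntR (r : ℝ) : Prop := ∃ k : ℤ, r = k

lemma IsIntR.sum {α : Type*} (s : Finset α) (f : α → ℝ) (h : ∀ a ∈ s, IsIntR (f a)) :
    IsIntR (∑ a ∈ s, f a) := by
  classical
  induction s using Finset.induction_on with
  | empty => exact ⟨0, by simp⟩
  | @insert a s hx ih =>
      obtain ⟨k, hk⟩ := h a (by simp)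
      obtain ⟨k', hk'⟩ := ih (fun b hb => h b (by simp [hb]))
      exact ⟨k + k', by rw [Finset.sum_insert hx, hk, hk']; push_cast; ring⟩

lemma IsIntR.sub {a b : ℝ} (ha : IsIntR a) (hb : IsIntR b) : IsIntR (a - b) := by
  obtain ⟨k, hk⟩ := ha; obtain ⟨k', hk'⟩ := hb
  exact ⟨k - k', by rw [hk, hk']; push_cast; ring⟩

/-- If a finite sum is integral and all terms except possibly one are integral,
then that term is integral too. -/
lemma isIntR_of_sum {α : Type*} [DecidableEq α] {s : Finset α} {f : α → ℝ} {a₀ : α}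
    (ha₀ : a₀ ∈ s) (hs : IsIntR (∑ a ∈ s, f a)) (h : ∀ a ∈ s, a ≠ a₀ → IsIntR (f a)) :
    IsIntR (f a₀) := by
  have : f a₀ = (∑ a ∈ s, f a) - ∑ a ∈ s.erase a₀, f a := by
    rw [← Finset.add_sum_erase s f ha₀]; ring
  rw [this]
  exact hs.sub (IsIntR.sum _ _ (fun a ha => h a (Finset.mem_of_mem_erase ha) (Finset.ne_of_mem_erase ha)))

/-- Mediant inequality. -/
lemma mediant_le_max {A₁ A₂ B₁ B₂ l u : ℝ} (hB₁ : 0 < B₁) (hB₂ : 0 < B₂)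
    (hl : 0 ≤ l) (hu : 0 ≤ u) (hlu : l + u = 1) :
    (l * A₁ + u * A₂) / (l * B₁ + u * B₂) ≤ max (A₁ / B₁) (A₂ / B₂) := by
  have hden : 0 < l * B₁ + u * B₂ := by
    rcases eq_or_lt_of_le hl with h | h
    · have : u = 1 := by linarith
      rw [← h, this]; simpa using hB₂
    · nlinarith
  rcases le_total (A₁ / B₁) (A₂ / B₂) with hc | hc
  · rw [max_eq_right hc]
    rw [div_le_div_iff₀ hden hB₂]
    rw [div_le_div_iff₀ hB₁ hB₂] at hc
    nlinarith
  · rw [max_eq_left hc]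
    rw [div_le_div_iff₀ hden hB₁]
    rw [div_le_div_iff₀ hB₂ hB₁] at hc
    nlinarith


abbrev MNLArc (n m : ℕ) := (Fin n ⊕ Fin n × Fin m) ⊕ (Fin m ⊕ Unit)
abbrev MNLVtx (n m : ℕ) := (Unit ⊕ Fin n) ⊕ (Fin m ⊕ Unit)

def mnlHd {n m : ℕ} : MNLArc n m → MNLVtx n m
  | .inl (.inl i) => .inl (.inr i)
  | .inl (.inr p) => .inr (.inl p.2)
  | .inr (.inl _) => .inr (.inr ())
  | .inr (.inr _) => .inl (.inl ())

def mnlTl {n m : ℕ} : MNLArc n m → MNLVtx n m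
  | .inl (.inl _) => .inl (.inl ())
  | .inl (.inr p) => .inl (.inr p.1)
  | .inr (.inl j) => .inr (.inl j)
  | .inr (.inr _) => .inr (.inr ())

def aval {n m : ℕ} (x : Fin n → Fin m → ℝ) : MNLArc n m → ℝ
  | .inl (.inl i) => ∑ j, x i j
  | .inl (.inr p) => x p.1 p.2
  | .inr (.inl j) => ∑ i, x i j
  | .inr (.inr _) => ∑ i, ∑ j, x i j

section balance
variable {n m : ℕ} (d : MNLArc n m → ℝ)
  (hbal : ∀ v : MNLVtx n m, ∑ a, d a *
    ((if mnlHd a = v then (1:ℝ) else 0) - (if mnlTl a = v then 1 else 0)) = 0)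

include hbal

lemma bal_row (i : Fin n) : ∑ j, d (.inl (.inr (i, j))) = d (.inl (.inl i)) := by
  have h := hbal (.inl (.inr i))
  simp [Fintype.sum_sum_type, Fintype.sum_prod_type, mnlHd, mnlTl, sub_eq_zero,
    mul_sub, Finset.sum_sub_distrib, Finset.sum_ite_irrel, Finset.sum_ite_eq,
    Finset.sum_ite_eq', Finset.sum_const_zero] at h
  rw [Finset.sum_comm] at h
  simp only [Finset.sum_ite_eq', Finset.mem_univ, if_true] at h
  exact h.symm

lemma bal_col (j : Fin m) : ∑ i, d (.inl (.inr (i, j))) = d (.inr (.inl j)) := by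
  have h := hbal (.inr (.inl j))
  simp [Fintype.sum_sum_type, Fintype.sum_prod_type, mnlHd, mnlTl, sub_eq_zero,
    mul_sub, Finset.sum_sub_distrib, Finset.sum_ite_irrel, Finset.sum_ite_eq,
    Finset.sum_ite_eq', Finset.sum_const_zero] at h
  linarith [h]

lemma bal_src : ∑ i, d (.inl (.inl i)) = d (.inr (.inr ())) := by
  have h := hbal (.inl (.inl ()))
  simp [Fintype.sum_sum_type, Fintype.sum_prod_type, mnlHd, mnlTl, sub_eq_zero,
    mul_sub, Finset.sum_sub_distrib, Finset.sum_ite_irrel, Finset.sum_ite_eq,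
    Finset.sum_ite_eq', Finset.sum_const_zero] at h
  linarith [h]

end balance

open Classical in
noncomputable def fracArcs {n m : ℕ} (x : Fin n → Fin m → ℝ) : Finset (MNLArc n m) :=
  Finset.univ.filter (fun a => ¬ IsIntR (aval x a))

lemma mem_fracArcs {n m : ℕ} {x : Fin n → Fin m → ℝ} {a : MNLArc n m} :
    a ∈ fracArcs x ↔ ¬ IsIntR (aval x a) := by
  classical
  simp [fracArcs]

lemma exists_notInt {α : Type*} {s : Finset α} {f : α → ℝ}
    (h : ¬ IsIntR (∑ a ∈ s, f a)) : ∃ a ∈ s, ¬ IsIntR (f a) := by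
  by_contra hno
  push_neg at hno
  exact h (IsIntR.sum s f hno)

lemma exists_other_notInt {α : Type*} [DecidableEq α] {s : Finset α} {f : α → ℝ} {a₀ : α}
    (ha₀ : a₀ ∈ s) (hs : IsIntR (∑ a ∈ s, f a)) (h : ¬ IsIntR (f a₀)) :
    ∃ a ∈ s, a ≠ a₀ ∧ ¬ IsIntR (f a) := by
  by_contra hno
  push_neg at hno
  exact h (isIntR_of_sum ha₀ hs hno)

/-- two distinct incident fractional arcs give degree at least two -/
lemma two_le_deg {n m : ℕ} {x : Fin n → Fin m → ℝ} {v : MNLVtx n m} {a₁ a₂ : MNLArc n m}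
    (h1 : a₁ ∈ fracArcs x) (h2 : a₂ ∈ fracArcs x) (hne : a₁ ≠ a₂)
    (hi1 : mnlHd a₁ = v ∨ mnlTl a₁ = v) (hi2 : mnlHd a₂ = v ∨ mnlTl a₂ = v) :
    2 ≤ ((fracArcs x).filter (fun a => mnlHd a = v ∨ mnlTl a = v)).card := by
  classical
  apply Finset.one_lt_card.2
  exact ⟨a₁, Finset.mem_filter.2 ⟨h1, hi1⟩, a₂, Finset.mem_filter.2 ⟨h2, hi2⟩, hne⟩

lemma aval_row {n m : ℕ} (x : Fin n → Fin m → ℝ) (i : Fin n) :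
    aval x (.inl (.inl i)) = ∑ j, aval x (.inl (.inr (i, j))) := rfl

lemma aval_col {n m : ℕ} (x : Fin n → Fin m → ℝ) (j : Fin m) :
    aval x (.inr (.inl j)) = ∑ i, aval x (.inl (.inr (i, j))) := rfl

lemma aval_tot_row {n m : ℕ} (x : Fin n → Fin m → ℝ) :
    aval x (.inr (.inr ())) = ∑ i, aval x (.inl (.inl i)) := rfl

lemma aval_tot_col {n m : ℕ} (x : Fin n → Fin m → ℝ) :
    aval x (.inr (.inr ())) = ∑ j, aval x (.inr (.inl j)) := by
  show (∑ i, ∑ j, x i j) = _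
  rw [Finset.sum_comm]
  rfl

lemma deg_ge_two {n m : ℕ} (x : Fin n → Fin m → ℝ) (v : MNLVtx n m)
    (htouch : ∃ a ∈ fracArcs x, mnlHd a = v ∨ mnlTl a = v) :
    2 ≤ ((fracArcs x).filter (fun a => mnlHd a = v ∨ mnlTl a = v)).card := by
  classical
  obtain ⟨a, haE, hinc⟩ := htouch
  have haF : ¬ IsIntR (aval x a) := mem_fracArcs.1 haE
  match v with
  | .inl (.inl _) =>
    -- vertex s : incident arcs are r-arcs (tails) and the T-arc (head)
    match a with
    | .inl (.inl i) =>
      -- a is the r-arc i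
      by_cases hT : IsIntR (aval x (.inr (.inr ())))
      · rw [aval_tot_row] at hT
        obtain ⟨i', hi'mem, hi'ne, hi'F⟩ :=
          exists_other_notInt (Finset.mem_univ i) hT haF
        exact two_le_deg haE (mem_fracArcs.2 hi'F)
          (by simp [hi'ne.symm]) (Or.inr rfl) (Or.inr rfl)
      · exact two_le_deg haE (mem_fracArcs.2 hT) (by simp)
          (Or.inr rfl) (Or.inl rfl)
    | .inl (.inr p) => exact absurd hinc (by simp [mnlHd, mnlTl])
    | .inr (.inl j) => exact absurd hinc (by simp [mnlHd, mnlTl])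
    | .inr (.inr _) =>
      -- a is the T-arc; T = ∑ r_i
      rw [aval_tot_row] at haF
      obtain ⟨i, -, hiF⟩ := exists_notInt haF
      exact two_le_deg haE (mem_fracArcs.2 hiF) (by simp)
        (Or.inl rfl) (Or.inr rfl)
  | .inl (.inr i) =>
    -- vertex u_i : incident arcs: r-arc i (head), x-arcs (i,j) (tails)
    match a with
    | .inl (.inl i') =>
      have hii : i' = i := by simpa [mnlHd, mnlTl] using hinc
      subst hii
      rw [aval_row] at haF
      obtain ⟨j, -, hjF⟩ := exists_notInt haF
      exact two_le_deg haE (mem_fracArcs.2 hjF) (by simp)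
        (Or.inl rfl) (Or.inr (by simp [mnlTl]))
    | .inl (.inr (pi, pj)) =>
      have hpi : pi = i := by simpa [mnlHd, mnlTl] using hinc
      subst hpi
      by_cases hr : IsIntR (aval x (.inl (.inl pi)))
      · rw [aval_row] at hr
        obtain ⟨j', hj'mem, hj'ne, hj'F⟩ :=
          exists_other_notInt (Finset.mem_univ pj) hr haF
        exact two_le_deg haE (mem_fracArcs.2 hj'F) (by simp [hj'ne.symm])
          (Or.inr (by simp [mnlTl])) (Or.inr (by simp [mnlTl]))
      · exact two_le_deg haE (mem_fracArcs.2 hr) (by simp)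
          (Or.inr (by simp [mnlTl])) (Or.inl rfl)
    | .inr (.inl j) => exact absurd hinc (by simp [mnlHd, mnlTl])
    | .inr (.inr _) => exact absurd hinc (by simp [mnlHd, mnlTl])
  | .inr (.inl j) =>
    -- vertex v_j : incident arcs: x-arcs (i,j) (heads), c-arc j (tail)
    match a with
    | .inl (.inl i) => exact absurd hinc (by simp [mnlHd, mnlTl])
    | .inl (.inr (pi, pj)) =>
      have hpj : pj = j := by simpa [mnlHd, mnlTl] using hinc
      subst hpj
      by_cases hc : IsIntR (aval x (.inr (.inl pj)))
      · rw [aval_col] at hc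
        obtain ⟨i', hi'mem, hi'ne, hi'F⟩ :=
          exists_other_notInt (Finset.mem_univ pi) hc haF
        exact two_le_deg haE (mem_fracArcs.2 hi'F) (by simp [hi'ne.symm])
          (Or.inl (by simp [mnlHd])) (Or.inl (by simp [mnlHd]))
      · exact two_le_deg haE (mem_fracArcs.2 hc) (by simp)
          (Or.inl (by simp [mnlHd])) (Or.inr rfl)
    | .inr (.inl j') =>
      have hjj : j' = j := by simpa [mnlHd, mnlTl] using hinc
      subst hjj
      rw [aval_col] at haF
      obtain ⟨i, -, hiF⟩ := exists_notInt haF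
      exact two_le_deg haE (mem_fracArcs.2 hiF) (by simp)
        (Or.inr rfl) (Or.inl (by simp [mnlHd]))
    | .inr (.inr _) => exact absurd hinc (by simp [mnlHd, mnlTl])
  | .inr (.inr _) =>
    -- vertex t' : incident arcs: c-arcs (heads), T-arc (tail)
    match a with
    | .inl (.inl i) => exact absurd hinc (by simp [mnlHd, mnlTl])
    | .inl (.inr p) => exact absurd hinc (by simp [mnlHd, mnlTl])
    | .inr (.inl j) =>
      by_cases hT : IsIntR (aval x (.inr (.inr ())))
      · rw [aval_tot_col] at hT
        obtain ⟨j', hj'mem, hj'ne, hj'F⟩ :=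
          exists_other_notInt (Finset.mem_univ j) hT haF
        exact two_le_deg haE (mem_fracArcs.2 hj'F)
          (by simp [hj'ne.symm]) (Or.inl rfl) (Or.inl rfl)
      · exact two_le_deg haE (mem_fracArcs.2 hT) (by simp)
          (Or.inl rfl) (Or.inr rfl)
    | .inr (.inr _) =>
      rw [aval_tot_col] at haF
      obtain ⟨j, -, hjF⟩ := exists_notInt haF
      exact two_le_deg haE (mem_fracArcs.2 hjF) (by simp)
        (Or.inr rfl) (Or.inl rfl)


/-- If every vertex touched by an edge of `E` has degree at least 2 (and endpoints of
edges are distinct), then there is a nonzero "circulation" supported on `E`. -/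
lemma exists_circulation {ι κ : Type*} [Fintype ι] [Fintype κ] [DecidableEq ι] [DecidableEq κ]
    (hd tl : ι → κ) (E : Finset ι) (hne : E.Nonempty)
    (hends : ∀ a ∈ E, hd a ≠ tl a)
    (hdeg : ∀ v, (∃ a ∈ E, hd a = v ∨ tl a = v) →
       2 ≤ (E.filter (fun a => hd a = v ∨ tl a = v)).card) :
    ∃ d : ι → ℝ, d ≠ 0 ∧ (∀ a, a ∉ E → d a = 0) ∧
      ∀ v, ∑ a, d a * ((if hd a = v then (1:ℝ) else 0) - (if tl a = v then 1 else 0)) = 0 := by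
  classical
  set S : Finset κ := univ.filter (fun v => ∃ a ∈ E, hd a = v ∨ tl a = v) with hS
  have hmemS : ∀ v, v ∈ S ↔ ∃ a ∈ E, hd a = v ∨ tl a = v := by
    intro v; simp [hS]
  -- handshake: |S| ≤ |E|
  have hcount : ∀ a ∈ E, (S.filter (fun v => hd a = v ∨ tl a = v)) = {hd a, tl a} := by
    intro a ha
    ext v
    simp only [Finset.mem_filter, Finset.mem_insert, Finset.mem_singleton]
    constructor
    · rintro ⟨-, h | h⟩
      · exact Or.inl h.symm
      · exact Or.inr h.symm
    · rintro (h | h) <;> subst h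
      · exact ⟨(hmemS _).2 ⟨a, ha, Or.inl rfl⟩, Or.inl rfl⟩
      · exact ⟨(hmemS _).2 ⟨a, ha, Or.inr rfl⟩, Or.inr rfl⟩
  have hhs : 2 * S.card ≤ 2 * E.card := by
    calc 2 * S.card = ∑ v ∈ S, 2 := by rw [Finset.sum_const, smul_eq_mul, mul_comm]
    _ ≤ ∑ v ∈ S, (E.filter (fun a => hd a = v ∨ tl a = v)).card := by
        apply Finset.sum_le_sum
        intro v hv
        exact hdeg v ((hmemS v).1 hv)
    _ = ∑ v ∈ S, ∑ a ∈ E, (if hd a = v ∨ tl a = v then 1 else 0) := by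
        simp only [Finset.card_filter]
    _ = ∑ a ∈ E, ∑ v ∈ S, (if hd a = v ∨ tl a = v then 1 else 0) := Finset.sum_comm
    _ = ∑ a ∈ E, (S.filter (fun v => hd a = v ∨ tl a = v)).card := by
        simp only [Finset.card_filter]
    _ = ∑ a ∈ E, 2 := by
        apply Finset.sum_congr rfl
        intro a ha
        rw [hcount a ha]
        rw [Finset.card_insert_of_notMem (by simp [hends a ha]), Finset.card_singleton]
    _ = 2 * E.card := by rw [Finset.sum_const, smul_eq_mul, mul_comm]
  have hSE : S.card ≤ E.card := by omega
  -- pick a touched vertex v₀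
  obtain ⟨a₁, ha₁⟩ := hne
  have hv₀ : hd a₁ ∈ S := (hmemS _).2 ⟨a₁, ha₁, Or.inl rfl⟩
  set v₀ := hd a₁ with hv₀def
  set D : Finset κ := S.erase v₀ with hD
  have hSpos : 0 < S.card := Finset.card_pos.2 ⟨v₀, hv₀⟩
  have hDcard : D.card < E.card := by
    rw [hD, Finset.card_erase_of_mem hv₀]
    omega
  -- the coefficient function
  set c : ι → κ → ℝ := fun a v => (if hd a = v then (1:ℝ) else 0) - (if tl a = v then 1 else 0)
    with hc
  -- linear map from E-supported vectors to D-coordinates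
  set Φ : (↥E → ℝ) →ₗ[ℝ] (↥D → ℝ) :=
    { toFun := fun z v => ∑ a : ↥E, z a * c a (v : κ)
      map_add' := by
        intro z₁ z₂; funext v
        simp [add_mul, Finset.sum_add_distrib]
      map_smul' := by
        intro r z; funext v
        simp [Finset.mul_sum, mul_assoc] } with hΦ
  have hnotinj : ¬ Function.Injective Φ := by
    intro hinj
    have := LinearMap.finrank_le_finrank_of_injective hinj
    rw [Module.finrank_fintype_fun_eq_card, Module.finrank_fintype_fun_eq_card,
      Fintype.card_coe, Fintype.card_coe] at this
    omega
  obtain ⟨z₁, z₂, hzeq, hzne⟩ := Function.not_injective_iff.1 hnotinj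
  set z : ↥E → ℝ := z₁ - z₂ with hz
  have hzz : z ≠ 0 := sub_ne_zero.2 hzne
  have hΦz : Φ z = 0 := by rw [hz, map_sub, hzeq, sub_self]
  set d : ι → ℝ := fun a => if h : a ∈ E then z ⟨a, h⟩ else 0 with hd'
  refine ⟨d, ?_, ?_, ?_⟩
  · intro h0
    apply hzz
    funext a
    have : d (a : ι) = 0 := by rw [h0]; rfl
    simp only [hd'] at this
    rwa [dif_pos a.2] at this
  · intro a ha
    simp only [hd']
    rw [dif_neg ha]
  · -- balance at every vertex
    have hsum : ∀ v, ∑ a, d a * c a v = ∑ a : ↥E, z a * c a v := by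
      intro v
      have h1 : ∑ a, d a * c a v = ∑ a ∈ E, d a * c a v := by
        apply (Finset.sum_subset (Finset.subset_univ E) ?_).symm
        intro a _ ha
        simp only [hd']
        rw [dif_neg ha, zero_mul]
      rw [h1, ← Finset.sum_attach E (fun a => d a * c a v)]
      apply Finset.sum_congr rfl
      intro a _
      simp only [hd']
      rw [dif_pos a.2]
    have hbalD : ∀ v ∈ D, ∑ a : ↥E, z a * c a v = 0 := by
      intro v hv
      have := congrFun hΦz ⟨v, hv⟩
      simpa [hΦ] using this
    have hbalnotS : ∀ v, v ∉ S → ∑ a : ↥E, z a * c a v = 0 := by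
      intro v hv
      apply Finset.sum_eq_zero
      intro a _
      have h1 : hd (a : ι) ≠ v := fun h => hv ((hmemS v).2 ⟨a, a.2, Or.inl h⟩)
      have h2 : tl (a : ι) ≠ v := fun h => hv ((hmemS v).2 ⟨a, a.2, Or.inr h⟩)
      rw [hc]; simp [h1, h2]
    have hother : ∀ v, v ≠ v₀ → ∑ a : ↥E, z a * c a v = 0 := by
      intro v hv
      by_cases hvS : v ∈ S
      · exact hbalD v (Finset.mem_erase.2 ⟨hv, hvS⟩)
      · exact hbalnotS v hvS
    have htot : ∑ v, ∑ a : ↥E, z a * c a v = 0 := by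
      rw [Finset.sum_comm]
      apply Finset.sum_eq_zero
      intro a _
      have : ∑ v, c (a : ι) v = 0 := by
        rw [hc]
        simp only
        rw [Finset.sum_sub_distrib]
        simp [Finset.sum_ite_eq]
      rw [← Finset.mul_sum, this, mul_zero]
    intro v
    rw [hsum v]
    by_cases hvv : v = v₀
    · subst hvv
      have := htot
      rw [Finset.sum_eq_single v₀ (fun w _ hw => hother w hw) (by simp)] at this
      exact this
    · exact hother v hvv

/-- If some arc value is fractional, there exists a nonzero circulation supported
on fractional arcs. -/
lemma exists_mnl_direction {n m : ℕ} (x : Fin n → Fin m → ℝ)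
    (hfrac : ∃ a : MNLArc n m, ¬ IsIntR (aval x a)) :
    ∃ d : MNLArc n m → ℝ,
      (∀ a, d a ≠ 0 → ¬ IsIntR (aval x a)) ∧
      (∃ i j, d (.inl (.inr (i, j))) ≠ 0) ∧
      (∀ i, ∑ j, d (.inl (.inr (i, j))) = d (.inl (.inl i))) ∧
      (∀ j, ∑ i, d (.inl (.inr (i, j))) = d (.inr (.inl j))) ∧
      (∑ i, d (.inl (.inl i)) = d (.inr (.inr ()))) := by
  classical
  obtain ⟨a₀, ha₀⟩ := hfrac
  have hne : (fracArcs x).Nonempty := ⟨a₀, mem_fracArcs.2 ha₀⟩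
  have hends : ∀ a ∈ fracArcs x, mnlHd a ≠ mnlTl a := by
    rintro ((i | p) | (j | u)) _ <;> simp [mnlHd, mnlTl]
  obtain ⟨d, hd0, hsupp, hbal⟩ :=
    exists_circulation mnlHd mnlTl (fracArcs x) hne hends (deg_ge_two x)
  have hsupp' : ∀ a, d a ≠ 0 → ¬ IsIntR (aval x a) := by
    intro a ha hint
    exact ha (hsupp a (fun hmem => (mem_fracArcs.1 hmem) hint))
  have hrow := bal_row d hbal
  have hcol := bal_col d hbal
  have hsrc := bal_src d hbal
  refine ⟨d, hsupp', ?_, hrow, hcol, hsrc⟩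
  -- some x-arc coordinate is nonzero
  by_contra hno
  push_neg at hno
  apply hd0
  funext a
  match a with
  | .inl (.inr (i, j)) => exact hno i j
  | .inl (.inl i) => rw [← hrow i]; exact Finset.sum_eq_zero (fun j _ => hno i j)
  | .inr (.inl j) => rw [← hcol j]; exact Finset.sum_eq_zero (fun i _ => hno i j)
  | .inr (.inr u) =>
      have : d (.inr (.inr ())) = 0 := by
        rw [← hsrc]
        apply Finset.sum_eq_zero
        intro i _
        rw [← hrow i]
        exact Finset.sum_eq_zero (fun j _ => hno i j)
      cases u
      exact this

lemma payoff_eq {n m : ℕ} (ρ x : Fin n → Fin m → ℝ) (b : Fin n → ℝ) :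
    ∑ i, b i * mnlCTR ρ x i =
      (∑ i, ∑ j, b i * (x i j * Real.exp (ρ i j))) /
        (1 + ∑ i, ∑ j, x i j * Real.exp (ρ i j)) := by
  rw [Finset.sum_div]
  apply Finset.sum_congr rfl
  intro i _
  rw [mnlCTR, ← Finset.mul_sum, mul_div_assoc]

lemma den_pos {n m : ℕ} {ρ x : Fin n → Fin m → ℝ} (hx : ∀ i j, 0 ≤ x i j) :
    0 < 1 + ∑ i, ∑ j, x i j * Real.exp (ρ i j) := by
  have : 0 ≤ ∑ i, ∑ j, x i j * Real.exp (ρ i j) :=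
    Finset.sum_nonneg fun i _ => Finset.sum_nonneg fun j _ =>
      mul_nonneg (hx i j) (Real.exp_pos _).le
  linarith

lemma payoff_combo_le {n m : ℕ} (ρ : Fin n → Fin m → ℝ) (b : Fin n → ℝ)
    {x x₁ x₂ : Fin n → Fin m → ℝ} {l u : ℝ}
    (hl : 0 ≤ l) (hu : 0 ≤ u) (hlu : l + u = 1)
    (hx : ∀ i j, x i j = l * x₁ i j + u * x₂ i j)
    (h1 : ∀ i j, 0 ≤ x₁ i j) (h2 : ∀ i j, 0 ≤ x₂ i j) :
    ∑ i, b i * mnlCTR ρ x i ≤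
      max (∑ i, b i * mnlCTR ρ x₁ i) (∑ i, b i * mnlCTR ρ x₂ i) := by
  rw [payoff_eq, payoff_eq, payoff_eq]
  have hnum : (∑ i, ∑ j, b i * (x i j * Real.exp (ρ i j))) =
      l * (∑ i, ∑ j, b i * (x₁ i j * Real.exp (ρ i j))) +
      u * (∑ i, ∑ j, b i * (x₂ i j * Real.exp (ρ i j))) := by
    rw [Finset.mul_sum, Finset.mul_sum, ← Finset.sum_add_distrib]
    apply Finset.sum_congr rfl
    intro i _
    rw [Finset.mul_sum, Finset.mul_sum, ← Finset.sum_add_distrib]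
    apply Finset.sum_congr rfl
    intro j _
    rw [hx]; ring
  have hden : (1 + ∑ i, ∑ j, x i j * Real.exp (ρ i j)) =
      l * (1 + ∑ i, ∑ j, x₁ i j * Real.exp (ρ i j)) +
      u * (1 + ∑ i, ∑ j, x₂ i j * Real.exp (ρ i j)) := by
    have h : (∑ i, ∑ j, x i j * Real.exp (ρ i j)) =
        l * (∑ i, ∑ j, x₁ i j * Real.exp (ρ i j)) +
        u * (∑ i, ∑ j, x₂ i j * Real.exp (ρ i j)) := by
      rw [Finset.mul_sum, Finset.mul_sum, ← Finset.sum_add_distrib]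
      apply Finset.sum_congr rfl
      intro i _
      rw [Finset.mul_sum, Finset.mul_sum, ← Finset.sum_add_distrib]
      apply Finset.sum_congr rfl
      intro j _
      rw [hx]; ring
    rw [h]; nlinarith [hlu]
  rw [hnum, hden]
  exact mediant_le_max (den_pos h1) (den_pos h2) hl hu hlu

lemma aval_move {n m : ℕ} (x : Fin n → Fin m → ℝ) (d : MNLArc n m → ℝ) (t : ℝ)
    (hrow : ∀ i, ∑ j, d (.inl (.inr (i, j))) = d (.inl (.inl i)))
    (hcol : ∀ j, ∑ i, d (.inl (.inr (i, j))) = d (.inr (.inl j)))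
    (hsrc : ∑ i, d (.inl (.inl i)) = d (.inr (.inr ()))) :
    ∀ a, aval (fun i j => x i j + t * d (.inl (.inr (i, j)))) a = aval x a + t * d a := by
  intro a
  match a with
  | .inl (.inr (i, j)) => rfl
  | .inl (.inl i) =>
      show (∑ j, (x i j + t * d (.inl (.inr (i, j))))) = (∑ j, x i j) + t * d (.inl (.inl i))
      rw [Finset.sum_add_distrib, ← Finset.mul_sum, hrow i]
  | .inr (.inl j) =>
      show (∑ i, (x i j + t * d (.inl (.inr (i, j))))) = (∑ i, x i j) + t * d (.inr (.inl j))
      rw [Finset.sum_add_distrib, ← Finset.mul_sum, hcol j]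
  | .inr (.inr u) =>
      cases u
      show (∑ i, ∑ j, (x i j + t * d (.inl (.inr (i, j)))))
        = (∑ i, ∑ j, x i j) + t * d (.inr (.inr ()))
      have : ∀ i : Fin n, (∑ j, (x i j + t * d (.inl (.inr (i, j)))))
          = (∑ j, x i j) + t * d (.inl (.inl i)) := by
        intro i
        rw [Finset.sum_add_distrib, ← Finset.mul_sum, hrow i]
      rw [Finset.sum_congr rfl (fun i _ => this i), Finset.sum_add_distrib,
        ← Finset.mul_sum, hsrc]

lemma notInt_floor_lt {v : ℝ} (h : ¬ IsIntR v) : (⌊v⌋ : ℝ) < v ∧ v < (⌈v⌉ : ℝ) := by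
  constructor
  · rcases lt_or_eq_of_le (Int.floor_le v) with h' | h'
    · exact h'
    · exact absurd ⟨⌊v⌋, h'.symm⟩ h
  · rcases lt_or_eq_of_le (Int.le_ceil v) with h' | h'
    · exact h'
    · exact absurd ⟨⌈v⌉, h'⟩ h

/-- Moving along a circulation direction: one can move a positive amount, stay
feasible, and strictly decrease the number of fractional arc values. -/
lemma move_one {n m : ℕ} {K : ℕ} {x : Fin n → Fin m → ℝ} (hx : FracMatching K x)
    (d : MNLArc n m → ℝ)
    (hsupp : ∀ a, d a ≠ 0 → ¬ IsIntR (aval x a))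
    (hxne : ∃ i j, d (.inl (.inr (i, j))) ≠ 0)
    (hrow : ∀ i, ∑ j, d (.inl (.inr (i, j))) = d (.inl (.inl i)))
    (hcol : ∀ j, ∑ i, d (.inl (.inr (i, j))) = d (.inr (.inl j)))
    (hsrc : ∑ i, d (.inl (.inl i)) = d (.inr (.inr ()))) :
    ∃ t : ℝ, 0 < t ∧
      FracMatching K (fun i j => x i j + t * d (.inl (.inr (i, j)))) ∧
      (fracArcs (fun i j => x i j + t * d (.inl (.inr (i, j))))).card < (fracArcs x).card := by
  classical
  set A : Finset (MNLArc n m) := univ.filter (fun a => d a ≠ 0) with hA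
  have hAne : A.Nonempty := by
    obtain ⟨i, j, hij⟩ := hxne
    exact ⟨.inl (.inr (i, j)), by simp [hA, hij]⟩
  set g : MNLArc n m → ℝ := fun a =>
    (if 0 < d a then (⌈aval x a⌉ : ℝ) - aval x a else aval x a - (⌊aval x a⌋ : ℝ)) / |d a|
    with hg
  set t : ℝ := A.inf' hAne g with ht
  have hgpos : ∀ a ∈ A, 0 < g a := by
    intro a ha
    have hda : d a ≠ 0 := by simpa [hA] using ha
    have hfr := hsupp a hda
    obtain ⟨hfl, hce⟩ := notInt_floor_lt hfr
    rw [hg]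
    apply div_pos
    · split
      · linarith
      · linarith
    · exact abs_pos.2 hda
  have htpos : 0 < t := by
    rw [ht, Finset.lt_inf'_iff]
    exact hgpos
  have htle : ∀ a ∈ A, t ≤ g a := fun a ha => Finset.inf'_le _ ha
  set x' : Fin n → Fin m → ℝ := fun i j => x i j + t * d (.inl (.inr (i, j))) with hx'
  have hmove : ∀ a, aval x' a = aval x a + t * d a := aval_move x d t hrow hcol hsrc
  -- interval bounds for arcs in A
  have hbound : ∀ a ∈ A, (⌊aval x a⌋ : ℝ) ≤ aval x' a ∧ aval x' a ≤ (⌈aval x a⌉ : ℝ) := by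
    intro a ha
    have hda : d a ≠ 0 := by simpa [hA] using ha
    have habs : 0 < |d a| := abs_pos.2 hda
    have hle := htle a ha
    have hfl := Int.floor_le (aval x a)
    have hce := Int.le_ceil (aval x a)
    rw [hmove a]
    rcases lt_trichotomy (d a) 0 with hneg | hzero | hpos
    · have habs' : |d a| = -(d a) := abs_of_neg hneg
      rw [hg] at hle
      simp only [if_neg (by linarith : ¬ 0 < d a), habs'] at hle
      have h1 : t * d a ≥ -(aval x a - (⌊aval x a⌋ : ℝ)) := by
        have h2 : t * (-(d a)) ≤ aval x a - (⌊aval x a⌋ : ℝ) := by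
          calc t * (-(d a)) ≤ ((aval x a - (⌊aval x a⌋:ℝ)) / (-(d a))) * (-(d a)) := by
                apply mul_le_mul_of_nonneg_right hle (by linarith)
          _ = aval x a - (⌊aval x a⌋ : ℝ) := by field_simp
        nlinarith
      constructor
      · nlinarith
      · nlinarith [mul_nonneg htpos.le (neg_nonneg.2 hneg.le)]
    · exact absurd hzero hda
    · have habs' : |d a| = d a := abs_of_pos hpos
      rw [hg] at hle
      simp only [if_pos hpos, habs'] at hle
      have h2 : t * d a ≤ (⌈aval x a⌉ : ℝ) - aval x a := by
        calc t * d a ≤ (((⌈aval x a⌉:ℝ) - aval x a) / d a) * d a := by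
              apply mul_le_mul_of_nonneg_right hle hpos.le
        _ = (⌈aval x a⌉ : ℝ) - aval x a := by field_simp
      constructor
      · nlinarith [mul_nonneg htpos.le hpos.le]
      · linarith
  -- values of unmoved arcs
  have hsame : ∀ a, d a = 0 → aval x' a = aval x a := by
    intro a ha
    rw [hmove a, ha, mul_zero, add_zero]
  obtain ⟨hx0, hxr, hxc, hxt⟩ := hx
  refine ⟨t, htpos, ⟨?_, ?_, ?_, ?_⟩, ?_⟩
  · -- nonnegativity
    intro i j
    by_cases hda : d (.inl (.inr (i, j))) = 0
    · have := hsame _ hda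
      show 0 ≤ x' i j
      have hxx : x' i j = aval x' (.inl (.inr (i, j))) := rfl
      rw [hxx, this]
      exact hx0 i j
    · have hmem : (.inl (.inr (i, j)) : MNLArc n m) ∈ A := by simp [hA, hda]
      have h1 := (hbound _ hmem).1
      have h2 : (0:ℝ) ≤ (⌊aval x (.inl (.inr (i, j)))⌋ : ℝ) := by
        have : (0:ℤ) ≤ ⌊aval x (.inl (.inr (i, j)))⌋ := Int.floor_nonneg.2 (hx0 i j)
        exact_mod_cast this
      show 0 ≤ x' i j
      have hxx : x' i j = aval x' (.inl (.inr (i, j))) := rfl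
      rw [hxx]; linarith
  · -- row sums
    intro i
    have hxx : (∑ j, x' i j) = aval x' (.inl (.inl i)) := rfl
    by_cases hda : d (.inl (.inl i) : MNLArc n m) = 0
    · rw [hxx, hsame _ hda]; exact hxr i
    · have hmem : (.inl (.inl i) : MNLArc n m) ∈ A := by simp [hA, hda]
      have h1 := (hbound _ hmem).2
      have h2 : ((⌈aval x (.inl (.inl i))⌉ : ℝ)) ≤ 1 := by
        have : ⌈aval x (.inl (.inl i))⌉ ≤ (1:ℤ) := Int.ceil_le.2 (by exact_mod_cast hxr i)
        exact_mod_cast this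
      rw [hxx]; linarith
  · -- column sums
    intro j
    have hxx : (∑ i, x' i j) = aval x' (.inr (.inl j)) := rfl
    by_cases hda : d (.inr (.inl j) : MNLArc n m) = 0
    · rw [hxx, hsame _ hda]; exact hxc j
    · have hmem : (.inr (.inl j) : MNLArc n m) ∈ A := by simp [hA, hda]
      have h1 := (hbound _ hmem).2
      have h2 : ((⌈aval x (.inr (.inl j))⌉ : ℝ)) ≤ 1 := by
        have : ⌈aval x (.inr (.inl j))⌉ ≤ (1:ℤ) := Int.ceil_le.2 (by exact_mod_cast hxc j)
        exact_mod_cast this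
      rw [hxx]; linarith
  · -- total
    have hxx : (∑ i, ∑ j, x' i j) = aval x' (.inr (.inr ())) := rfl
    by_cases hda : d (.inr (.inr ()) : MNLArc n m) = 0
    · rw [hxx, hsame _ hda]; exact hxt
    · have hmem : (.inr (.inr ()) : MNLArc n m) ∈ A := by simp [hA, hda]
      have h1 := (hbound _ hmem).2
      have h2 : ((⌈aval x (.inr (.inr ()))⌉ : ℝ)) ≤ (K:ℝ) := by
        have : ⌈aval x (.inr (.inr ()))⌉ ≤ (K:ℤ) := Int.ceil_le.2 (by exact_mod_cast hxt)
        exact_mod_cast this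
      rw [hxx]; linarith
  · -- measure decreases
    have hsub : fracArcs x' ⊆ fracArcs x := by
      intro a ha
      have haF := mem_fracArcs.1 ha
      by_cases hda : d a = 0
      · exact mem_fracArcs.2 (by rwa [← hsame _ hda])
      · exact mem_fracArcs.2 (hsupp a hda)
    obtain ⟨a₀, ha₀A, ha₀⟩ := Finset.exists_mem_eq_inf' hAne g
    have hda₀ : d a₀ ≠ 0 := by simpa [hA] using ha₀A
    have habs : 0 < |d a₀| := abs_pos.2 hda₀
    have hint : IsIntR (aval x' a₀) := by
      rw [hmove a₀, ht, ha₀]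
      simp only [hg]
      rcases lt_or_ge 0 (d a₀) with hpos | hneg
      · refine ⟨⌈aval x a₀⌉, ?_⟩
        rw [if_pos hpos, abs_of_pos hpos]
        field_simp
        ring
      · have hneg' : d a₀ < 0 := lt_of_le_of_ne hneg hda₀
        refine ⟨⌊aval x a₀⌋, ?_⟩
        have hkey : (aval x a₀ - (⌊aval x a₀⌋:ℝ)) / (-(d a₀)) * d a₀
            = -(aval x a₀ - (⌊aval x a₀⌋:ℝ)) := by
          rw [div_neg, neg_mul, div_mul_cancel₀ _ hda₀]
        rw [if_neg (not_lt.2 hneg), abs_of_neg hneg', hkey]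
        ring
    have ha₀x : a₀ ∈ fracArcs x := mem_fracArcs.2 (hsupp a₀ hda₀)
    have ha₀x' : a₀ ∉ fracArcs x' := fun h => (mem_fracArcs.1 h) hint
    exact Finset.card_lt_card (Finset.ssubset_iff_of_subset hsub |>.2 ⟨a₀, ha₀x, ha₀x'⟩)

lemma descent_step {n m K : ℕ} {x : Fin n → Fin m → ℝ} (hx : FracMatching K x)
    (hfrac : (fracArcs x).Nonempty) :
    ∃ (x₁ x₂ : Fin n → Fin m → ℝ) (l u : ℝ),
      FracMatching K x₁ ∧ FracMatching K x₂ ∧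
      (fracArcs x₁).card < (fracArcs x).card ∧ (fracArcs x₂).card < (fracArcs x).card ∧
      0 ≤ l ∧ 0 ≤ u ∧ l + u = 1 ∧ (∀ i j, x i j = l * x₁ i j + u * x₂ i j) := by
  obtain ⟨a₀, ha₀⟩ := hfrac
  obtain ⟨d, hsupp, hxne, hrow, hcol, hsrc⟩ :=
    exists_mnl_direction x ⟨a₀, mem_fracArcs.1 ha₀⟩
  obtain ⟨t₁, ht₁, hf₁, hc₁⟩ := move_one hx d hsupp hxne hrow hcol hsrc
  have hsupp' : ∀ a, (-d) a ≠ 0 → ¬ IsIntR (aval x a) := by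
    intro a ha; exact hsupp a (by simpa using ha)
  have hxne' : ∃ i j, (-d) (.inl (.inr (i, j))) ≠ 0 := by
    obtain ⟨i, j, h⟩ := hxne; exact ⟨i, j, by simpa using h⟩
  have hrow' : ∀ i, ∑ j, (-d) (.inl (.inr (i, j))) = (-d) (.inl (.inl i)) := by
    intro i; simp [← hrow i]
  have hcol' : ∀ j, ∑ i, (-d) (.inl (.inr (i, j))) = (-d) (.inr (.inl j)) := by
    intro j; simp [← hcol j]
  have hsrc' : ∑ i, (-d) (.inl (.inl i)) = (-d) (.inr (.inr ())) := by
    simp [← hsrc]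
  obtain ⟨t₂, ht₂, hf₂, hc₂⟩ := move_one hx (-d) hsupp' hxne' hrow' hcol' hsrc'
  have hs : 0 < t₁ + t₂ := by linarith
  refine ⟨_, _, t₂ / (t₁ + t₂), t₁ / (t₁ + t₂), hf₁, hf₂, hc₁, hc₂,
    div_nonneg ht₂.le hs.le, div_nonneg ht₁.le hs.le, by field_simp; ring, ?_⟩
  intro i j
  have : (-d) (.inl (.inr (i, j))) = -(d (.inl (.inr (i, j)))) := rfl
  rw [this]
  field_simp
  ring

lemma int_of_no_frac {n m K : ℕ} {x : Fin n → Fin m → ℝ} (hx : FracMatching K x)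
    (h : fracArcs x = ∅) : IntMatching K x := by
  obtain ⟨h0, hr, hc, ht⟩ := hx
  refine ⟨?_, hr, hc, ht⟩
  intro i j
  have hint : IsIntR (x i j) := by
    by_contra hni
    have : (.inl (.inr (i, j)) : MNLArc n m) ∈ fracArcs x := mem_fracArcs.2 hni
    rw [h] at this
    exact absurd this (Finset.notMem_empty _)
  obtain ⟨k, hk⟩ := hint
  have h1 : x i j ≤ 1 :=
    le_trans (Finset.single_le_sum (fun j' _ => h0 i j') (Finset.mem_univ j)) (hr i)
  have h2 : 0 ≤ x i j := h0 i j
  rw [hk] at h1 h2 ⊢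
  have hk0 : (0:ℤ) ≤ k := by exact_mod_cast h2
  have hk1 : k ≤ (1:ℤ) := by exact_mod_cast h1
  interval_cases k
  · left; norm_num
  · right; norm_num

lemma descent {n m : ℕ} (K : ℕ) (ρ : Fin n → Fin m → ℝ) (b : Fin n → ℝ) :
    ∀ N (x : Fin n → Fin m → ℝ), (fracArcs x).card ≤ N → FracMatching K x →
      ∃ y, IntMatching K y ∧ ∑ i, b i * mnlCTR ρ x i ≤ ∑ i, b i * mnlCTR ρ y i := by
  intro N
  induction N with
  | zero =>
      intro x hcard hx
      exact ⟨x, int_of_no_frac hx (Finset.card_eq_zero.1 (Nat.le_zero.1 hcard)), le_refl _⟩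
  | succ N ih =>
      intro x hcard hx
      rcases Finset.eq_empty_or_nonempty (fracArcs x) with he | hne
      · exact ⟨x, int_of_no_frac hx he, le_refl _⟩
      · obtain ⟨x₁, x₂, l, u, hf₁, hf₂, hc₁, hc₂, hl, hu, hlu, hcombo⟩ := descent_step hx hne
        have hle := payoff_combo_le ρ b hl hu hlu hcombo hf₁.1 hf₂.1
        rcases max_choice (∑ i, b i * mnlCTR ρ x₁ i) (∑ i, b i * mnlCTR ρ x₂ i) with h | h
        · rw [h] at hle
          obtain ⟨y, hy, hy2⟩ := ih x₁ (by omega) hf₁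
          exact ⟨y, hy, le_trans hle hy2⟩
        · rw [h] at hle
          obtain ⟨y, hy, hy2⟩ := ih x₂ (by omega) hf₂
          exact ⟨y, hy, le_trans hle hy2⟩

lemma payoff_le_sum {n m : ℕ} (ρ : Fin n → Fin m → ℝ) (b : Fin n → ℝ)
    {x : Fin n → Fin m → ℝ} (hb : ∀ i, 0 ≤ b i) (hx0 : ∀ i j, 0 ≤ x i j) :
    ∑ i, b i * mnlCTR ρ x i ≤ ∑ i, b i := by
  apply Finset.sum_le_sum
  intro i _
  have hden : 0 ≤ ∑ i', ∑ j, x i' j * Real.exp (ρ i' j) :=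
    Finset.sum_nonneg fun i' _ => Finset.sum_nonneg fun j _ =>
      mul_nonneg (hx0 i' j) (Real.exp_pos _).le
  have h1 : mnlCTR ρ x i ≤ 1 := by
    rw [mnlCTR]
    apply div_le_one_of_le₀
    · have hsingle : (∑ j, x i j * Real.exp (ρ i j)) ≤
          ∑ i', ∑ j, x i' j * Real.exp (ρ i' j) := by
        apply Finset.single_le_sum (f := fun i' => ∑ j, x i' j * Real.exp (ρ i' j))
          (fun i' _ => Finset.sum_nonneg fun j _ => mul_nonneg (hx0 i' j) (Real.exp_pos _).le)
          (Finset.mem_univ i)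
      linarith
    · linarith
  calc b i * mnlCTR ρ x i ≤ b i * 1 := mul_le_mul_of_nonneg_left h1 (hb i)
  _ = b i := mul_one _

lemma intMatching_nonneg {n m K : ℕ} {x : Fin n → Fin m → ℝ} (hx : IntMatching K x) :
    ∀ i j, 0 ≤ x i j := by
  intro i j
  rcases hx.1 i j with h | h <;> rw [h] <;> norm_num

lemma intMatching_frac {n m K : ℕ} {x : Fin n → Fin m → ℝ} (hx : IntMatching K x) :
    FracMatching K x :=
  ⟨intMatching_nonneg hx, hx.2.1, hx.2.2.1, hx.2.2.2⟩

lemma zero_int {n m K : ℕ} : IntMatching K (fun (_ : Fin n) (_ : Fin m) => (0:ℝ)) := by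
  refine ⟨fun i j => Or.inl rfl, ?_, ?_, ?_⟩ <;> simp [Nat.cast_nonneg]

theorem stmt_1' {n m : ℕ} (K : ℕ) (hK : K ≤ m) (ρ : Fin n → Fin m → ℝ)
    (b : Fin n → ℝ) (hb : ∀ i, 0 ≤ b i) :
    sSup {w : ℝ | ∃ x, IntMatching K x ∧ w = ∑ i, b i * mnlCTR ρ x i} =
      sSup {w : ℝ | ∃ x, FracMatching K x ∧ w = ∑ i, b i * mnlCTR ρ x i} := by
  have hbddF : BddAbove {w : ℝ | ∃ x, FracMatching K x ∧ w = ∑ i, b i * mnlCTR ρ x i} := by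
    refine ⟨∑ i, b i, ?_⟩
    rintro w ⟨x, hx, rfl⟩
    exact payoff_le_sum ρ b hb hx.1
  have hbddI : BddAbove {w : ℝ | ∃ x, IntMatching K x ∧ w = ∑ i, b i * mnlCTR ρ x i} := by
    refine ⟨∑ i, b i, ?_⟩
    rintro w ⟨x, hx, rfl⟩
    exact payoff_le_sum ρ b hb (intMatching_nonneg hx)
  have hneI : {w : ℝ | ∃ x, IntMatching K x ∧ w = ∑ i, b i * mnlCTR ρ x i}.Nonempty :=
    ⟨_, ⟨_, zero_int, rfl⟩⟩
  have hneF : {w : ℝ | ∃ x, FracMatching K x ∧ w = ∑ i, b i * mnlCTR ρ x i}.Nonempty :=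
    ⟨_, ⟨_, intMatching_frac zero_int, rfl⟩⟩
  apply le_antisymm
  · apply csSup_le_csSup hbddF hneI
    rintro w ⟨x, hx, rfl⟩
    exact ⟨x, intMatching_frac hx, rfl⟩
  · apply csSup_le hneF
    rintro w ⟨x, hx, rfl⟩
    obtain ⟨y, hy, hle⟩ := descent K ρ b (fracArcs x).card x le_rfl hx
    exact le_trans hle (le_csSup hbddI ⟨y, hy, rfl⟩)

/-- Under the MNL model, the maximal payoff over integral matchings
equals the maximal payoff over the fractional matching polytope. -/
theorem stmt_1 {n m : ℕ} (K : ℕ) (hK : K ≤ m) (ρ : Fin n → Fin m → ℝ)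
    (b : Fin n → ℝ) (hb : ∀ i, 0 ≤ b i) :
    sSup {w : ℝ | ∃ x, IntMatching K x ∧ w = ∑ i, b i * mnlCTR ρ x i} =
      sSup {w : ℝ | ∃ x, FracMatching K x ∧ w = ∑ i, b i * mnlCTR ρ x i} := by
  exact stmt_1' K hK ρ b hb
end

section
/- Suppose b ≥ 0 and b ≠ 0. Let (y, z) with y ∈ ℝ_{≥0}^{n×m} and z ∈ ℝ be an optimal solution to the linear program: maximize Σ_{i,j} b_i y_ij exp(ρ_ij) subject to Σ_j y_ij ≤ z for all i, Σ_i y_ij ≤ z for all j, Σ_{i,j} y_ij ≤ K z, and Σ_{i,j} y_ij exp(ρ_ij) + z = 1. Then z > 0, the matrix x = y/z belongs to the fractional matching polytope X̄, and x maximizes Σ_{i∈[n]} b_i π_i(x) over X̄, with optimal value equal to the maximum of Σ_i b_i π_i over the integral matchings X. -/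
open Finset

/-- Feasibility of `(y, z)` for the linear program \eqref{eq:lp}. -/
def LPFeasible {n m : ℕ} (K : ℕ) (ρ : Fin n → Fin m → ℝ)
    (y : Fin n → Fin m → ℝ) (z : ℝ) : Prop :=
  (∀ i j, 0 ≤ y i j) ∧ (∀ i, ∑ j, y i j ≤ z) ∧ (∀ j, ∑ i, y i j ≤ z) ∧
    (∑ i, ∑ j, y i j ≤ (K : ℝ) * z) ∧
    ((∑ i, ∑ j, y i j * Real.exp (ρ i j)) + z = 1)


lemma card_filter_lt' {m K : ℕ} (hK : K ≤ m) :
    (univ.filter fun d : Fin m => (d : ℕ) < K).card = K := by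
  have h : (univ.filter fun d : Fin m => (d : ℕ) < K)
      = (univ : Finset (Fin K)).map (Fin.castLEEmb hK) := by
    ext d
    simp only [mem_filter, mem_univ, true_and, mem_map, Fin.castLEEmb_apply]
    constructor
    · intro hd; exact ⟨⟨d, hd⟩, by ext; simp⟩
    · rintro ⟨a, rfl⟩; exact a.isLt
  rw [h]; simp

lemma sum_ite_lt' {m K : ℕ} (hK : K ≤ m) (r : ℝ) :
    ∑ d : Fin m, (if (d : ℕ) < K then r else 0) = K * r := by
  rw [← Finset.sum_filter, Finset.sum_const, card_filter_lt' hK, nsmul_eq_mul]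

lemma all_eq_one_of_sum_eq {m : ℕ} (C : Fin m → ℝ) (hle : ∀ j, C j ≤ 1)
    (hsum : ∑ j, C j = m) (j : Fin m) : C j = 1 := by
  by_contra h
  have hlt : C j < 1 := lt_of_le_of_ne (hle j) h
  have : ∑ j, C j < ∑ _j : Fin m, (1 : ℝ) :=
    Finset.sum_lt_sum (fun i _ => hle i) ⟨j, mem_univ j, hlt⟩
  simp [hsum] at this

noncomputable def birkMat {n m : ℕ} (K : ℕ) (x : Fin n → Fin m → ℝ) :
    Matrix (Fin n ⊕ Fin m) (Fin n ⊕ Fin m) ℝ :=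
  fun p q =>
    match p, q with
    | .inl i, .inr j => x i j
    | .inl i, .inl i' => if i = i' then 1 - ∑ j, x i j else 0
    | .inr d, .inr j =>
        (if (d : ℕ) < K then 1 - (∑ i, ∑ j', x i j') / K else 1) * (1 - ∑ i, x i j)
          / ((m : ℝ) - ∑ i, ∑ j', x i j')
    | .inr d, .inl i => if (d : ℕ) < K then (∑ j, x i j) / K else 0

lemma birkMat_mem {n m K : ℕ} (hK : K ≤ m) (x : Fin n → Fin m → ℝ)
    (hpos : ∀ i j, 0 ≤ x i j) (hrow : ∀ i, ∑ j, x i j ≤ 1) (hcol : ∀ j, ∑ i, x i j ≤ 1)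
    (hcap : ∑ i, ∑ j, x i j ≤ (K : ℝ)) (hT : 0 < ∑ i, ∑ j, x i j) :
    birkMat K x ∈ doublyStochastic ℝ (Fin n ⊕ Fin m) := by
  set T : ℝ := ∑ i, ∑ j, x i j with hTdef
  have hKpos : 0 < (K : ℝ) := lt_of_lt_of_le hT hcap
  have hKm : (K : ℝ) ≤ (m : ℝ) := by exact_mod_cast hK
  have hTm : T ≤ (m : ℝ) := hcap.trans hKm
  have hRnn : ∀ i, 0 ≤ ∑ j, x i j := fun i => Finset.sum_nonneg fun j _ => hpos i j
  have hCnn : ∀ j, 0 ≤ ∑ i, x i j := fun j => Finset.sum_nonneg fun i _ => hpos i j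
  have hTC : ∑ j, ∑ i, x i j = T := Finset.sum_comm
  have hTK1 : T / K ≤ 1 := (div_le_one hKpos).mpr hcap
  have hKT : (K : ℝ) * (T / K) = T := by field_simp
  rw [mem_doublyStochastic_iff_sum]
  refine ⟨?_, ?_, ?_⟩
  · rintro (i | d) (i' | j)
    · simp only [birkMat]; split
      · linarith [hrow i]
      · exact le_rfl
    · exact hpos i j
    · simp only [birkMat]; split
      · exact div_nonneg (hRnn i') hKpos.le
      · exact le_rfl
    · simp only [birkMat]
      apply div_nonneg
      · apply mul_nonneg
        · split
          · linarith
          · norm_num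
        · linarith [hcol j]
      · linarith
  · rintro (i | d)
    · rw [Fintype.sum_sum_type]
      simp only [birkMat]
      rw [Finset.sum_ite_eq univ i (fun _ => 1 - ∑ j, x i j)]
      simp
    · rw [Fintype.sum_sum_type]
      simp only [birkMat]
      have hsecond : ∑ j, (if (d : ℕ) < K then 1 - T / K else 1) * (1 - ∑ i, x i j)
            / ((m : ℝ) - T)
          = (if (d : ℕ) < K then 1 - T / K else 1) * ((m : ℝ) - T) / ((m : ℝ) - T) := by
        rw [← Finset.sum_div, ← Finset.mul_sum]
        congr 2
        rw [Finset.sum_sub_distrib, hTC]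
        simp
      rw [hsecond]
      by_cases hd : (d : ℕ) < K
      · simp only [hd, if_true]
        rw [← Finset.sum_div]
        rw [← hTdef]
        rcases eq_or_lt_of_le hTm with hTm' | hTm'
        · have hKT' : (K : ℝ) = T := le_antisymm (hKm.trans_eq hTm'.symm) hcap
          have h1 : T / K = 1 := by rw [← hKT']; exact div_self (ne_of_gt hKpos)
          simp [h1]
        · have hne : (m : ℝ) - T ≠ 0 := by linarith
          rw [mul_div_assoc, div_self hne]
          linarith
      · simp only [hd, if_false]
        have hTm' : T < m := by
          rcases eq_or_lt_of_le hTm with h | h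
          · exfalso
            have : (K : ℝ) = T := le_antisymm (hKm.trans_eq h.symm) hcap
            have : (K : ℝ) = m := by linarith
            have : K = m := by exact_mod_cast this
            omega
          · exact h
        have hne : (m : ℝ) - T ≠ 0 := by linarith
        simp [div_self hne]
  · rintro (i | j)
    · rw [Fintype.sum_sum_type]
      simp only [birkMat]
      rw [Finset.sum_ite_eq' univ i (fun i' => 1 - ∑ j, x i' j)]
      rw [sum_ite_lt' hK ((∑ j, x i j) / K)]
      have : (K : ℝ) * ((∑ j, x i j) / K) = ∑ j, x i j := by field_simp
      simp [this]
    · rw [Fintype.sum_sum_type]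
      simp only [birkMat]
      have hsum_e : ∑ d : Fin m, (if (d : ℕ) < K then 1 - T / K else 1 : ℝ)
          = (m : ℝ) - T := by
        have h : ∀ d : Fin m, (if (d : ℕ) < K then 1 - T / K else 1 : ℝ)
            = 1 - (if (d : ℕ) < K then T / K else 0) := by
          intro d; split <;> simp
        simp_rw [h]
        rw [Finset.sum_sub_distrib, sum_ite_lt' hK (T / K), hKT]
        simp
      have hsecond : ∑ d : Fin m, (if (d : ℕ) < K then 1 - T / K else 1) * (1 - ∑ i, x i j)
            / ((m : ℝ) - T)
          = ((m : ℝ) - T) * (1 - ∑ i, x i j) / ((m : ℝ) - T) := by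
        rw [← Finset.sum_div, ← Finset.sum_mul, hsum_e]
      rw [hsecond]
      rcases eq_or_lt_of_le hTm with hTm' | hTm'
      · have hCj : ∑ i, x i j = 1 := by
          apply all_eq_one_of_sum_eq (fun j => ∑ i, x i j) hcol
          rw [hTC, ← hTm']
        rw [hCj]
        simp
      · have hne : (m : ℝ) - T ≠ 0 := by linarith
        have h2 : ((m : ℝ) - T) * (1 - ∑ i, x i j) / ((m : ℝ) - T)
            = 1 - ∑ i, x i j := by field_simp
        rw [h2]
        ring

lemma permMatrix_apply' {γ : Type*} [DecidableEq γ] (σ : Equiv.Perm γ) (i j : γ) :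
    (σ.permMatrix ℝ) i j = if σ i = j then 1 else 0 := by
  simp [Equiv.Perm.permMatrix, PEquiv.toMatrix_apply, Equiv.toPEquiv_apply, Option.mem_def,
    eq_comm]


lemma exists_int_matching_ge {n m : ℕ} (K : ℕ) (hK : K ≤ m) (c : Fin n → Fin m → ℝ)
    (x : Fin n → Fin m → ℝ) (hx : FracMatching K x) :
    ∃ x₀, IntMatching K x₀ ∧ ∑ i, ∑ j, c i j * x i j ≤ ∑ i, ∑ j, c i j * x₀ i j := by
  obtain ⟨hpos, hrow, hcol, hcap⟩ := hx
  have hTnn : 0 ≤ ∑ i, ∑ j, x i j :=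
    Finset.sum_nonneg fun i _ => Finset.sum_nonneg fun j _ => hpos i j
  rcases eq_or_lt_of_le hTnn with hT | hT
  · have hx0 : ∀ i j, x i j = 0 := by
      intro i j
      have h1 : ∀ i ∈ (univ : Finset (Fin n)), ∑ j, x i j = 0 :=
        (Finset.sum_eq_zero_iff_of_nonneg
          (fun i _ => Finset.sum_nonneg fun j _ => hpos i j)).mp hT.symm
      exact (Finset.sum_eq_zero_iff_of_nonneg (fun j _ => hpos i j)).mp
        (h1 i (mem_univ i)) j (mem_univ j)
    refine ⟨fun _ _ => 0, ⟨fun i j => Or.inl rfl, by simp, by simp, by simp⟩, ?_⟩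
    simp [hx0]
  · obtain ⟨w, hw0, hw1, hwM⟩ :=
      exists_eq_sum_perm_of_mem_doublyStochastic (birkMat_mem hK x hpos hrow hcol hcap hT)
    have hxe : ∀ i j, x i j
        = ∑ σ : Equiv.Perm (Fin n ⊕ Fin m),
            w σ * (if σ (.inl i) = .inr j then (1:ℝ) else 0) := by
      intro i j
      have h := congrFun (congrFun hwM (.inl i)) (.inr j)
      rw [Matrix.sum_apply] at h
      simp only [Matrix.smul_apply, smul_eq_mul, permMatrix_apply'] at h
      exact h.symm
    set v : Equiv.Perm (Fin n ⊕ Fin m) → ℝ :=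
      fun σ => ∑ i, ∑ j, c i j * (if σ (.inl i) = .inr j then (1:ℝ) else 0) with hv
    have hV : ∑ σ, w σ * v σ = ∑ i, ∑ j, c i j * x i j := by
      simp only [hv, Finset.mul_sum]
      rw [Finset.sum_comm]
      congr 1; ext i
      rw [Finset.sum_comm]
      congr 1; ext j
      rw [hxe i j, Finset.mul_sum]
      congr 1; ext σ
      ring
    have hex : ∃ σ, w σ ≠ 0 ∧ ∑ i, ∑ j, c i j * x i j ≤ v σ := by
      by_contra h
      push_neg at h
      obtain ⟨σ₀, hσ₀⟩ : ∃ σ, w σ ≠ 0 := by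
        by_contra h'; push_neg at h'; simp [h'] at hw1
      have hlt : ∑ σ, w σ * v σ < ∑ σ, w σ * (∑ i, ∑ j, c i j * x i j) := by
        apply Finset.sum_lt_sum
        · intro σ _
          rcases eq_or_ne (w σ) 0 with h0 | h0
          · simp [h0]
          · exact mul_le_mul_of_nonneg_left (h σ h0).le (hw0 σ)
        · exact ⟨σ₀, mem_univ σ₀,
            mul_lt_mul_of_pos_left (h σ₀ hσ₀) (lt_of_le_of_ne (hw0 σ₀) (Ne.symm hσ₀))⟩
      rw [hV, ← Finset.sum_mul, hw1, one_mul] at hlt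
      exact lt_irrefl _ hlt
    obtain ⟨σ, hσne, hσv⟩ := hex
    have hsupp : ∀ d : Fin m, ¬ (d : ℕ) < K → ∀ i : Fin n, σ (.inr d) ≠ .inl i := by
      intro d hd i
      have h0 : birkMat K x (.inr d) (.inl i) = 0 := by simp [birkMat, hd]
      have h := congrFun (congrFun hwM (.inr d)) (.inl i)
      rw [Matrix.sum_apply, h0] at h
      have hterm := (Finset.sum_eq_zero_iff_of_nonneg fun σ' _ => by
        simp only [Matrix.smul_apply, smul_eq_mul, permMatrix_apply']
        exact mul_nonneg (hw0 σ') (by split <;> norm_num)).mp h σ (mem_univ σ)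
      simp only [Matrix.smul_apply, smul_eq_mul, permMatrix_apply'] at hterm
      intro hcontra
      rw [if_pos hcontra, mul_one] at hterm
      exact hσne hterm
    set x₀ : Fin n → Fin m → ℝ :=
      fun i j => if σ (.inl i) = .inr j then (1:ℝ) else 0 with hx₀
    have hrow₀ : ∀ i, ∑ j, x₀ i j = 1 - (if (σ (.inl i)).isLeft then (1:ℝ) else 0) := by
      intro i
      rcases h : σ (.inl i) with i' | j0 <;> simp [hx₀, h]
    refine ⟨x₀, ⟨?_, ?_, ?_, ?_⟩, ?_⟩
    · intro i j
      simp only [hx₀]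
      split <;> simp
    · intro i
      rw [hrow₀ i]
      split <;> norm_num
    · intro j
      simp only [hx₀]
      simp_rw [Equiv.apply_eq_iff_eq_symm_apply]
      rcases h : σ.symm (.inr j) with i0 | d <;> simp [h]
    · have step2 : ∑ g : Fin n ⊕ Fin m,
          (if (σ g).isLeft then (1:ℝ) else 0) = n := by
        rw [Equiv.sum_comp σ (fun g => if g.isLeft then (1:ℝ) else 0)]
        rw [Fintype.sum_sum_type]
        simp
      rw [Fintype.sum_sum_type] at step2
      have step4 : ∑ d : Fin m, (if (σ (.inr d)).isLeft then (1:ℝ) else 0) ≤ K := by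
        have hb : ∀ d : Fin m, (if (σ (.inr d)).isLeft then (1:ℝ) else 0)
            ≤ (if (d : ℕ) < K then (1:ℝ) else 0) := by
          intro d
          by_cases hd : (d : ℕ) < K
          · simp only [hd, if_true]; split <;> norm_num
          · rcases h : σ (.inr d) with i | j
            · exact absurd h (fun h => hsupp d hd i h)
            · simp [h, hd]
          
        calc ∑ d : Fin m, (if (σ (.inr d)).isLeft then (1:ℝ) else 0)
            ≤ ∑ d : Fin m, (if (d : ℕ) < K then (1:ℝ) else 0) :=
              Finset.sum_le_sum fun d _ => hb d
          _ = K := by rw [sum_ite_lt' hK 1, mul_one]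
      have hsum₀ : ∑ i, ∑ j, x₀ i j
          = ∑ d : Fin m, (if (σ (.inr d)).isLeft then (1:ℝ) else 0) := by
        simp_rw [hrow₀]
        rw [Finset.sum_sub_distrib]
        simp only [Finset.sum_const, card_univ, Fintype.card_fin, nsmul_eq_mul, mul_one]
        linarith [step2]
      rw [hsum₀]
      exact step4
    · exact hσv

/-- If `b ≥ 0`, `b ≠ 0` and `(y, z)` is an optimal solution of the linear
program, then `z > 0`, the matrix `x = y / z` lies in the fractional matching polytope,
it maximizes the payoff over the polytope, and its payoff equals the supremum of the
payoff over integral matchings. -/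
theorem stmt_2 {n m : ℕ} (K : ℕ) (hK : K ≤ m) (ρ : Fin n → Fin m → ℝ)
    (b : Fin n → ℝ) (hb : ∀ i, 0 ≤ b i) (hb0 : b ≠ 0)
    (y : Fin n → Fin m → ℝ) (z : ℝ)
    (hfeas : LPFeasible K ρ y z)
    (hopt : ∀ y' z', LPFeasible K ρ y' z' →
      ∑ i, ∑ j, b i * y' i j * Real.exp (ρ i j) ≤ ∑ i, ∑ j, b i * y i j * Real.exp (ρ i j)) :
    0 < z ∧
    FracMatching K (fun i j => y i j / z) ∧
    (∀ x', FracMatching K x' →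
      ∑ i, b i * mnlCTR ρ x' i ≤ ∑ i, b i * mnlCTR ρ (fun i j => y i j / z) i) ∧
    (∑ i, b i * mnlCTR ρ (fun i j => y i j / z) i =
      sSup {w : ℝ | ∃ x, IntMatching K x ∧ w = ∑ i, b i * mnlCTR ρ x i}) := by
  obtain ⟨hy0, hyrow, hycol, hycap, hyeq⟩ := hfeas
  -- `n ≠ 0`
  obtain ⟨i₀⟩ : Nonempty (Fin n) := by
    rcases Nat.eq_zero_or_pos n with rfl | h
    · exact absurd (funext fun i => i.elim0) hb0
    · exact ⟨⟨0, h⟩⟩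
  have hznn : 0 ≤ z := le_trans (Finset.sum_nonneg fun j _ => hy0 i₀ j) (hyrow i₀)
  -- `z > 0`
  have hz : 0 < z := by
    rcases eq_or_lt_of_le hznn with hz0 | h
    · exfalso
      have hy00 : ∀ i j, y i j = 0 := by
        intro i j
        have hs : ∑ j, y i j = 0 :=
          le_antisymm (by rw [hz0]; exact hyrow i) (Finset.sum_nonneg fun j _ => hy0 i j)
        exact (Finset.sum_eq_zero_iff_of_nonneg fun j _ => hy0 i j).mp hs j (mem_univ j)
      rw [← hz0] at hyeq
      simp [hy00] at hyeq
    · exact h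
  -- a convenient formula for the objective
  have hform : ∀ x' : Fin n → Fin m → ℝ,
      ∑ i, b i * mnlCTR ρ x' i
        = (∑ i, ∑ j, b i * x' i j * Real.exp (ρ i j))
            / (1 + ∑ i, ∑ j, x' i j * Real.exp (ρ i j)) := by
    intro x'
    rw [Finset.sum_div]
    apply Finset.sum_congr rfl
    intro i _
    simp only [mnlCTR]
    rw [Finset.sum_div, Finset.sum_div, Finset.mul_sum]
    apply Finset.sum_congr rfl
    intro j _
    ring
  have hSnn : ∀ x' : Fin n → Fin m → ℝ, (∀ i j, 0 ≤ x' i j) →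
      0 ≤ ∑ i, ∑ j, x' i j * Real.exp (ρ i j) :=
    fun x' h => Finset.sum_nonneg fun i _ => Finset.sum_nonneg fun j _ =>
      mul_nonneg (h i j) (Real.exp_pos _).le
  -- the LP objective value of `(y, z)`
  have hyS : ∑ i, ∑ j, y i j * Real.exp (ρ i j) = 1 - z := by linarith
  -- FracMatching of x = y/z
  have hfrac : FracMatching K (fun i j => y i j / z) := by
    refine ⟨fun i j => div_nonneg (hy0 i j) hz.le, ?_, ?_, ?_⟩
    · intro i
      rw [← Finset.sum_div]
      exact (div_le_one hz).mpr (hyrow i)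
    · intro j
      rw [← Finset.sum_div]
      exact (div_le_one hz).mpr (hycol j)
    · simp_rw [← Finset.sum_div]
      rw [div_le_iff₀ hz]
      exact hycap
  -- value identity
  have hxS : ∑ i, ∑ j, (y i j / z) * Real.exp (ρ i j) = (1 - z) / z := by
    simp_rw [div_mul_eq_mul_div, ← Finset.sum_div]
    rw [hyS]
  have hxA : ∑ i, ∑ j, b i * (y i j / z) * Real.exp (ρ i j)
      = (∑ i, ∑ j, b i * y i j * Real.exp (ρ i j)) / z := by
    have h : ∀ i j, b i * (y i j / z) * Real.exp (ρ i j)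
        = (b i * y i j * Real.exp (ρ i j)) / z := fun i j => by ring
    simp_rw [h, ← Finset.sum_div]
  have hVal : ∑ i, b i * mnlCTR ρ (fun i j => y i j / z) i
      = ∑ i, ∑ j, b i * y i j * Real.exp (ρ i j) := by
    rw [hform]
    rw [hxS, hxA]
    have hzne : z ≠ 0 := ne_of_gt hz
    field_simp
    ring
  -- Part 3: optimality over the fractional polytope
  have hpart3 : ∀ x', FracMatching K x' →
      ∑ i, b i * mnlCTR ρ x' i ≤ ∑ i, b i * mnlCTR ρ (fun i j => y i j / z) i := by
    intro x' hx'
    obtain ⟨hx0, hxrow, hxcol, hxcap⟩ := hx'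
    set S' : ℝ := ∑ i, ∑ j, x' i j * Real.exp (ρ i j) with hS'def
    have hS'nn : 0 ≤ S' := hSnn x' hx0
    have hD : (0:ℝ) < 1 + S' := by linarith
    have hDne : (1 + S') ≠ 0 := ne_of_gt hD
    set y' : Fin n → Fin m → ℝ := fun i j => x' i j / (1 + S') with hy'def
    have hfeas' : LPFeasible K ρ y' (1 / (1 + S')) := by
      refine ⟨fun i j => div_nonneg (hx0 i j) hD.le, ?_, ?_, ?_, ?_⟩
      · intro i
        simp only [hy'def]
        rw [← Finset.sum_div]
        exact (div_le_div_iff_of_pos_right hD).mpr (hxrow i)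
      · intro j
        simp only [hy'def]
        rw [← Finset.sum_div]
        exact (div_le_div_iff_of_pos_right hD).mpr (hxcol j)
      · simp only [hy'def]
        simp_rw [← Finset.sum_div]
        rw [mul_one_div]
        exact (div_le_div_iff_of_pos_right hD).mpr hxcap
      · simp only [hy'def]
        simp_rw [div_mul_eq_mul_div, ← Finset.sum_div]
        rw [← hS'def]
        field_simp
        ring
    have hineq := hopt y' (1 / (1 + S')) hfeas'
    have hlhs : ∑ i, b i * mnlCTR ρ x' i
        = ∑ i, ∑ j, b i * y' i j * Real.exp (ρ i j) := by
      rw [hform x', ← hS'def, Finset.sum_div]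
      apply Finset.sum_congr rfl
      intro i _
      rw [Finset.sum_div]
      apply Finset.sum_congr rfl
      intro j _
      simp only [hy'def]
      ring
    rw [hlhs, hVal]
    exact hineq
  refine ⟨hz, hfrac, hpart3, ?_⟩
  -- Part 4: sSup over integral matchings
  set V : ℝ := ∑ i, b i * mnlCTR ρ (fun i j => y i j / z) i with hVdef
  have int_to_frac : ∀ x0 : Fin n → Fin m → ℝ, IntMatching K x0 → FracMatching K x0 := by
    rintro x0 ⟨h01, h2, h3, h4⟩
    exact ⟨fun i j => by rcases h01 i j with h | h <;> simp [h], h2, h3, h4⟩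
  have hub : ∀ w ∈ {w : ℝ | ∃ x, IntMatching K x ∧ w = ∑ i, b i * mnlCTR ρ x i}, w ≤ V := by
    rintro w ⟨x0, hx0, rfl⟩
    exact hpart3 x0 (int_to_frac x0 hx0)
  -- construct an integral matching achieving V
  obtain ⟨x₀, hx₀int, hx₀ge⟩ := exists_int_matching_ge K hK
    (fun i j => (b i - V) * Real.exp (ρ i j)) (fun i j => y i j / z) hfrac
  have hx₀frac := int_to_frac x₀ hx₀int
  have hS₀nn : 0 ≤ ∑ i, ∑ j, x₀ i j * Real.exp (ρ i j) := hSnn x₀ hx₀frac.1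
  have hSxnn : 0 ≤ ∑ i, ∑ j, (y i j / z) * Real.exp (ρ i j) := hSnn _ hfrac.1
  -- expand the c-sums
  have hexp : ∀ x' : Fin n → Fin m → ℝ,
      ∑ i, ∑ j, (b i - V) * Real.exp (ρ i j) * x' i j
        = (∑ i, ∑ j, b i * x' i j * Real.exp (ρ i j))
          - V * (∑ i, ∑ j, x' i j * Real.exp (ρ i j)) := by
    intro x'
    rw [Finset.mul_sum, ← Finset.sum_sub_distrib]
    apply Finset.sum_congr rfl
    intro i _
    rw [Finset.mul_sum, ← Finset.sum_sub_distrib]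
    apply Finset.sum_congr rfl
    intro j _
    ring
  rw [hexp, hexp] at hx₀ge
  -- value of LHS: equals V
  have hAx : ∑ i, ∑ j, b i * (y i j / z) * Real.exp (ρ i j)
      = V * (1 + ∑ i, ∑ j, (y i j / z) * Real.exp (ρ i j)) := by
    have h := hform (fun i j => y i j / z)
    rw [← hVdef] at h
    have hD : (0:ℝ) < 1 + ∑ i, ∑ j, (y i j / z) * Real.exp (ρ i j) := by linarith
    rw [eq_div_iff (ne_of_gt hD)] at h
    linarith [h]
  have hlhsV : ∑ i, ∑ j, b i * (y i j / z) * Real.exp (ρ i j)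
      - V * (∑ i, ∑ j, (y i j / z) * Real.exp (ρ i j)) = V := by
    rw [hAx]; ring
  rw [hlhsV] at hx₀ge
  -- hence V ≤ value at x₀
  have hD₀ : (0:ℝ) < 1 + ∑ i, ∑ j, x₀ i j * Real.exp (ρ i j) := by linarith
  have hV₀ : V ≤ ∑ i, b i * mnlCTR ρ x₀ i := by
    rw [hform]
    rw [le_div_iff₀ hD₀]
    linarith [hx₀ge]
  have hVeq : V = ∑ i, b i * mnlCTR ρ x₀ i :=
    le_antisymm hV₀ (hpart3 x₀ hx₀frac)
  have hmem : V ∈ {w : ℝ | ∃ x, IntMatching K x ∧ w = ∑ i, b i * mnlCTR ρ x i} :=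
    ⟨x₀, hx₀int, hVeq⟩
  exact le_antisymm
    (le_csSup ⟨V, hub⟩ hmem)
    (csSup_le ⟨V, hmem⟩ hub)
end

section
/- For every allocation x ∈ X and every n' ∈ {0, 1, ..., n}: Σ_{i=1}^{n'} π_i(x) ≤ Σ_{i=1}^{n'} π^restricted_i(x) ≤ 1, and moreover π^restricted_i(x) ≥ 0 for every i ∈ [n]. -/
open Finset

/-- Cascade-model click-through rate of advertiser `i` under allocation `x`, with the
allocated positions ranked in decreasing order of matched value (ties broken by
advertiser index); since values are sorted this discounts by all earlier advertisers. -/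
noncomputable def piCascade {n m : ℕ} (p : Fin n → Fin m → ℝ)
    (x : Fin n → Fin m → ℝ) (i : Fin n) : ℝ :=
  (∑ j, x i j * p i j) * ∏ i' ∈ Finset.Iio i, (1 - ∑ j', x i' j' * p i' j')

/-- Matched click probability of advertiser `i`. -/
noncomputable def qv {n m : ℕ} (p : Fin n → Fin m → ℝ)
    (x : Fin n → Fin m → ℝ) (i : Fin n) : ℝ :=
  ∑ j, x i j * p i j

lemma piCascade_eq {n m : ℕ} (p x : Fin n → Fin m → ℝ) (i : Fin n) :
    piCascade p x i = qv p x i * ∏ i' ∈ Finset.Iio i, (1 - qv p x i') := rfl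

/-- For every allocation `x` and every `n' ∈ {0, …, n}`,
`Σ_{i=1}^{n'} π_i(x) ≤ Σ_{i=1}^{n'} π^restricted_i(x) ≤ 1`, and
`π^restricted_i(x) ≥ 0` for every `i`.  Here `πres` is the (unique) function
satisfying the defining recursion of the restricted click-through rates. -/
theorem stmt_5 {n m : ℕ} (p : Fin n → Fin m → ℝ)
    (hp : ∀ i j, p i j ∈ Set.Icc (0 : ℝ) 1)
    (x : Fin n → Fin m → ℝ)
    (hbin : ∀ i j, x i j = 0 ∨ x i j = 1)
    (hrow : ∀ i, ∑ j, x i j ≤ 1) (hcol : ∀ j, ∑ i, x i j ≤ 1)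
    (πres : Fin n → ℝ)
    (hπres : ∀ i, πres i =
      ∑ j, x i j * min (p i j) (1 - ∑ i' ∈ Finset.Iio i, πres i')) :
    (∀ n' : ℕ, n' ≤ n →
      (∑ i ∈ univ.filter (fun i : Fin n => (i : ℕ) < n'), piCascade p x i) ≤
        (∑ i ∈ univ.filter (fun i : Fin n => (i : ℕ) < n'), πres i) ∧
      (∑ i ∈ univ.filter (fun i : Fin n => (i : ℕ) < n'), πres i) ≤ 1) ∧
    (∀ i : Fin n, 0 ≤ πres i) := by
  have hxnn : ∀ i j, 0 ≤ x i j := fun i j => by rcases hbin i j with h | h <;> simp [h]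
  have hq0 : ∀ i, 0 ≤ qv p x i := fun i =>
    Finset.sum_nonneg fun j _ => mul_nonneg (hxnn i j) (hp i j).1
  have hq1 : ∀ i, qv p x i ≤ 1 := fun i =>
    le_trans (Finset.sum_le_sum fun j _ => by nlinarith [(hp i j).2, hxnn i j]) (hrow i)
  have hmin : ∀ (i : Fin n) (c : ℝ), 0 ≤ c →
      ∑ j, x i j * min (p i j) c = min (qv p x i) c := by
    intro i c hc
    by_cases hz : ∀ j, x i j = 0
    · simp [qv, hz, min_eq_left hc]
    · push_neg at hz
      obtain ⟨j0, hj0⟩ := hz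
      have hx1 : x i j0 = 1 := (hbin i j0).resolve_left hj0
      have hz' : ∀ j, j ≠ j0 → x i j = 0 := by
        intro j hj
        have hsum : ∑ j' ∈ univ.erase j0, x i j' ≤ 0 := by
          have h := hrow i
          rw [← Finset.add_sum_erase _ _ (mem_univ j0), hx1] at h
          linarith
        have hz := (Finset.sum_eq_zero_iff_of_nonneg (fun j' _ => hxnn i j')).1
          (le_antisymm hsum (Finset.sum_nonneg fun j' _ => hxnn i j'))
        exact hz j (Finset.mem_erase.2 ⟨hj, mem_univ j⟩)
      rw [Finset.sum_eq_single j0 (fun j _ hj => by rw [hz' j hj]; ring) (by simp),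
        hx1, one_mul]
      have hqe : qv p x i = p i j0 := by
        rw [qv, Finset.sum_eq_single j0 (fun j _ hj => by rw [hz' j hj]; ring) (by simp),
          hx1, one_mul]
      rw [hqe]
  have key : ∀ k, k ≤ n →
      (∑ i ∈ univ.filter (fun i : Fin n => (i : ℕ) < k), piCascade p x i)
        = 1 - ∏ i ∈ univ.filter (fun i : Fin n => (i : ℕ) < k), (1 - qv p x i) ∧
      1 - (∏ i ∈ univ.filter (fun i : Fin n => (i : ℕ) < k), (1 - qv p x i))
        ≤ ∑ i ∈ univ.filter (fun i : Fin n => (i : ℕ) < k), πres i ∧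
      (∑ i ∈ univ.filter (fun i : Fin n => (i : ℕ) < k), πres i) ≤ 1 ∧
      ∀ i : Fin n, (i : ℕ) < k → 0 ≤ πres i := by
    intro k
    induction k with
    | zero =>
      intro _
      simp
    | succ k ih =>
      intro hk1
      have hk : k < n := hk1
      obtain ⟨hC, hL, hU, hNN⟩ := ih (le_of_lt hk)
      set ik : Fin n := ⟨k, hk⟩ with hik
      have hio : Finset.Iio ik = univ.filter (fun i : Fin n => (i : ℕ) < k) := by
        ext i'; simp [Fin.lt_def, hik]
      have hins : (univ.filter fun i : Fin n => (i : ℕ) < k + 1)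
          = insert ik (univ.filter fun i : Fin n => (i : ℕ) < k) := by
        ext i
        simp only [mem_filter, mem_insert, mem_univ, true_and, Fin.ext_iff, hik]
        omega
      have hnotmem : ik ∉ univ.filter (fun i : Fin n => (i : ℕ) < k) := by
        simp [hik]
      set S := ∑ i ∈ univ.filter (fun i : Fin n => (i : ℕ) < k), πres i with hS
      set P := ∏ i ∈ univ.filter (fun i : Fin n => (i : ℕ) < k), (1 - qv p x i) with hP
      have hP0 : 0 ≤ P := Finset.prod_nonneg fun i _ => by linarith [hq1 i]
      have hP1 : P ≤ 1 :=
        Finset.prod_le_one (fun i _ => by linarith [hq1 i]) (fun i _ => by linarith [hq0 i])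
      have hres : πres ik = min (qv p x ik) (1 - S) := by
        rw [hπres ik, hio, ← hS]
        exact hmin ik (1 - S) (by linarith)
      have hresnn : 0 ≤ πres ik := by
        rw [hres]; exact le_min (hq0 ik) (by linarith)
      have hresle : πres ik ≤ 1 - S := by rw [hres]; exact min_le_right _ _
      refine ⟨?_, ?_, ?_, ?_⟩
      · rw [hins, Finset.sum_insert hnotmem, Finset.prod_insert hnotmem, hC,
          piCascade_eq, hio, ← hP]
        ring
      · rw [hins, Finset.sum_insert hnotmem, Finset.prod_insert hnotmem, ← hS, ← hP]
        rcases min_cases (qv p x ik) (1 - S) with ⟨he, hle⟩ | ⟨he, hle⟩ <;> rw [hres, he]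
        · nlinarith [hq0 ik]
        · nlinarith [hq1 ik]
      · rw [hins, Finset.sum_insert hnotmem, ← hS]
        linarith
      · intro i hi
        rcases Nat.lt_or_ge (i : ℕ) k with h | h
        · exact hNN i h
        · have : i = ik := by
            apply Fin.ext; simp [hik]; omega
          rw [this]; exact hresnn
  refine ⟨fun n' hn' => ?_, fun i => (key n le_rfl).2.2.2 i i.isLt⟩
  obtain ⟨hC, hL, hU, _⟩ := key n' hn'
  exact ⟨by rw [hC]; exact hL, hU⟩
end

section
/- For every allocation x ∈ X, Welfare^restricted(x) ≥ Welfare(x). -/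
open Finset

lemma sumIio_eq_range {n : ℕ} (i : Fin n) (f : ℕ → ℝ) :
    ∑ i' ∈ Finset.Iio i, f ↑i' = ∑ k ∈ Finset.range ↑i, f k := by
  rw [← Nat.Iio_eq_range, ← Fin.map_valEmbedding_Iio, Finset.sum_map]
  rfl

lemma prodIio_eq_range {n : ℕ} (i : Fin n) (f : ℕ → ℝ) :
    ∏ i' ∈ Finset.Iio i, f ↑i' = ∏ k ∈ Finset.range ↑i, f k := by
  rw [← Nat.Iio_eq_range, ← Fin.map_valEmbedding_Iio, Finset.prod_map]
  rfl

lemma abel_aux (v d : ℕ → ℝ) (hv : ∀ k, v (k+1) ≤ v k)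
    (hd : ∀ k, 0 ≤ ∑ i ∈ Finset.range k, d i) (N : ℕ) :
    v N * (∑ i ∈ Finset.range N, d i) ≤ ∑ i ∈ Finset.range N, v i * d i := by
  induction N with
  | zero => simp
  | succ k ih =>
    rw [Finset.sum_range_succ, Finset.sum_range_succ]
    have h1 := hd (k+1)
    rw [Finset.sum_range_succ] at h1
    have h2 := hv k
    nlinarith [ih]

/-- For every allocation `x`, `Welfare^restricted(x) ≥ Welfare(x)`,
where `πres` is the (unique) function satisfying the defining recursion of the
restricted click-through rates. -/
theorem stmt_6 {n m : ℕ} (p : Fin n → Fin m → ℝ)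
    (hp : ∀ i j, p i j ∈ Set.Icc (0 : ℝ) 1)
    (v : Fin n → ℝ) (hv0 : ∀ i, 0 ≤ v i) (hvmono : ∀ i i' : Fin n, i ≤ i' → v i' ≤ v i)
    (x : Fin n → Fin m → ℝ)
    (hbin : ∀ i j, x i j = 0 ∨ x i j = 1)
    (hrow : ∀ i, ∑ j, x i j ≤ 1) (hcol : ∀ j, ∑ i, x i j ≤ 1)
    (πres : Fin n → ℝ)
    (hπres : ∀ i, πres i =
      ∑ j, x i j * min (p i j) (1 - ∑ i' ∈ Finset.Iio i, πres i')) :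
    ∑ i, v i * piCascade p x i ≤ ∑ i, v i * πres i := by
  classical
  have hx0 : ∀ i j, 0 ≤ x i j := by
    intro i j; rcases hbin i j with h | h <;> simp [h]
  set q' : ℕ → ℝ := fun k => if h : k < n then ∑ j, x ⟨k, h⟩ j * p ⟨k, h⟩ j else 0 with hq'def
  set r' : ℕ → ℝ := fun k => if h : k < n then πres ⟨k, h⟩ else 0 with hr'def
  set c' : ℕ → ℝ := fun k => if h : k < n then piCascade p x ⟨k, h⟩ else 0 with hc'def
  set v' : ℕ → ℝ := fun k => if h : k < n then v ⟨k, h⟩ else 0 with hv'def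
  have hq0 : ∀ k, 0 ≤ q' k := by
    intro k
    simp only [hq'def]
    split
    · exact Finset.sum_nonneg fun j _ => mul_nonneg (hx0 _ _) (hp _ _).1
    · exact le_refl 0
  have hq1 : ∀ k, q' k ≤ 1 := by
    intro k
    simp only [hq'def]
    split
    · next h =>
      calc ∑ j, x ⟨k, h⟩ j * p ⟨k, h⟩ j ≤ ∑ j, x ⟨k, h⟩ j := by
            refine Finset.sum_le_sum fun j _ => ?_
            nlinarith [hx0 ⟨k, h⟩ j, (hp ⟨k, h⟩ j).2]
        _ ≤ 1 := hrow _
    · exact zero_le_one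
  -- conversion of Iio sums/products
  have hIio : ∀ i : Fin n, ∑ i' ∈ Finset.Iio i, πres i' = ∑ k ∈ Finset.range ↑i, r' k := by
    intro i
    rw [← sumIio_eq_range i r']
    refine Finset.sum_congr rfl fun i' _ => ?_
    simp [hr'def, i'.isLt]
  have hPio : ∀ i : Fin n, ∏ i' ∈ Finset.Iio i, (1 - ∑ j', x i' j' * p i' j')
      = ∏ k ∈ Finset.range ↑i, (1 - q' k) := by
    intro i
    rw [← prodIio_eq_range i (fun k => 1 - q' k)]
    refine Finset.prod_congr rfl fun i' _ => ?_
    simp [hq'def, i'.isLt]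
  -- the main invariant
  have inv : ∀ k, 0 ≤ ∑ j ∈ Finset.range k, r' j ∧ (∑ j ∈ Finset.range k, r' j) ≤ 1 ∧
      1 - ∏ j ∈ Finset.range k, (1 - q' j) ≤ ∑ j ∈ Finset.range k, r' j := by
    intro k
    induction k with
    | zero => simp
    | succ k ih =>
      obtain ⟨h0, h1, h2⟩ := ih
      by_cases h : k < n
      · set i : Fin n := ⟨k, h⟩ with hi
        set T := ∑ j ∈ Finset.range k, r' j with hT
        have hS : ∑ i' ∈ Finset.Iio i, πres i' = T := hIio i
        have hrk : r' k = ∑ j, x i j * min (p i j) (1 - T) := by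
          simp only [hr'def, dif_pos h, hπres i, hS, ← hi]
        have hr0 : 0 ≤ r' k := by
          rw [hrk]
          exact Finset.sum_nonneg fun j _ => mul_nonneg (hx0 _ _)
            (le_min (hp i j).1 (by linarith))
        have hrle : r' k ≤ 1 - T := by
          rw [hrk]
          calc ∑ j, x i j * min (p i j) (1 - T) ≤ ∑ j, x i j * (1 - T) := by
                refine Finset.sum_le_sum fun j _ => ?_
                exact mul_le_mul_of_nonneg_left (min_le_right _ _) (hx0 _ _)
            _ = (∑ j, x i j) * (1 - T) := by rw [Finset.sum_mul]
            _ ≤ 1 * (1 - T) := mul_le_mul_of_nonneg_right (hrow i) (by linarith)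
            _ = 1 - T := one_mul _
        have hrge : q' k * (1 - T) ≤ r' k := by
          rw [hrk]
          simp only [hq'def, dif_pos h, ← hi]
          rw [Finset.sum_mul]
          refine Finset.sum_le_sum fun j _ => ?_
          rw [mul_assoc]
          refine mul_le_mul_of_nonneg_left (le_min ?_ ?_) (hx0 _ _)
          · nlinarith [(hp i j).1, (hp i j).2]
          · nlinarith [(hp i j).1, (hp i j).2]
        rw [Finset.sum_range_succ, Finset.prod_range_succ]
        refine ⟨by linarith, by linarith, ?_⟩
        have hq1k := hq1 k
        have hq0k := hq0 k
        nlinarith [h2]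
      · have hr0 : r' k = 0 := by simp [hr'def, h]
        have hq0' : q' k = 0 := by simp [hq'def, h]
        rw [Finset.sum_range_succ, Finset.prod_range_succ, hr0, hq0']
        refine ⟨by linarith, by linarith, by linarith⟩
  -- cascade partial sums
  have cascade : ∀ k, ∑ j ∈ Finset.range k, c' j = 1 - ∏ j ∈ Finset.range k, (1 - q' j) := by
    intro k
    induction k with
    | zero => simp
    | succ k ih =>
      have hck : c' k = q' k * ∏ j ∈ Finset.range k, (1 - q' j) := by
        by_cases h : k < n
        · simp only [hc'def, hq'def, dif_pos h, piCascade]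
          rw [hPio ⟨k, h⟩]
        · simp [hc'def, hq'def, h]
      rw [Finset.sum_range_succ, Finset.prod_range_succ, ih, hck]
      ring
  have hd : ∀ k, 0 ≤ ∑ j ∈ Finset.range k, (r' j - c' j) := by
    intro k
    rw [Finset.sum_sub_distrib, cascade k]
    linarith [(inv k).2.2]
  have hv'mono : ∀ k, v' (k+1) ≤ v' k := by
    intro k
    by_cases h1 : k + 1 < n
    · have h : k < n := Nat.lt_of_succ_lt h1
      simp only [hv'def, dif_pos h1, dif_pos h]
      exact hvmono ⟨k, h⟩ ⟨k+1, h1⟩ (by simp [Fin.le_def])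
    · by_cases h : k < n
      · simp only [hv'def, dif_neg h1, dif_pos h]
        exact hv0 _
      · simp [hv'def, h1, h]
  have key := abel_aux v' (fun j => r' j - c' j) hv'mono hd n
  have hvn : v' n = 0 := by simp [hv'def]
  rw [hvn, zero_mul] at key
  have expand : ∑ j ∈ Finset.range n, v' j * (r' j - c' j)
      = ∑ j ∈ Finset.range n, v' j * r' j - ∑ j ∈ Finset.range n, v' j * c' j := by
    rw [← Finset.sum_sub_distrib]
    exact Finset.sum_congr rfl fun j _ => by ring
  rw [expand] at key
  have hL : ∑ i, v i * piCascade p x i = ∑ j ∈ Finset.range n, v' j * c' j := by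
    rw [← Fin.sum_univ_eq_sum_range (fun k => v' k * c' k) n]
    refine Finset.sum_congr rfl fun i _ => ?_
    simp [hv'def, hc'def, i.isLt]
  have hR : ∑ i, v i * πres i = ∑ j ∈ Finset.range n, v' j * r' j := by
    rw [← Fin.sum_univ_eq_sum_range (fun k => v' k * r' k) n]
    refine Finset.sum_congr rfl fun i _ => ?_
    simp [hv'def, hr'def, i.isLt]
  rw [hL, hR]
  linarith
end

section
/- For every allocation x ∈ X, Welfare^restricted(x)/4 ≤ Welfare(x). -/
open Finset

lemma fin_Iio_sum {n : ℕ} (f : Fin n → ℝ) (F : ℕ → ℝ)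
    (hF : ∀ i : Fin n, F i.1 = f i) (i : Fin n) :
    ∑ i' ∈ Finset.Iio i, f i' = ∑ k ∈ Finset.range i.1, F k := by
  rw [← Nat.Iio_eq_range, ← Fin.map_valEmbedding_Iio, Finset.sum_map]
  exact Finset.sum_congr rfl fun i' _ => (hF i').symm

lemma fin_Iio_prod {n : ℕ} (f : Fin n → ℝ) (F : ℕ → ℝ)
    (hF : ∀ i : Fin n, F i.1 = f i) (i : Fin n) :
    ∏ i' ∈ Finset.Iio i, f i' = ∏ k ∈ Finset.range i.1, F k := by
  rw [← Nat.Iio_eq_range, ← Fin.map_valEmbedding_Iio, Finset.prod_map]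
  exact Finset.prod_congr rfl fun i' _ => (hF i').symm

lemma abel_le (n : ℕ) (v a b : ℕ → ℝ)
    (hv0 : ∀ i < n, 0 ≤ v i) (hvmono : ∀ i j, i ≤ j → j < n → v j ≤ v i)
    (hpre : ∀ k ≤ n, ∑ i ∈ range k, a i ≤ ∑ i ∈ range k, b i) :
    ∑ i ∈ range n, v i * a i ≤ ∑ i ∈ range n, v i * b i := by
  induction n generalizing v with
  | zero => simp
  | succ n ih =>
    have key : ∀ c : ℕ → ℝ, ∑ i ∈ range (n+1), v i * c i
        = ∑ i ∈ range n, (v i - v n) * c i + v n * ∑ i ∈ range (n+1), c i := by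
      intro c
      have e1 : ∑ i ∈ range (n+1), v i * c i
          = ∑ i ∈ range (n+1), ((v i - v n) * c i + v n * c i) :=
        Finset.sum_congr rfl fun i _ => by ring
      rw [e1, Finset.sum_add_distrib,
        sum_range_succ (f := fun i => (v i - v n) * c i), sub_self, zero_mul,
        add_zero, ← Finset.mul_sum]
    rw [key a, key b]
    have h1 : ∑ i ∈ range n, (v i - v n) * a i ≤ ∑ i ∈ range n, (v i - v n) * b i := by
      apply ih
      · intro i hi
        have := hvmono i n (le_of_lt hi) (lt_add_one n); linarith
      · intro i j hij hj
        have := hvmono i j hij (hj.trans (lt_add_one n)); linarith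
      · intro k hk; exact hpre k (hk.trans (Nat.le_succ n))
    have h2 : v n * ∑ i ∈ range (n+1), a i ≤ v n * ∑ i ∈ range (n+1), b i :=
      mul_le_mul_of_nonneg_left (hpre (n+1) le_rfl) (hv0 n (lt_add_one n))
    linarith

lemma prod_one_sub_nonneg (Q : ℕ → ℝ) (hQ : ∀ i, Q i ≤ 1) (k : ℕ) :
    0 ≤ ∏ i ∈ range k, (1 - Q i) :=
  Finset.prod_nonneg fun i _ => by linarith [hQ i]

lemma sum_cascade_eq (Q : ℕ → ℝ) (k : ℕ) :
    ∑ i ∈ range k, Q i * ∏ i' ∈ range i, (1 - Q i')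
      = 1 - ∏ i ∈ range k, (1 - Q i) := by
  induction k with
  | zero => simp
  | succ k ih => rw [sum_range_succ, prod_range_succ, ih]; ring

lemma prod_bound (Q : ℕ → ℝ) (hQ0 : ∀ i, 0 ≤ Q i) (hQ1 : ∀ i, Q i ≤ 1) (k : ℕ) :
    ∏ i ∈ range k, (1 - Q i) ≤ 1 - min (∑ i ∈ range k, Q i) 1 / 4 := by
  induction k with
  | zero => simp
  | succ k ih =>
    set P := ∏ i ∈ range k, (1 - Q i) with hP
    set t := ∑ i ∈ range k, Q i with ht
    have hPnn : 0 ≤ P := prod_one_sub_nonneg Q hQ1 k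
    have htnn : 0 ≤ t := Finset.sum_nonneg fun i _ => hQ0 i
    have hq0 := hQ0 k
    have hq1 := hQ1 k
    rw [prod_range_succ, sum_range_succ, ← hP, ← ht]
    rcases le_or_gt (t + Q k) 1 with h | h
    · rw [min_eq_left h, min_eq_left (by linarith : t ≤ 1)] at *
      nlinarith [ih, mul_le_mul_of_nonneg_right ih (by linarith : (0:ℝ) ≤ 1 - Q k)]
    · rw [min_eq_right (le_of_lt h)]
      rcases le_or_gt 1 t with h2 | h2
      · rw [min_eq_right h2] at ih
        nlinarith
      · rw [min_eq_left (le_of_lt h2)] at ih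
        have h3 : P * (1 - Q k) ≤ (1 - t / 4) * (1 - Q k) :=
          mul_le_mul_of_nonneg_right ih (by linarith)
        nlinarith

/-- For every allocation `x`, `Welfare^restricted(x)/4 ≤ Welfare(x)`,
where `πres` is the (unique) function satisfying the defining recursion of the
restricted click-through rates. -/
theorem stmt_7 {n m : ℕ} (p : Fin n → Fin m → ℝ)
    (hp : ∀ i j, p i j ∈ Set.Icc (0 : ℝ) 1)
    (v : Fin n → ℝ) (hv0 : ∀ i, 0 ≤ v i) (hvmono : ∀ i i' : Fin n, i ≤ i' → v i' ≤ v i)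
    (x : Fin n → Fin m → ℝ)
    (hbin : ∀ i j, x i j = 0 ∨ x i j = 1)
    (hrow : ∀ i, ∑ j, x i j ≤ 1) (hcol : ∀ j, ∑ i, x i j ≤ 1)
    (πres : Fin n → ℝ)
    (hπres : ∀ i, πres i =
      ∑ j, x i j * min (p i j) (1 - ∑ i' ∈ Finset.Iio i, πres i')) :
    (∑ i, v i * πres i) / 4 ≤ ∑ i, v i * piCascade p x i := by
  have hx0 : ∀ i j, 0 ≤ x i j := fun i j => by rcases hbin i j with h | h <;> simp [h]
  have hx1 : ∀ i j, x i j ≤ 1 := fun i j => by rcases hbin i j with h | h <;> simp [h]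
  set Q : ℕ → ℝ := fun k => if h : k < n then ∑ j, x ⟨k, h⟩ j * p ⟨k, h⟩ j else 0 with hQdef
  set R : ℕ → ℝ := fun k => if h : k < n then πres ⟨k, h⟩ else 0 with hRdef
  set V : ℕ → ℝ := fun k => if h : k < n then v ⟨k, h⟩ else 0 with hVdef
  have hQf : ∀ i : Fin n, Q i.1 = ∑ j, x i j * p i j := fun i => by
    simp [hQdef, i.2]
  have hRf : ∀ i : Fin n, R i.1 = πres i := fun i => by simp [hRdef, i.2]
  have hQ0 : ∀ k, 0 ≤ Q k := by
    intro k
    simp only [hQdef]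
    split
    · exact Finset.sum_nonneg fun j _ => mul_nonneg (hx0 _ j) (hp _ j).1
    · exact le_rfl
  have hQ1 : ∀ k, Q k ≤ 1 := by
    intro k
    simp only [hQdef]
    split
    · rename_i h
      calc ∑ j, x ⟨k, h⟩ j * p ⟨k, h⟩ j ≤ ∑ j, x ⟨k, h⟩ j :=
            Finset.sum_le_sum fun j _ => by
              nlinarith [hx0 ⟨k, h⟩ j, (hp ⟨k, h⟩ j).2, (hp ⟨k, h⟩ j).1]
        _ ≤ 1 := hrow _
    · norm_num
  -- recursion in ℕ form
  have hrec : ∀ (k : ℕ) (h : k < n),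
      R k = ∑ j, x ⟨k, h⟩ j * min (p ⟨k, h⟩ j) (1 - ∑ i ∈ range k, R i) := by
    intro k h
    have := hπres ⟨k, h⟩
    rw [fin_Iio_sum πres R hRf ⟨k, h⟩] at this
    exact (hRf ⟨k, h⟩).trans this
  -- main invariant
  have hinv : ∀ k, (∑ i ∈ range k, R i ≤ 1) ∧
      (∑ i ∈ range k, R i ≤ ∑ i ∈ range k, Q i) := by
    intro k
    induction k with
    | zero => simp
    | succ k ih =>
      obtain ⟨hS1, hST⟩ := ih
      rcases lt_or_ge k n with h | h
      · have hR1 : R k ≤ 1 - ∑ i ∈ range k, R i := by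
          rw [hrec k h]
          calc ∑ j, x ⟨k, h⟩ j * min (p ⟨k, h⟩ j) (1 - ∑ i ∈ range k, R i)
              ≤ ∑ j, x ⟨k, h⟩ j * (1 - ∑ i ∈ range k, R i) :=
                Finset.sum_le_sum fun j _ =>
                  mul_le_mul_of_nonneg_left (min_le_right _ _) (hx0 _ j)
            _ = (∑ j, x ⟨k, h⟩ j) * (1 - ∑ i ∈ range k, R i) := by
                rw [Finset.sum_mul]
            _ ≤ 1 * (1 - ∑ i ∈ range k, R i) :=
                mul_le_mul_of_nonneg_right (hrow _) (by linarith)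
            _ = 1 - ∑ i ∈ range k, R i := one_mul _
        have hRQ : R k ≤ Q k := by
          rw [hrec k h, hQf ⟨k, h⟩]
          exact Finset.sum_le_sum fun j _ =>
            mul_le_mul_of_nonneg_left (min_le_left _ _) (hx0 _ j)
        constructor
        · rw [sum_range_succ]; linarith
        · rw [sum_range_succ, sum_range_succ]; linarith
      · have hRk : R k = 0 := by simp [hRdef, Nat.not_lt.mpr h]
        have hQk : 0 ≤ Q k := hQ0 k
        constructor
        · rw [sum_range_succ, hRk]; linarith
        · rw [sum_range_succ, sum_range_succ, hRk]; linarith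
  -- prefix comparison
  have hpre : ∀ k, k ≤ n → ∑ i ∈ range k, R i
      ≤ ∑ i ∈ range k, 4 * (Q i * ∏ i' ∈ range i, (1 - Q i')) := by
    intro k _
    have h1 : ∑ i ∈ range k, 4 * (Q i * ∏ i' ∈ range i, (1 - Q i'))
        = 4 * (1 - ∏ i ∈ range k, (1 - Q i)) := by
      rw [← Finset.mul_sum, sum_cascade_eq]
    rw [h1]
    have h2 := prod_bound Q hQ0 hQ1 k
    obtain ⟨hS1, hST⟩ := hinv k
    have h3 : ∑ i ∈ range k, R i ≤ min (∑ i ∈ range k, Q i) 1 :=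
      le_min hST hS1
    linarith [min_le_left (∑ i ∈ range k, Q i) (1:ℝ)]
  -- Abel
  have habel := abel_le n V R (fun k => 4 * (Q k * ∏ i' ∈ range k, (1 - Q i')))
    (fun i hi => by simp [hVdef, hi]; exact hv0 _)
    (fun i j hij hj => by
      have hi : i < n := lt_of_le_of_lt hij hj
      simp only [hVdef, dif_pos hi, dif_pos hj]
      exact hvmono ⟨i, hi⟩ ⟨j, hj⟩ hij)
    hpre
  -- convert Fin sums
  have e1 : ∑ i, v i * πres i = ∑ k ∈ range n, V k * R k := by
    rw [← Fin.sum_univ_eq_sum_range (fun k => V k * R k) n]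
    exact Finset.sum_congr rfl fun i _ => by rw [hRf i]; simp [hVdef, i.2]
  have e2 : ∑ i, v i * piCascade p x i
      = ∑ k ∈ range n, V k * (Q k * ∏ i' ∈ range k, (1 - Q i')) := by
    rw [← Fin.sum_univ_eq_sum_range (fun k => V k * (Q k * ∏ i' ∈ range k, (1 - Q i'))) n]
    refine Finset.sum_congr rfl fun i _ => ?_
    rw [piCascade, fin_Iio_prod (fun i' => 1 - ∑ j', x i' j' * p i' j')
      (fun k => 1 - Q k)
      (fun i' => by show (1:ℝ) - Q i'.1 = _; rw [hQf i']) i, ← hQf i]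
    simp [hVdef, i.2]
  rw [e1, e2, div_le_iff₀ (by norm_num : (0:ℝ) < 4)]
  calc ∑ k ∈ range n, V k * R k
      ≤ ∑ k ∈ range n, V k * (4 * (Q k * ∏ i' ∈ range k, (1 - Q i'))) := habel
    _ = (∑ k ∈ range n, V k * (Q k * ∏ i' ∈ range k, (1 - Q i'))) * 4 := by
        rw [Finset.sum_mul]; exact Finset.sum_congr rfl fun k _ => by ring
end

section
/- For every allocation x ∈ X, there exists at most one discounted advertiser; that is, there is at most one index k ∈ [n] with π^restricted_k(x) > 0 and π^restricted_k(x) < Σ_{j∈[m]} x_kj p_kj. -/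
open Finset

/-- every allocation has at most one discounted advertiser, i.e. at most
one `k` with `π^restricted_k(x) > 0` and `π^restricted_k(x) < Σ_j x_kj p_kj`.
Here `πres` is the (unique) function satisfying the defining recursion of the
restricted click-through rates. -/
theorem stmt_8 {n m : ℕ} (p : Fin n → Fin m → ℝ)
    (hp : ∀ i j, p i j ∈ Set.Icc (0 : ℝ) 1)
    (x : Fin n → Fin m → ℝ)
    (hbin : ∀ i j, x i j = 0 ∨ x i j = 1)
    (hrow : ∀ i, ∑ j, x i j ≤ 1) (hcol : ∀ j, ∑ i, x i j ≤ 1)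
    (πres : Fin n → ℝ)
    (hπres : ∀ i, πres i =
      ∑ j, x i j * min (p i j) (1 - ∑ i' ∈ Finset.Iio i, πres i')) :
    ∀ k k' : Fin n,
      (0 < πres k ∧ πres k < ∑ j, x k j * p k j) →
      (0 < πres k' ∧ πres k' < ∑ j, x k' j * p k' j) →
      k = k' := by
  have hxnn : ∀ i j, 0 ≤ x i j := by
    intro i j; rcases hbin i j with h | h <;> simp [h]
  -- key: if the remaining budget is nonnegative, πres i is between 0 and it
  have key : ∀ i : Fin n, 0 ≤ 1 - ∑ i' ∈ Finset.Iio i, πres i' →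
      0 ≤ πres i ∧ πres i ≤ 1 - ∑ i' ∈ Finset.Iio i, πres i' := by
    intro i hR
    set R := 1 - ∑ i' ∈ Finset.Iio i, πres i' with hRdef
    constructor
    · rw [hπres i]
      apply Finset.sum_nonneg
      intro j _
      exact mul_nonneg (hxnn i j) (le_min (hp i j).1 hR)
    · rw [hπres i]
      calc ∑ j, x i j * min (p i j) R ≤ ∑ j, x i j * R := by
            apply Finset.sum_le_sum
            intro j _
            exact mul_le_mul_of_nonneg_left (min_le_right _ _) (hxnn i j)
        _ = (∑ j, x i j) * R := by rw [Finset.sum_mul]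
        _ ≤ 1 * R := mul_le_mul_of_nonneg_right (hrow i) hR
        _ = R := one_mul R
  have Iio_eq : ∀ i : Fin n,
      Finset.Iio i = Finset.univ.filter (fun j : Fin n => (j : ℕ) < (i : ℕ)) := by
    intro i; ext j
    simp only [Finset.mem_Iio, Finset.mem_filter, Finset.mem_univ, true_and, Fin.lt_def]
  -- partial sums are at most 1
  have sums : ∀ t : ℕ,
      ∑ i ∈ Finset.univ.filter (fun i : Fin n => (i : ℕ) < t), πres i ≤ 1 := by
    intro t
    induction t with
    | zero => simp
    | succ t ih =>
      by_cases ht : t < n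
      · set i₀ : Fin n := ⟨t, ht⟩ with hi₀
        have hset : Finset.univ.filter (fun i : Fin n => (i : ℕ) < t + 1)
            = insert i₀ (Finset.univ.filter (fun i : Fin n => (i : ℕ) < t)) := by
          ext j
          simp only [Finset.mem_filter, Finset.mem_insert, Finset.mem_univ, true_and,
            Fin.ext_iff, hi₀]
          omega
        rw [hset, Finset.sum_insert (by simp [hi₀])]
        have hR : 0 ≤ 1 - ∑ i' ∈ Finset.Iio i₀, πres i' := by
          rw [Iio_eq i₀]
          have : ((i₀ : Fin n) : ℕ) = t := rfl
          rw [this]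
          linarith
        have hk := (key i₀ hR).2
        rw [Iio_eq i₀] at hk
        have : ((i₀ : Fin n) : ℕ) = t := rfl
        rw [this] at hk
        linarith
      · have hset : Finset.univ.filter (fun i : Fin n => (i : ℕ) < t + 1)
            = Finset.univ.filter (fun i : Fin n => (i : ℕ) < t) := by
          ext j
          simp only [Finset.mem_filter, Finset.mem_univ, true_and]
          have := j.isLt
          omega
        rw [hset]; exact ih
  have hRnn : ∀ i : Fin n, 0 ≤ 1 - ∑ i' ∈ Finset.Iio i, πres i' := by
    intro i
    rw [Iio_eq i]
    linarith [sums (i : ℕ)]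
  have nonneg : ∀ i : Fin n, 0 ≤ πres i := fun i => (key i (hRnn i)).1
  -- main: an earlier discounted advertiser kills positivity of later ones
  have main : ∀ a b : Fin n, a < b →
      (0 < πres a ∧ πres a < ∑ j, x a j * p a j) → ¬ (0 < πres b) := by
    intro a b hab ⟨ha1, ha2⟩ hb
    set R := 1 - ∑ i' ∈ Finset.Iio a, πres i' with hRdef
    have hRa : 0 ≤ R := hRnn a
    have hle : πres a ≤ R := (key a (hRnn a)).2
    -- show πres a = R
    have hex : ∃ j₀, 0 < x a j₀ * (p a j₀ - min (p a j₀) R) := by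
      by_contra hcon
      push_neg at hcon
      have : ∑ j, x a j * (p a j - min (p a j) R) ≤ 0 :=
        Finset.sum_nonpos (fun j _ => hcon j)
      have heq : ∑ j, x a j * (p a j - min (p a j) R)
          = (∑ j, x a j * p a j) - ∑ j, x a j * min (p a j) R := by
        rw [← Finset.sum_sub_distrib]
        apply Finset.sum_congr rfl
        intro j _; ring
      rw [heq] at this
      rw [hπres a] at ha2
      linarith
    obtain ⟨j₀, hj₀⟩ := hex
    have hxj : x a j₀ = 1 := by
      rcases hbin a j₀ with h | h
      · rw [h] at hj₀; simp at hj₀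
      · exact h
    have hmin : min (p a j₀) R = R := by
      rcases min_cases (p a j₀) R with ⟨h1, h2⟩ | ⟨h1, h2⟩
      · rw [hxj, one_mul] at hj₀; rw [h1] at hj₀; linarith
      · exact h1
    have hge : R ≤ πres a := by
      rw [hπres a, ← hRdef]
      have := Finset.single_le_sum
        (f := fun j => x a j * min (p a j) R)
        (fun j _ => mul_nonneg (hxnn a j) (le_min (hp a j).1 hRa))
        (Finset.mem_univ j₀)
      simpa [hxj, hmin] using this
    have heq : πres a = R := le_antisymm hle hge
    -- sum up to b is at least 1
    have hsub : insert a (Finset.Iio a) ⊆ Finset.Iio b := by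
      rw [Finset.Iio_insert]
      intro j hj
      simp only [Finset.mem_Iic] at hj
      simp only [Finset.mem_Iio]
      exact lt_of_le_of_lt hj hab
    have hsum : ∑ i' ∈ insert a (Finset.Iio a), πres i' ≤ ∑ i' ∈ Finset.Iio b, πres i' :=
      Finset.sum_le_sum_of_subset_of_nonneg hsub (fun i _ _ => nonneg i)
    rw [Finset.sum_insert (by simp)] at hsum
    have hb2 : πres b ≤ 1 - ∑ i' ∈ Finset.Iio b, πres i' := (key b (hRnn b)).2
    have : πres a + (1 - R) ≤ ∑ i' ∈ Finset.Iio b, πres i' := by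
      rw [hRdef]; ring_nf; ring_nf at hsum; linarith
    rw [heq] at this
    linarith
  intro k k' hk hk'
  rcases lt_trichotomy k k' with h | h | h
  · exact absurd hk'.1 (main k k' h hk)
  · exact h
  · exact absurd hk.1 (main k' k h hk')
end

section
/- For every allocation x ∈ X, the allocation x' = ZS(x) satisfies: (1) π^restricted_i(x) = π^restricted_i(x') for every i ∈ [n], and hence Welfare^restricted(x) = Welfare^restricted(x'); and (2) for every advertiser i that is not a discounted advertiser of x, π^restricted_i(x') = π^budgeted_i(x'). -/
open Finset

/-- properties of the allocation `x' = ZS(x)`, which keeps the rows of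
`x` with positive restricted click-through rate and zeroes out all other rows.
`πres` and `πres'` are the (unique) functions satisfying the defining recursion of the
restricted click-through rates for `x` and `x'` respectively, and
`π^budgeted_i(x') = Σ_j x'_ij p_ij`. -/
theorem stmt_10 {n m : ℕ} (p : Fin n → Fin m → ℝ)
    (hp : ∀ i j, p i j ∈ Set.Icc (0 : ℝ) 1)
    (v : Fin n → ℝ) (hv0 : ∀ i, 0 ≤ v i) (hvmono : ∀ i i' : Fin n, i ≤ i' → v i' ≤ v i)
    (x : Fin n → Fin m → ℝ)
    (hbin : ∀ i j, x i j = 0 ∨ x i j = 1)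
    (hrow : ∀ i, ∑ j, x i j ≤ 1) (hcol : ∀ j, ∑ i, x i j ≤ 1)
    (πres : Fin n → ℝ)
    (hπres : ∀ i, πres i =
      ∑ j, x i j * min (p i j) (1 - ∑ i' ∈ Finset.Iio i, πres i'))
    (x' : Fin n → Fin m → ℝ)
    (hx' : ∀ i j, x' i j = if 0 < πres i then x i j else 0)
    (πres' : Fin n → ℝ)
    (hπres' : ∀ i, πres' i =
      ∑ j, x' i j * min (p i j) (1 - ∑ i' ∈ Finset.Iio i, πres' i')) :
    (∀ i, πres i = πres' i) ∧
    (∑ i, v i * πres i = ∑ i, v i * πres' i) ∧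
    (∀ i : Fin n, ¬(0 < πres i ∧ πres i < ∑ j, x i j * p i j) →
      πres' i = ∑ j, x' i j * p i j) := by
  have hx0 : ∀ i j, (0:ℝ) ≤ x i j := by
    intro i j; rcases hbin i j with h | h <;> simp [h]
  -- key bounds, by strong induction on the index
  have key : ∀ k : ℕ, ∀ i : Fin n, (i : ℕ) = k →
      ((∑ i' ∈ Finset.Iio i, πres i') ≤ 1 ∧ 0 ≤ πres i ∧
       (∑ i' ∈ Finset.Iio i, πres i') + πres i ≤ 1) := by
    intro k
    induction k using Nat.strong_induction_on with
    | _ k ih =>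
      intro i hik
      have hS : (∑ i' ∈ Finset.Iio i, πres i') ≤ 1 := by
        rcases Nat.eq_zero_or_pos k with hk | hk
        · have hempty : Finset.Iio i = ∅ := by
            ext a
            simp only [Finset.mem_Iio, Finset.notMem_empty, iff_false, Fin.lt_def]
            omega
          simp [hempty]
        · have hkn : k - 1 < n := by have := i.isLt; omega
          set j : Fin n := ⟨k - 1, hkn⟩ with hj
          have hIio : Finset.Iio i = insert j (Finset.Iio j) := by
            ext a
            simp only [Finset.mem_Iio, Finset.mem_insert, Fin.lt_def, Fin.ext_iff, hj]
            omega
          have hjk := ih (k - 1) (by omega) j rfl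
          rw [hIio, Finset.sum_insert (by simp)]
          linarith [hjk.2.2]
      have hnn : 0 ≤ πres i := by
        rw [hπres i]
        apply Finset.sum_nonneg
        intro j _
        have hmin : (0:ℝ) ≤ min (p i j) (1 - ∑ i' ∈ Finset.Iio i, πres i') :=
          le_min (hp i j).1 (by linarith)
        exact mul_nonneg (hx0 i j) hmin
      refine ⟨hS, hnn, ?_⟩
      have hle : πres i ≤ 1 - ∑ i' ∈ Finset.Iio i, πres i' := by
        rw [hπres i]
        calc ∑ j, x i j * min (p i j) (1 - ∑ i' ∈ Finset.Iio i, πres i')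
            ≤ ∑ j, x i j * (1 - ∑ i' ∈ Finset.Iio i, πres i') := by
              apply Finset.sum_le_sum
              intro j _
              exact mul_le_mul_of_nonneg_left (min_le_right _ _) (hx0 i j)
          _ = (∑ j, x i j) * (1 - ∑ i' ∈ Finset.Iio i, πres i') := by
              rw [Finset.sum_mul]
          _ ≤ 1 * (1 - ∑ i' ∈ Finset.Iio i, πres i') :=
              mul_le_mul_of_nonneg_right (hrow i) (by linarith)
          _ = _ := one_mul _
      linarith
  have hnn : ∀ i, 0 ≤ πres i := fun i => (key i.val i rfl).2.1
  -- main equality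
  have heq : ∀ k : ℕ, ∀ i : Fin n, (i : ℕ) = k → πres i = πres' i := by
    intro k
    induction k using Nat.strong_induction_on with
    | _ k ih =>
      intro i hik
      have hsum : ∑ i' ∈ Finset.Iio i, πres' i' = ∑ i' ∈ Finset.Iio i, πres i' := by
        apply Finset.sum_congr rfl
        intro a ha
        have halt : (a : ℕ) < k := by
          have := Finset.mem_Iio.mp ha
          simp only [Fin.lt_def] at this
          omega
        exact (ih a.val halt a rfl).symm
      by_cases h : 0 < πres i
      · rw [hπres' i, hsum]
        simp only [hx', if_pos h]
        exact hπres i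
      · have h0 : πres i = 0 := le_antisymm (not_lt.1 h) (hnn i)
        rw [hπres' i]
        simp [hx', h, h0]
  have heq' : ∀ i, πres i = πres' i := fun i => heq i.val i rfl
  refine ⟨heq', Finset.sum_congr rfl (fun i _ => by rw [heq' i]), ?_⟩
  intro i hnd
  by_cases h : 0 < πres i
  · push_neg at hnd
    have hge : ∑ j, x i j * p i j ≤ πres i := hnd h
    have hle : πres i ≤ ∑ j, x i j * p i j := by
      rw [hπres i]
      apply Finset.sum_le_sum
      intro j _
      exact mul_le_mul_of_nonneg_left (min_le_left _ _) (hx0 i j)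
    have : πres' i = πres i := (heq' i).symm
    rw [this]
    have hxx : ∑ j, x' i j * p i j = ∑ j, x i j * p i j := by
      apply Finset.sum_congr rfl
      intro j _
      rw [hx', if_pos h]
    rw [hxx]
    linarith
  · have h0 : πres i = 0 := le_antisymm (not_lt.1 h) (hnn i)
    have : πres' i = 0 := by rw [← heq' i, h0]
    rw [this]
    symm
    apply Finset.sum_eq_zero
    intro j _
    rw [hx', if_neg h, zero_mul]
end

section
/- Fix k ∈ [n] and α ∈ [0,1]. For every allocation x ∈ X satisfying Σ_{i=1}^{n} π^{budgeted-k,α}_i(x) ≤ 1, the partial sums satisfy Σ_{i=1}^{ℓ} π^restricted_i(x) ≥ Σ_{i=1}^{ℓ} π^{budgeted-k,α}_i(x) for every ℓ ∈ {0, 1, ..., n}. -/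
open Finset

/-- fix `k ∈ [n]` and `α ∈ [0,1]` and let
`π^{budgeted-k,α}_i(x) = Σ_j x_ij p^{k,α}_ij` where `p^{k,α}` discounts row `k` of `p`
by `α`.  For every allocation `x` with `Σ_{i=1}^{n} π^{budgeted-k,α}_i(x) ≤ 1`, the
partial sums of the restricted click-through rates dominate those of
`π^{budgeted-k,α}`.  Here `πres` is the (unique) function satisfying the defining
recursion of the restricted click-through rates. -/
theorem stmt_11 {n m : ℕ} (p : Fin n → Fin m → ℝ)
    (hp : ∀ i j, p i j ∈ Set.Icc (0 : ℝ) 1)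
    (k : Fin n) (α : ℝ) (hα : α ∈ Set.Icc (0 : ℝ) 1)
    (x : Fin n → Fin m → ℝ)
    (hbin : ∀ i j, x i j = 0 ∨ x i j = 1)
    (hrow : ∀ i, ∑ j, x i j ≤ 1) (hcol : ∀ j, ∑ i, x i j ≤ 1)
    (πres : Fin n → ℝ)
    (hπres : ∀ i, πres i =
      ∑ j, x i j * min (p i j) (1 - ∑ i' ∈ Finset.Iio i, πres i'))
    (hbudget : ∑ i, ∑ j, x i j * (if i = k then α * p i j else p i j) ≤ 1) :
    ∀ ℓ : ℕ, ℓ ≤ n →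
      ∑ i ∈ univ.filter (fun i : Fin n => (i : ℕ) < ℓ),
          ∑ j, x i j * (if i = k then α * p i j else p i j) ≤
        ∑ i ∈ univ.filter (fun i : Fin n => (i : ℕ) < ℓ), πres i := by
  have hxnn : ∀ i j, (0:ℝ) ≤ x i j := fun i j => by rcases hbin i j with h|h <;> simp [h]
  set f : Fin n → ℝ := fun i => ∑ j, x i j * (if i = k then α * p i j else p i j) with hf
  have hqnn : ∀ i j, (0:ℝ) ≤ (if i = k then α * p i j else p i j) := by
    intro i j
    split
    · exact mul_nonneg hα.1 (hp i j).1
    · exact (hp i j).1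
  have hqle : ∀ i j, (if i = k then α * p i j else p i j) ≤ p i j := by
    intro i j
    split
    · nlinarith [(hp i j).1, hα.1, hα.2]
    · exact le_rfl
  have hfnn : ∀ i, 0 ≤ f i := by
    intro i
    exact Finset.sum_nonneg fun j _ => mul_nonneg (hxnn i j) (hqnn i j)
  intro ℓ
  induction ℓ with
  | zero => intro _; simp
  | succ ℓ ih =>
    intro hℓ
    have hℓn : ℓ < n := hℓ
    have ih' := ih (Nat.le_of_succ_le hℓ)
    set i0 : Fin n := ⟨ℓ, hℓn⟩ with hi0
    have hnotmem : i0 ∉ univ.filter (fun i : Fin n => (i : ℕ) < ℓ) := by simp [hi0]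
    have hsplit : (univ.filter (fun i : Fin n => (i : ℕ) < ℓ + 1))
        = insert i0 (univ.filter (fun i : Fin n => (i : ℕ) < ℓ)) := by
      ext i
      simp only [mem_filter, mem_univ, true_and, mem_insert, Fin.ext_iff, hi0]
      omega
    have hIio : Finset.Iio i0 = univ.filter (fun i : Fin n => (i : ℕ) < ℓ) := by
      ext i
      simp [Fin.lt_def, hi0]
    rw [hsplit, Finset.sum_insert hnotmem, Finset.sum_insert hnotmem]
    set S := ∑ i ∈ univ.filter (fun i : Fin n => (i : ℕ) < ℓ), πres i with hS
    set B := ∑ i ∈ univ.filter (fun i : Fin n => (i : ℕ) < ℓ), f i with hB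
    show f i0 + B ≤ πres i0 + S
    have hres : πres i0 = ∑ j, x i0 j * min (p i0 j) (1 - S) := by
      rw [hπres i0, hIio, hS]
    -- row structure
    by_cases hz : ∀ j, x i0 j = 0
    · have h1 : f i0 = 0 := by simp [hf, hz]
      have h2 : πres i0 = 0 := by simp [hres, hz]
      rw [h1, h2]; linarith
    · push_neg at hz
      obtain ⟨j0, hj0⟩ := hz
      have hj1 : x i0 j0 = 1 := (hbin i0 j0).resolve_left hj0
      have hzero : ∀ j, j ≠ j0 → x i0 j = 0 := by
        intro j hj
        by_contra hc
        have hj1' : x i0 j = 1 := (hbin i0 j).resolve_left hc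
        have hsub : ({j0, j} : Finset (Fin m)) ⊆ univ := subset_univ _
        have hle : ∑ j' ∈ ({j0, j} : Finset (Fin m)), x i0 j' ≤ ∑ j', x i0 j' :=
          Finset.sum_le_sum_of_subset_of_nonneg hsub (fun j' _ _ => hxnn i0 j')
        rw [Finset.sum_pair (Ne.symm hj)] at hle
        have := hrow i0
        rw [hj1, hj1'] at hle
        linarith
      have hfval : f i0 = (if i0 = k then α * p i0 j0 else p i0 j0) := by
        show (∑ j, x i0 j * (if i0 = k then α * p i0 j else p i0 j)) = _
        rw [Finset.sum_eq_single j0]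
        · rw [hj1, one_mul]
        · intro j _ hj; rw [hzero j hj, zero_mul]
        · intro h; exact absurd (mem_univ j0) h
      have hrval : πres i0 = min (p i0 j0) (1 - S) := by
        rw [hres, Finset.sum_eq_single j0]
        · rw [hj1, one_mul]
        · intro j _ hj; rw [hzero j hj, zero_mul]
        · intro h; exact absurd (mem_univ j0) h
      rcases le_or_gt (p i0 j0) (1 - S) with hc | hc
      · have : πres i0 = p i0 j0 := by rw [hrval, min_eq_left hc]
        have hfle : f i0 ≤ p i0 j0 := by rw [hfval]; exact hqle i0 j0
        linarith
      · have hrv : πres i0 = 1 - S := by rw [hrval, min_eq_right hc.le]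
        -- B + f i0 ≤ total budget ≤ 1 = S + πres i0
        have hsub : insert i0 (univ.filter (fun i : Fin n => (i : ℕ) < ℓ)) ⊆ univ :=
          subset_univ _
        have htot : B + f i0 ≤ ∑ i, f i := by
          have hle : ∑ i ∈ insert i0 (univ.filter (fun i : Fin n => (i : ℕ) < ℓ)), f i
              ≤ ∑ i, f i :=
            Finset.sum_le_sum_of_subset_of_nonneg hsub (fun i _ _ => hfnn i)
          rw [Finset.sum_insert hnotmem] at hle
          linarith
        have : ∑ i, f i ≤ 1 := hbudget
        linarith
end

section
/- Fix k ∈ [n] and α ∈ [0,1]. For every allocation x ∈ X satisfying Σ_{i=1}^{n} π^{budgeted-k,α}_i(x) ≤ 1, one has Welfare^{budgeted-k,α}(x) ≤ Welfare^restricted(x). -/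
open Finset

private lemma abel_nonneg {n : ℕ} (v : Fin n → ℝ)
    (hvmono : ∀ i i' : Fin n, i ≤ i' → v i' ≤ v i) (hv0 : ∀ i, 0 ≤ v i)
    (a : Fin n → ℝ)
    (hD : ∀ t : ℕ, 0 ≤ ∑ i ∈ univ.filter (fun i : Fin n => i.val < t), a i) :
    0 ≤ ∑ i, v i * a i := by
  set V : ℕ → ℝ := fun t => if h : t < n then v ⟨t, h⟩ else 0 with hV
  have hVmono : ∀ t, V (t + 1) ≤ V t := by
    intro t
    by_cases h1 : t + 1 < n
    · have h0 : t < n := by omega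
      simp only [hV, dif_pos h1, dif_pos h0]
      exact hvmono ⟨t, h0⟩ ⟨t + 1, h1⟩ (by simp [Fin.le_def])
    · by_cases h0 : t < n
      · simp only [hV, dif_neg h1, dif_pos h0]
        exact hv0 _
      · simp [hV, dif_neg h1, dif_neg h0]
  have hVn : V n = 0 := by simp [hV]
  have hvi : ∀ i : Fin n, v i = ∑ t ∈ Finset.Ico i.val n, (V t - V (t + 1)) := by
    intro i
    rw [Finset.sum_Ico_eq_sum_range]
    rw [show (∑ j ∈ Finset.range (n - i.val), (V (i.val + j) - V (i.val + j + 1))) =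
        ∑ j ∈ Finset.range (n - i.val),
          ((fun j => V (i.val + j)) j - (fun j => V (i.val + j)) (j + 1)) from rfl,
      Finset.sum_range_sub' (fun j => V (i.val + j)) (n - i.val)]
    have h1 : i.val + (n - i.val) = n := by omega
    simp only [Nat.add_zero, h1, hVn, sub_zero]
    simp [hV, i.isLt]
  have hmain : ∑ t ∈ Finset.range n, (V t - V (t + 1)) *
      ∑ i ∈ univ.filter (fun i : Fin n => i.val < t + 1), a i = ∑ i, v i * a i := by
    calc ∑ t ∈ Finset.range n, (V t - V (t + 1)) *
          ∑ i ∈ univ.filter (fun i : Fin n => i.val < t + 1), a i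
        = ∑ t ∈ Finset.range n, ∑ i : Fin n,
            (if i.val < t + 1 then (V t - V (t + 1)) * a i else 0) := by
          refine Finset.sum_congr rfl fun t _ => ?_
          rw [Finset.mul_sum, Finset.sum_filter]
      _ = ∑ i : Fin n, ∑ t ∈ Finset.range n,
            (if i.val < t + 1 then (V t - V (t + 1)) * a i else 0) := Finset.sum_comm
      _ = ∑ i, v i * a i := by
          refine Finset.sum_congr rfl fun i _ => ?_
          rw [← Finset.sum_filter]
          have hset : (Finset.range n).filter (fun t => i.val < t + 1) =
              Finset.Ico i.val n := by
            ext t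
            simp only [Finset.mem_filter, Finset.mem_range, Finset.mem_Ico]
            omega
          rw [hset, ← Finset.sum_mul, ← hvi i]
  rw [← hmain]
  apply Finset.sum_nonneg
  intro t _
  exact mul_nonneg (by linarith [hVmono t]) (hD (t + 1))

/-- fix `k ∈ [n]` and `α ∈ [0,1]` and let
`π^{budgeted-k,α}_i(x) = Σ_j x_ij p^{k,α}_ij` where `p^{k,α}` discounts row `k` of `p`
by `α`.  For every allocation `x` with `Σ_{i=1}^{n} π^{budgeted-k,α}_i(x) ≤ 1`, one has
`Welfare^{budgeted-k,α}(x) ≤ Welfare^restricted(x)`.  Here `πres` is the (unique)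
function satisfying the defining recursion of the restricted click-through rates. -/
theorem stmt_12 {n m : ℕ} (p : Fin n → Fin m → ℝ)
    (hp : ∀ i j, p i j ∈ Set.Icc (0 : ℝ) 1)
    (v : Fin n → ℝ) (hv0 : ∀ i, 0 ≤ v i) (hvmono : ∀ i i' : Fin n, i ≤ i' → v i' ≤ v i)
    (k : Fin n) (α : ℝ) (hα : α ∈ Set.Icc (0 : ℝ) 1)
    (x : Fin n → Fin m → ℝ)
    (hbin : ∀ i j, x i j = 0 ∨ x i j = 1)
    (hrow : ∀ i, ∑ j, x i j ≤ 1) (hcol : ∀ j, ∑ i, x i j ≤ 1)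
    (πres : Fin n → ℝ)
    (hπres : ∀ i, πres i =
      ∑ j, x i j * min (p i j) (1 - ∑ i' ∈ Finset.Iio i, πres i'))
    (hbudget : ∑ i, ∑ j, x i j * (if i = k then α * p i j else p i j) ≤ 1) :
    ∑ i, v i * ∑ j, x i j * (if i = k then α * p i j else p i j) ≤
      ∑ i, v i * πres i := by
  let πb : Fin n → ℝ := fun i => ∑ j, x i j * (if i = k then α * p i j else p i j)
  have hπbdef : ∀ i, πb i = ∑ j, x i j * (if i = k then α * p i j else p i j) :=
    fun i => rfl
  have hbudget' : ∑ i, πb i ≤ 1 := hbudget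
  have hx01 : ∀ i j, 0 ≤ x i j ∧ x i j ≤ 1 := by
    intro i j; rcases hbin i j with h | h <;> simp [h]
  have hq0 : ∀ i j, 0 ≤ (if i = k then α * p i j else p i j) := by
    intro i j
    split
    · exact mul_nonneg hα.1 (hp i j).1
    · exact (hp i j).1
  have hqle : ∀ i j, (if i = k then α * p i j else p i j) ≤ p i j := by
    intro i j
    split
    · nlinarith [(hp i j).1, hα.2]
    · exact le_rfl
  have hπb0 : ∀ i, 0 ≤ πb i :=
    fun i => Finset.sum_nonneg fun j _ => mul_nonneg (hx01 i j).1 (hq0 i j)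
  have hDb_le : ∀ t : ℕ, ∑ i ∈ univ.filter (fun i : Fin n => i.val < t), πb i ≤ 1 := by
    intro t
    calc ∑ i ∈ univ.filter (fun i : Fin n => i.val < t), πb i
        ≤ ∑ i, πb i := Finset.sum_le_sum_of_subset_of_nonneg
          (Finset.filter_subset _ _) (fun i _ _ => hπb0 i)
      _ ≤ 1 := hbudget'
  have key : ∀ t : ℕ,
      (∑ i ∈ univ.filter (fun i : Fin n => i.val < t), πb i ≤
        ∑ i ∈ univ.filter (fun i : Fin n => i.val < t), πres i) ∧
      ∑ i ∈ univ.filter (fun i : Fin n => i.val < t), πres i ≤ 1 := by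
    intro t
    induction t with
    | zero => simp
    | succ t ih =>
      by_cases h : t < n
      · set it : Fin n := ⟨t, h⟩ with hit
        have hins : univ.filter (fun i : Fin n => i.val < t + 1) =
            insert it (univ.filter (fun i : Fin n => i.val < t)) := by
          ext i
          simp only [Finset.mem_filter, Finset.mem_univ, true_and, Finset.mem_insert,
            hit, Fin.ext_iff]
          omega
        have hnot : it ∉ univ.filter (fun i : Fin n => i.val < t) := by
          simp [hit]
        have hIio : Finset.Iio it = univ.filter (fun i : Fin n => i.val < t) := by
          ext i
          simp [Fin.lt_def, hit]
        have hres_it := hπres it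
        rw [hIio] at hres_it
        set S := ∑ i ∈ univ.filter (fun i : Fin n => i.val < t), πres i with hS
        have hS1 : S ≤ 1 := ih.2
        have h1S : 0 ≤ 1 - S := by linarith
        have hres_le : πres it ≤ 1 - S := by
          rw [hres_it]
          calc ∑ j, x it j * min (p it j) (1 - S)
              ≤ ∑ j, x it j * (1 - S) := by
                refine Finset.sum_le_sum fun j _ => ?_
                exact mul_le_mul_of_nonneg_left (min_le_right _ _) (hx01 it j).1
            _ = (∑ j, x it j) * (1 - S) := by rw [Finset.sum_mul]
            _ ≤ 1 * (1 - S) := mul_le_mul_of_nonneg_right (hrow it) h1S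
            _ = 1 - S := one_mul _
        have hkey : min (πb it) (1 - S) ≤ πres it := by
          rw [hres_it]
          have step1 : ∑ j, x it j * min (if it = k then α * p it j else p it j) (1 - S) ≤
              ∑ j, x it j * min (p it j) (1 - S) := by
            refine Finset.sum_le_sum fun j _ => ?_
            exact mul_le_mul_of_nonneg_left (min_le_min (hqle it j) le_rfl) (hx01 it j).1
          refine le_trans ?_ step1
          by_cases hc : ∀ j, x it j = 1 → (if it = k then α * p it j else p it j) ≤ 1 - S
          · have heq : ∑ j, x it j * min (if it = k then α * p it j else p it j) (1 - S)
                = πb it := by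
              rw [hπbdef]
              refine Finset.sum_congr rfl fun j _ => ?_
              rcases hbin it j with h0 | h1
              · simp [h0]
              · rw [h1, one_mul, one_mul, min_eq_left (hc j h1)]
            rw [heq]
            exact min_le_left _ _
          · push_neg at hc
            obtain ⟨j0, hx1, hq⟩ := hc
            have hterm : x it j0 * min (if it = k then α * p it j0 else p it j0) (1 - S)
                = 1 - S := by
              rw [hx1, one_mul, min_eq_right (le_of_lt hq)]
            refine le_trans (min_le_right _ _) ?_
            calc (1 - S) = x it j0 * min (if it = k then α * p it j0 else p it j0) (1 - S) :=
                  hterm.symm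
              _ ≤ ∑ j, x it j * min (if it = k then α * p it j else p it j) (1 - S) :=
                  Finset.single_le_sum
                    (fun j _ => mul_nonneg (hx01 it j).1 (le_min (hq0 it j) h1S))
                    (Finset.mem_univ j0)
        constructor
        · rw [hins, Finset.sum_insert hnot, Finset.sum_insert hnot]
          rcases le_or_gt (πb it) (1 - S) with h' | h'
          · have h2 := hkey
            rw [min_eq_left h'] at h2
            have h3 := ih.1
            linarith
          · have h2 := hkey
            rw [min_eq_right (le_of_lt h')] at h2
            have h3 := hDb_le (t + 1)
            rw [hins, Finset.sum_insert hnot] at h3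
            linarith
        · rw [hins, Finset.sum_insert hnot]
          linarith
      · have hset : univ.filter (fun i : Fin n => i.val < t + 1) =
            univ.filter (fun i : Fin n => i.val < t) := by
          ext i
          simp only [Finset.mem_filter, Finset.mem_univ, true_and]
          have := i.isLt
          omega
        rw [hset]
        exact ih
  have hD : ∀ t : ℕ, 0 ≤ ∑ i ∈ univ.filter (fun i : Fin n => i.val < t),
      (πres i - πb i) := by
    intro t
    rw [Finset.sum_sub_distrib]
    linarith [(key t).1]
  have habel := abel_nonneg v hvmono hv0 (fun i => πres i - πb i) hD
  have expand : ∑ i, v i * (πres i - πb i) = ∑ i, v i * πres i - ∑ i, v i * πb i := by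
    rw [← Finset.sum_sub_distrib]
    exact Finset.sum_congr rfl fun i _ => by ring
  simp only [expand] at habel
  show ∑ i, v i * πb i ≤ ∑ i, v i * πres i
  linarith
end

section
/- Let ε ∈ (0,1). If an allocation x̂ ∈ X satisfies Welfare^restricted(x̂) ≥ (1 − ε) · max_{x∈X} Welfare^restricted(x), then Welfare(x̂) ≥ ((1 − ε)/4) · max_{x∈X} Welfare(x). -/
open Finset

/-- An allocation: a 0/1 matrix with at most one 1 per row and per column. -/
def IsAlloc {n m : ℕ} (x : Fin n → Fin m → ℝ) : Prop :=
  (∀ i j, x i j = 0 ∨ x i j = 1) ∧ (∀ i, ∑ j, x i j ≤ 1) ∧ (∀ j, ∑ i, x i j ≤ 1)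

namespace Stmt14Aux

lemma sum_Iio_fin {n : ℕ} (F : ℕ → ℝ) (i : Fin n) :
    ∑ i' ∈ Finset.Iio i, F i'.val = ∑ k ∈ Finset.range i.val, F k := by
  rw [← Nat.Iio_eq_range, ← Fin.map_valEmbedding_Iio, Finset.sum_map]; rfl

lemma prod_Iio_fin {n : ℕ} (F : ℕ → ℝ) (i : Fin n) :
    ∏ i' ∈ Finset.Iio i, F i'.val = ∏ k ∈ Finset.range i.val, F k := by
  rw [← Nat.Iio_eq_range, ← Fin.map_valEmbedding_Iio, Finset.prod_map]; rfl

/-- prefix sums of cascade CTRs. -/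
lemma cascade_prefix (Q : ℕ → ℝ) (N : ℕ) :
    ∑ k ∈ Finset.range N, Q k * ∏ j ∈ Finset.range k, (1 - Q j)
      = 1 - ∏ k ∈ Finset.range N, (1 - Q k) := by
  induction N with
  | zero => simp
  | succ N ih => rw [Finset.sum_range_succ, Finset.prod_range_succ, ih]; ring

/-- prefix sums of restricted CTRs. -/
lemma restricted_prefix (Q R : ℕ → ℝ) (hQ : ∀ k, 0 ≤ Q k)
    (hR : ∀ k, 0 ≤ 1 - ∑ j ∈ Finset.range k, R j →
      R k = min (Q k) (1 - ∑ j ∈ Finset.range k, R j)) :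
    ∀ N, ∑ k ∈ Finset.range N, R k = min 1 (∑ k ∈ Finset.range N, Q k) := by
  intro N
  induction N with
  | zero => simp
  | succ N ih =>
    have hs0 : 0 ≤ ∑ k ∈ Finset.range N, Q k := Finset.sum_nonneg fun k _ => hQ k
    have hq0 := hQ N
    rw [Finset.sum_range_succ, Finset.sum_range_succ, ih]
    have hC : 0 ≤ 1 - ∑ j ∈ Finset.range N, R j := by
      rw [ih]; have := min_le_left 1 (∑ k ∈ Finset.range N, Q k); linarith
    have hrec := hR N hC
    rw [ih] at hrec
    rcases le_or_gt (∑ k ∈ Finset.range N, Q k) 1 with h | h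
    · rw [min_eq_right h] at hrec ⊢
      rcases le_or_gt (Q N) (1 - ∑ k ∈ Finset.range N, Q k) with h' | h'
      · rw [min_eq_left h'] at hrec
        rw [hrec, min_eq_right (by linarith)]
      · rw [min_eq_right (le_of_lt h')] at hrec
        rw [hrec, min_eq_left (by linarith)]; ring
    · have h1' : min (1:ℝ) (∑ k ∈ Finset.range N, Q k) = 1 := min_eq_left (le_of_lt h)
      rw [h1'] at hrec
      have hrn : R N = 0 := by
        rw [hrec, show (1:ℝ) - 1 = 0 by ring, min_eq_right hq0]
      rw [h1', hrn, min_eq_left (by linarith)]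
      ring

/-- Weierstrass lower bound and the factor-2 upper bound on the product. -/
lemma prod_bounds (Q : ℕ → ℝ) (hQ : ∀ k, 0 ≤ Q k ∧ Q k ≤ 1) (N : ℕ) :
    (1 - ∑ k ∈ Finset.range N, Q k ≤ ∏ k ∈ Finset.range N, (1 - Q k)) ∧
    ∏ k ∈ Finset.range N, (1 - Q k) ≤ 1 - min 1 (∑ k ∈ Finset.range N, Q k) / 2 := by
  induction N with
  | zero => simp
  | succ N ih =>
    obtain ⟨h1, h2⟩ := ih
    obtain ⟨hq0, hq1⟩ := hQ N
    have hs0 : 0 ≤ ∑ k ∈ Finset.range N, Q k := Finset.sum_nonneg fun k _ => (hQ k).1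
    have hP0 : 0 ≤ ∏ k ∈ Finset.range N, (1 - Q k) :=
      Finset.prod_nonneg fun k _ => by linarith [(hQ k).2]
    rw [Finset.sum_range_succ, Finset.prod_range_succ]
    constructor
    · nlinarith [mul_le_mul_of_nonneg_right h1 (by linarith : (0:ℝ) ≤ 1 - Q N)]
    · rcases le_or_gt (∑ k ∈ Finset.range N, Q k + Q N) 1 with h | h
      · rw [min_eq_right h]
        rw [min_eq_right (by linarith)] at h2
        nlinarith [mul_le_mul_of_nonneg_right h2 (by linarith : (0:ℝ) ≤ 1 - Q N)]
      · rw [min_eq_left (le_of_lt h)]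
        rcases le_or_gt 1 (∑ k ∈ Finset.range N, Q k) with h' | h'
        · rw [min_eq_left h'] at h2
          nlinarith
        · rw [min_eq_right (le_of_lt h')] at h2
          nlinarith [mul_le_mul_of_nonneg_right h2 (by linarith : (0:ℝ) ≤ 1 - Q N),
            sq_nonneg (∑ k ∈ Finset.range N, Q k - 1)]

/-- Abel-type summation comparison. -/
lemma abel_aux (v c : ℕ → ℝ) (hv : ∀ k, 0 ≤ v k) (hmono : ∀ k, v (k + 1) ≤ v k)
    (N : ℕ) (hD : ∀ K, K ≤ N → 0 ≤ ∑ k ∈ Finset.range K, c k) :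
    v N * ∑ k ∈ Finset.range N, c k ≤ ∑ k ∈ Finset.range N, v k * c k := by
  induction N with
  | zero => simp
  | succ N ih =>
    have h1 := ih fun K hK => hD K (le_trans hK (Nat.le_succ N))
    have hDN1 := hD (N + 1) le_rfl
    rw [Finset.sum_range_succ] at hDN1 ⊢
    rw [Finset.sum_range_succ (fun k => v k * c k)]
    nlinarith [hmono N, hv (N + 1), hv N]

lemma abel_nonneg (v c : ℕ → ℝ) (hv : ∀ k, 0 ≤ v k) (hmono : ∀ k, v (k + 1) ≤ v k)
    (N : ℕ) (hD : ∀ K, K ≤ N → 0 ≤ ∑ k ∈ Finset.range K, c k) :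
    0 ≤ ∑ k ∈ Finset.range N, v k * c k :=
  le_trans (mul_nonneg (hv N) (hD N le_rfl)) (abel_aux v c hv hmono N hD)

/-- Row identity. -/
lemma row_min {m : ℕ} (w a : Fin m → ℝ) (hw : ∀ j, w j = 0 ∨ w j = 1)
    (hs : ∑ j, w j ≤ 1) (C : ℝ) (hC : 0 ≤ C) :
    ∑ j, w j * min (a j) C = min (∑ j, w j * a j) C := by
  by_cases h : ∀ j, w j = 0
  · simp [h, min_eq_left hC]
  · push_neg at h
    obtain ⟨j0, hj0⟩ := h
    have hw1 : w j0 = 1 := (hw j0).resolve_left hj0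
    have hz : ∀ j ∈ Finset.univ, j ≠ j0 → w j = 0 := by
      intro j _ hj
      have hsub : w j0 + w j ≤ ∑ j, w j := by
        have : ({j0, j} : Finset (Fin m)) ⊆ Finset.univ := Finset.subset_univ _
        calc w j0 + w j = ∑ j' ∈ ({j0, j} : Finset (Fin m)), w j' := by
              rw [Finset.sum_pair (Ne.symm hj)]
          _ ≤ ∑ j', w j' := Finset.sum_le_sum_of_subset_of_nonneg this
              (fun j' _ _ => by rcases hw j' with h | h <;> simp [h])
      rcases hw j with h | h
      · exact h
      · rw [hw1, h] at hsub; linarith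
    rw [Finset.sum_eq_single_of_mem j0 (Finset.mem_univ _) (fun j hj hne => by
          rw [hz j hj hne, zero_mul]),
        Finset.sum_eq_single_of_mem j0 (Finset.mem_univ _) (fun j hj hne => by
          rw [hz j hj hne, zero_mul]), hw1, one_mul, one_mul]

end Stmt14Aux

open Stmt14Aux in
/-- if an allocation `x̂` is a `(1 − ε)`-approximate maximizer of the
restricted welfare over all allocations, then it is a `(1 − ε)/4`-approximate maximizer
of the cascade welfare over all allocations.  Here `pires x` is the (unique) function
satisfying, for every allocation `x`, the defining recursion of the restricted
click-through rates. -/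
theorem stmt_14 {n m : ℕ} (p : Fin n → Fin m → ℝ)
    (hp : ∀ i j, p i j ∈ Set.Icc (0 : ℝ) 1)
    (v : Fin n → ℝ) (hv0 : ∀ i, 0 ≤ v i) (hvmono : ∀ i i' : Fin n, i ≤ i' → v i' ≤ v i)
    (ε : ℝ) (hε : ε ∈ Set.Ioo (0 : ℝ) 1)
    (pires : (Fin n → Fin m → ℝ) → Fin n → ℝ)
    (hpires : ∀ x, IsAlloc x → ∀ i, pires x i =
      ∑ j, x i j * min (p i j) (1 - ∑ i' ∈ Finset.Iio i, pires x i'))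
    (xhat : Fin n → Fin m → ℝ) (hxhat : IsAlloc xhat)
    (hnear : ∀ x, IsAlloc x →
      (1 - ε) * ∑ i, v i * pires x i ≤ ∑ i, v i * pires xhat i) :
    ∀ x, IsAlloc x →
      ((1 - ε) / 4) * ∑ i, v i * piCascade p x i ≤ ∑ i, v i * piCascade p xhat i := by
  -- extended value sequence
  set V : ℕ → ℝ := fun k => if h : k < n then v ⟨k, h⟩ else 0 with hV
  have hVnn : ∀ k, 0 ≤ V k := by
    intro k; simp only [hV]; split
    · exact hv0 _
    · exact le_refl 0
  have hVmono : ∀ k, V (k + 1) ≤ V k := by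
    intro k; simp only [hV]
    split
    · rename_i h1
      have hk : k < n := Nat.lt_of_succ_lt h1
      rw [dif_pos hk]
      exact hvmono ⟨k, hk⟩ ⟨k + 1, h1⟩ (by simp [Fin.le_def])
    · split
      · exact hv0 _
      · exact le_refl 0
  -- per-allocation facts
  have key : ∀ x, IsAlloc x →
      ∃ Q R : ℕ → ℝ,
        (∀ k, 0 ≤ Q k ∧ Q k ≤ 1) ∧
        (∑ i, v i * piCascade p x i
            = ∑ k ∈ Finset.range n, V k * (Q k * ∏ j ∈ Finset.range k, (1 - Q j))) ∧
        (∑ i, v i * pires x i = ∑ k ∈ Finset.range n, V k * R k) ∧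
        (∀ N, ∑ k ∈ Finset.range N, R k = min 1 (∑ k ∈ Finset.range N, Q k)) := by
    intro x hx
    obtain ⟨hx01, hxrow, hxcol⟩ := hx
    set Q : ℕ → ℝ := fun k => if h : k < n then ∑ j, x ⟨k, h⟩ j * p ⟨k, h⟩ j else 0 with hQdef
    set R : ℕ → ℝ := fun k => if h : k < n then pires x ⟨k, h⟩ else 0 with hRdef
    have hQ : ∀ k, 0 ≤ Q k ∧ Q k ≤ 1 := by
      intro k
      simp only [hQdef]
      split
      · rename_i h
        constructor
        · exact Finset.sum_nonneg fun j _ => mul_nonneg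
            (by rcases hx01 ⟨k, h⟩ j with h' | h' <;> simp [h']) (hp _ j).1
        · calc ∑ j, x ⟨k, h⟩ j * p ⟨k, h⟩ j ≤ ∑ j, x ⟨k, h⟩ j := by
                refine Finset.sum_le_sum fun j _ => ?_
                have hx0 : 0 ≤ x ⟨k, h⟩ j := by
                  rcases hx01 ⟨k, h⟩ j with h' | h' <;> simp [h']
                nlinarith [(hp ⟨k, h⟩ j).2]
            _ ≤ 1 := hxrow _
      · norm_num
    -- the recursion for R
    have hRrec : ∀ k, 0 ≤ 1 - ∑ j ∈ Finset.range k, R j →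
        R k = min (Q k) (1 - ∑ j ∈ Finset.range k, R j) := by
      intro k hC
      simp only [hRdef, hQdef]
      split
      · rename_i h
        have htrans : ∑ i' ∈ Finset.Iio (⟨k, h⟩ : Fin n), pires x i'
            = ∑ j ∈ Finset.range k, R j := by
          rw [← sum_Iio_fin R ⟨k, h⟩]
          refine Finset.sum_congr rfl fun i' _ => ?_
          simp only [hRdef, dif_pos i'.isLt]
        rw [hpires x ⟨hx01, hxrow, hxcol⟩ ⟨k, h⟩, htrans]
        exact row_min _ _ (hx01 _) (hxrow _) _ hC
      · rw [min_eq_left hC]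
    have hprefix := restricted_prefix Q R (fun k => (hQ k).1) hRrec
    refine ⟨Q, R, hQ, ?_, ?_, hprefix⟩
    · rw [← Fin.sum_univ_eq_sum_range (fun k => V k * (Q k * ∏ j ∈ Finset.range k, (1 - Q j))) n]
      refine Finset.sum_congr rfl fun i _ => ?_
      have hQi : Q i.val = ∑ j, x i j * p i j := by
        simp only [hQdef, dif_pos i.isLt, Fin.eta]
      have hVi : V i.val = v i := by simp only [hV, dif_pos i.isLt, Fin.eta]
      have hprod : ∏ i' ∈ Finset.Iio i, (1 - ∑ j', x i' j' * p i' j')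
          = ∏ j ∈ Finset.range i.val, (1 - Q j) := by
        refine Eq.trans ?_ (prod_Iio_fin (fun k => 1 - Q k) i)
        exact Finset.prod_congr rfl fun i' _ => by
          simp only [hQdef, dif_pos i'.isLt, Fin.eta]
      simp only [piCascade]
      rw [hVi, hQi, hprod]
    · rw [← Fin.sum_univ_eq_sum_range (fun k => V k * R k) n]
      refine Finset.sum_congr rfl fun i _ => ?_
      simp only [hV, hRdef, dif_pos i.isLt, Fin.eta]
  intro x hx
  obtain ⟨Q, R, hQ, hc, hr, hpre⟩ := key x hx
  obtain ⟨Q', R', hQ', hc', hr', hpre'⟩ := key xhat hxhat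
  -- W(x) ≤ Wr(x)
  have h1 : ∑ i, v i * piCascade p x i ≤ ∑ i, v i * pires x i := by
    rw [hc, hr]
    have : ∀ K, K ≤ n → 0 ≤ ∑ k ∈ Finset.range K,
        (R k - Q k * ∏ j ∈ Finset.range k, (1 - Q j)) := by
      intro K _
      rw [Finset.sum_sub_distrib, cascade_prefix Q K, hpre K]
      have hb := prod_bounds Q hQ K
      have hP0 : 0 ≤ ∏ k ∈ Finset.range K, (1 - Q k) :=
        Finset.prod_nonneg fun k _ => by linarith [(hQ k).2]
      rcases min_cases 1 (∑ k ∈ Finset.range K, Q k) with ⟨he, _⟩ | ⟨he, _⟩ <;>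
        rw [he] <;> linarith [hb.1]
    have h := abel_nonneg V (fun k => R k - Q k * ∏ j ∈ Finset.range k, (1 - Q j))
      hVnn hVmono n this
    have h' : 0 ≤ ∑ k ∈ Finset.range n,
        (V k * R k - V k * (Q k * ∏ j ∈ Finset.range k, (1 - Q j))) := by
      refine le_trans h (le_of_eq (Finset.sum_congr rfl fun k _ => by ring))
    rw [Finset.sum_sub_distrib] at h'
    linarith
  -- Wr(xhat) ≤ 2 W(xhat)
  have h2 : ∑ i, v i * pires xhat i ≤ 2 * ∑ i, v i * piCascade p xhat i := by
    rw [hc', hr']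
    have : ∀ K, K ≤ n → 0 ≤ ∑ k ∈ Finset.range K,
        (2 * (Q' k * ∏ j ∈ Finset.range k, (1 - Q' j)) - R' k) := by
      intro K _
      rw [Finset.sum_sub_distrib, ← Finset.mul_sum, cascade_prefix Q' K, hpre' K]
      linarith [(prod_bounds Q' hQ' K).2]
    have h := abel_nonneg V (fun k => 2 * (Q' k * ∏ j ∈ Finset.range k, (1 - Q' j)) - R' k)
      hVnn hVmono n this
    have h' : 0 ≤ ∑ k ∈ Finset.range n,
        (2 * (V k * (Q' k * ∏ j ∈ Finset.range k, (1 - Q' j))) - V k * R' k) := by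
      refine le_trans h (le_of_eq (Finset.sum_congr rfl fun k _ => by ring))
    rw [Finset.sum_sub_distrib, ← Finset.mul_sum] at h'
    linarith
  -- W(x) ≥ 0
  have h0 : 0 ≤ ∑ i, v i * piCascade p x i := by
    rw [hc]
    refine Finset.sum_nonneg fun k _ => mul_nonneg (hVnn k) (mul_nonneg (hQ k).1
      (Finset.prod_nonneg fun j _ => by linarith [(hQ j).2]))
  have h3 := hnear x hx
  obtain ⟨hε0, hε1⟩ := hε
  nlinarith [mul_le_mul_of_nonneg_left h1 (by linarith : (0:ℝ) ≤ 1 - ε)]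
end

section
/- Let x be an allocation, σ a permutation of positions, and S ⊆ [n] a set of advertisers; let x|_S denote the allocation obtained from x by setting all rows outside S to zero. Then π_i(x|_S, σ) ≥ π_i(x, σ) for every i ∈ S. Consequently, for any partition S_1, ..., S_L of [n], Σ_{ℓ=1}^{L} Welfare(x|_{S_ℓ}, σ) ≥ Welfare(x, σ). -/
open Finset

/-- Cascade-model click-through rate of advertiser `i` under allocation `x` and
rendering order `σ` of the positions. -/
noncomputable def cascadeCTR {n m : ℕ} (p : Fin n → Fin m → ℝ)
    (x : Fin n → Fin m → ℝ) (σ : Equiv.Perm (Fin m)) (i : Fin n) : ℝ :=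
  ∑ j, x i j * p i j *
    ∏ j' ∈ univ.filter (fun j' => σ j' < σ j), (1 - ∑ i', x i' j' * p i' j')

/-- The allocation `x|_S`: all rows of `x` outside `S` are set to zero. -/
def restrictAlloc {n m : ℕ} (x : Fin n → Fin m → ℝ) (S : Finset (Fin n)) :
    Fin n → Fin m → ℝ :=
  fun i j => if i ∈ S then x i j else 0

/-- restricting an allocation to a subset `S` of advertisers can only
increase the click-through rate of each advertiser in `S`; consequently, for any
partition `S_1, …, S_L` of the advertisers the sum of the welfares of the restricted
allocations is at least the welfare of the full allocation. -/
theorem stmt_15 {n m : ℕ} (p : Fin n → Fin m → ℝ)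
    (hp : ∀ i j, p i j ∈ Set.Icc (0 : ℝ) 1)
    (v : Fin n → ℝ) (hv0 : ∀ i, 0 ≤ v i)
    (x : Fin n → Fin m → ℝ)
    (hbin : ∀ i j, x i j = 0 ∨ x i j = 1)
    (hrow : ∀ i, ∑ j, x i j ≤ 1) (hcol : ∀ j, ∑ i, x i j ≤ 1)
    (σ : Equiv.Perm (Fin m)) :
    (∀ S : Finset (Fin n), ∀ i ∈ S,
      cascadeCTR p x σ i ≤ cascadeCTR p (restrictAlloc x S) σ i) ∧
    (∀ L : ℕ, ∀ S : Fin L → Finset (Fin n),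
      (∀ ℓ ℓ' : Fin L, ℓ ≠ ℓ' → Disjoint (S ℓ) (S ℓ')) →
      (∀ i : Fin n, ∃ ℓ, i ∈ S ℓ) →
      ∑ i, v i * cascadeCTR p x σ i ≤
        ∑ ℓ, ∑ i, v i * cascadeCTR p (restrictAlloc x (S ℓ)) σ i) := by
  have hx0 : ∀ i j, 0 ≤ x i j := by
    intro i j; rcases hbin i j with h | h <;> rw [h] <;> norm_num
  have hxp0 : ∀ i j, 0 ≤ x i j * p i j := fun i j =>
    mul_nonneg (hx0 i j) (hp i j).1
  -- restricted entries are between 0 and the original entries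
  have hr_le : ∀ (S : Finset (Fin n)) i j,
      restrictAlloc x S i j * p i j ≤ x i j * p i j := by
    intro S i j
    unfold restrictAlloc
    split
    · exact le_refl _
    · simpa using hxp0 i j
  have hr0 : ∀ (S : Finset (Fin n)) i j, 0 ≤ restrictAlloc x S i j * p i j := by
    intro S i j
    unfold restrictAlloc
    split
    · exact hxp0 i j
    · simp
  -- column sums of x * p are at most 1
  have hcolxp : ∀ j, ∑ i, x i j * p i j ≤ 1 := by
    intro j
    calc ∑ i, x i j * p i j ≤ ∑ i, x i j := by
          apply Finset.sum_le_sum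
          intro i _
          calc x i j * p i j ≤ x i j * 1 :=
                mul_le_mul_of_nonneg_left (hp i j).2 (hx0 i j)
            _ = x i j := mul_one _
      _ ≤ 1 := hcol j
  have hrcol : ∀ (S : Finset (Fin n)) j,
      ∑ i, restrictAlloc x S i j * p i j ≤ ∑ i, x i j * p i j := by
    intro S j
    exact Finset.sum_le_sum fun i _ => hr_le S i j
  -- each factor of the product is in [0,1] and increases under restriction
  have hfac0 : ∀ (S : Finset (Fin n)) j',
      (0 : ℝ) ≤ 1 - ∑ i', restrictAlloc x S i' j' * p i' j' := by
    intro S j'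
    have := le_trans (hrcol S j') (hcolxp j')
    linarith
  have hfacx0 : ∀ j', (0 : ℝ) ≤ 1 - ∑ i', x i' j' * p i' j' := by
    intro j'; have := hcolxp j'; linarith
  -- part 1
  have part1 : ∀ S : Finset (Fin n), ∀ i ∈ S,
      cascadeCTR p x σ i ≤ cascadeCTR p (restrictAlloc x S) σ i := by
    intro S i hi
    unfold cascadeCTR
    apply Finset.sum_le_sum
    intro j _
    have hxi : restrictAlloc x S i j = x i j := by
      unfold restrictAlloc; rw [if_pos hi]
    rw [hxi]
    apply mul_le_mul_of_nonneg_left _ (hxp0 i j)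
    apply Finset.prod_le_prod
    · intro j' _; exact hfacx0 j'
    · intro j' _
      have := hrcol S j'
      linarith
  refine ⟨part1, ?_⟩
  -- nonnegativity of restricted CTR
  have hctr0 : ∀ (S : Finset (Fin n)) i, 0 ≤ cascadeCTR p (restrictAlloc x S) σ i := by
    intro S i
    unfold cascadeCTR
    apply Finset.sum_nonneg
    intro j _
    exact mul_nonneg (hr0 S i j) (Finset.prod_nonneg fun j' _ => hfac0 S j')
  intro L S hdisj hcov
  have hUnion : (Finset.univ : Finset (Fin L)).biUnion S = Finset.univ := by
    apply Finset.eq_univ_of_forall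
    intro i
    rcases hcov i with ⟨ℓ, hℓ⟩
    exact Finset.mem_biUnion.mpr ⟨ℓ, Finset.mem_univ ℓ, hℓ⟩
  have hPD : ((Finset.univ : Finset (Fin L)) : Set (Fin L)).PairwiseDisjoint S := by
    intro a _ b _ hab
    exact hdisj a b hab
  calc ∑ i, v i * cascadeCTR p x σ i
      = ∑ i ∈ (Finset.univ : Finset (Fin L)).biUnion S,
          v i * cascadeCTR p x σ i := by rw [hUnion]
    _ = ∑ ℓ, ∑ i ∈ S ℓ, v i * cascadeCTR p x σ i :=
        Finset.sum_biUnion hPD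
    _ ≤ ∑ ℓ, ∑ i ∈ S ℓ, v i * cascadeCTR p (restrictAlloc x (S ℓ)) σ i := by
        apply Finset.sum_le_sum
        intro ℓ _
        apply Finset.sum_le_sum
        intro i hi
        exact mul_le_mul_of_nonneg_left (part1 (S ℓ) i hi) (hv0 i)
    _ ≤ ∑ ℓ, ∑ i, v i * cascadeCTR p (restrictAlloc x (S ℓ)) σ i := by
        apply Finset.sum_le_sum
        intro ℓ _
        apply Finset.sum_le_sum_of_subset_of_nonneg (Finset.subset_univ _)
        intro i _ _
        exact mul_nonneg (hv0 i) (hctr0 (S ℓ) i)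
end

section
/- Let w : E → ℝ_{≥0} be edge weights on a bipartite graph with allowed edge set E ⊆ [n]×[m], and let K ≥ 1. Suppose a matching M ⊆ E with |M| ≤ K satisfies the greedy-maximality property: for every edge e = (i,j) ∈ E \ M, either some edge e' ∈ M sharing the endpoint i or the endpoint j has w(e') ≥ w(e), or else |M| = K and every edge e' ∈ M has w(e') ≥ w(e). Then for every matching M' ⊆ E with |M'| ≤ K, 2 · Σ_{e∈M} w(e) ≥ Σ_{e∈M'} w(e). -/
open Finset

/-- A set of edges of the bipartite graph on `[n] × [m]` is a matching if no two
distinct edges share an endpoint. -/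
def IsBipMatching {n m : ℕ} (M : Finset (Fin n × Fin m)) : Prop :=
  ∀ e ∈ M, ∀ e' ∈ M, e ≠ e' → e.1 ≠ e'.1 ∧ e.2 ≠ e'.2

/-- a greedily-maximal matching `M` of cardinality at most `K` is a
`2`-approximation of the maximum-weight matching of cardinality at most `K`. -/
theorem stmt_17 {n m : ℕ} (K : ℕ) (hK : 1 ≤ K)
    (E : Finset (Fin n × Fin m))
    (w : Fin n × Fin m → ℝ) (hw : ∀ e ∈ E, 0 ≤ w e)
    (M : Finset (Fin n × Fin m)) (hME : M ⊆ E) (hM : IsBipMatching M)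
    (hMcard : M.card ≤ K)
    (hgreedy : ∀ e ∈ E \ M,
      (∃ e' ∈ M, (e'.1 = e.1 ∨ e'.2 = e.2) ∧ w e ≤ w e') ∨
      (M.card = K ∧ ∀ e' ∈ M, w e ≤ w e')) :
    ∀ M' : Finset (Fin n × Fin m), M' ⊆ E → IsBipMatching M' → M'.card ≤ K →
      ∑ e ∈ M', w e ≤ 2 * ∑ e ∈ M, w e := by
  intro M' hM'E hM' hM'card
  classical
  set P : Fin n × Fin m → Prop :=
    fun e => ∃ e' ∈ M, (e'.1 = e.1 ∨ e'.2 = e.2) ∧ w e ≤ w e' with hP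
  set A := M'.filter P with hAdef
  set B := M'.filter (fun e => ¬ P e) with hBdef
  have hA_spec : ∀ e ∈ A, P e := fun e he => (mem_filter.1 he).2
  choose g hg1 hg2 hg3 using hA_spec
  -- totalize into φ
  set φ : Fin n × Fin m → (Fin n × Fin m) × Bool :=
    fun e => if h : e ∈ A then
        (if (g e h).1 = e.1 then ((g e h), true) else ((g e h), false))
      else (e, true) with hφ
  have hφ_fst : ∀ e (h : e ∈ A), (φ e).1 = g e h := by
    intro e h
    simp only [hφ, dif_pos h]
    split <;> rfl
  have hφ_mem : ∀ e ∈ A, φ e ∈ M ×ˢ (univ : Finset Bool) := by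
    intro e h
    rw [mem_product]
    refine ⟨?_, mem_univ _⟩
    rw [hφ_fst e h]; exact hg1 e h
  -- injectivity
  have hinj : Set.InjOn φ A := by
    intro a ha0 b hb0 hab
    by_contra hne
    have ha : a ∈ A := ha0
    have hb : b ∈ A := hb0
    have haM' : a ∈ M' := (mem_filter.1 ha).1
    have hbM' : b ∈ M' := (mem_filter.1 hb).1
    have hne12 := hM' a haM' b hbM' hne
    simp only [hφ, dif_pos ha, dif_pos hb] at hab
    by_cases h1 : (g a ha).1 = a.1
    · by_cases h2 : (g b hb).1 = b.1
      · rw [if_pos h1, if_pos h2] at hab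
        have : g a ha = g b hb := (Prod.ext_iff.1 hab).1
        exact hne12.1 (h1 ▸ h2 ▸ this ▸ rfl)
      · rw [if_pos h1, if_neg h2] at hab
        exact absurd (Prod.ext_iff.1 hab).2 (by simp)
    · by_cases h2 : (g b hb).1 = b.1
      · rw [if_neg h1, if_pos h2] at hab
        exact absurd (Prod.ext_iff.1 hab).2 (by simp)
      · rw [if_neg h1, if_neg h2] at hab
        have hgeq : g a ha = g b hb := (Prod.ext_iff.1 hab).1
        have ha2 : (g a ha).2 = a.2 := (hg2 a ha).resolve_left h1
        have hb2 : (g b hb).2 = b.2 := (hg2 b hb).resolve_left h2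
        exact hne12.2 (ha2 ▸ hb2 ▸ hgeq ▸ rfl)
  set T := M ×ˢ (univ : Finset Bool) with hT
  set I := A.image φ with hI
  have hIT : I ⊆ T := by
    intro p hp
    obtain ⟨e, he, rfl⟩ := mem_image.1 hp
    exact hφ_mem e he
  have hIcard : I.card = A.card := card_image_of_injOn hinj
  have hTcard : T.card = M.card * 2 := by
    rw [hT, card_product]; simp
  set S := T \ I with hS
  -- key facts about B
  have hB_spec : ∀ e ∈ B, M.card = K ∧ ∀ e' ∈ M, w e ≤ w e' := by
    intro e he
    obtain ⟨heM', hnP⟩ := mem_filter.1 he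
    have heM : e ∉ M := by
      intro heM
      exact hnP ⟨e, heM, Or.inl rfl, le_refl _⟩
    have := hgreedy e (mem_sdiff.2 ⟨hM'E heM', heM⟩)
    exact this.resolve_left hnP
  -- sum over A
  have hsumA : ∑ e ∈ A, w e ≤ ∑ p ∈ I, w p.1 := by
    rw [hI, sum_image (fun a ha b hb => hinj ha hb)]
    refine sum_le_sum ?_
    intro e he
    rw [hφ_fst e he]
    exact hg3 e he
  -- sum over B
  have hScard : B.card ≤ S.card := by
    have h1 : A.card + B.card = M'.card := card_filter_add_card_filter_not _
    have h2 : S.card = T.card - I.card := card_sdiff_of_subset hIT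
    have h3 : A.card ≤ M'.card := card_filter_le _ _
    rcases B.eq_empty_or_nonempty with hBe | hBne
    · simp [hBe]
    · obtain ⟨b0, hb0⟩ := hBne
      have hMK : M.card = K := (hB_spec b0 hb0).1
      omega
  have hSnn : ∀ p ∈ S, 0 ≤ w p.1 := by
    intro p hp
    have : p ∈ T := (sdiff_subset) hp
    exact hw _ (hME (mem_product.1 this).1)
  have hsumB : ∑ e ∈ B, w e ≤ ∑ p ∈ S, w p.1 := by
    rcases B.eq_empty_or_nonempty with hBe | hBne
    · rw [hBe]; simp
      exact sum_nonneg hSnn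
    · obtain ⟨b0, hb0⟩ := hBne
      have hMK : M.card = K := (hB_spec b0 hb0).1
      have hMne : M.Nonempty := card_pos.1 (by omega)
      set μ := (M.image w).min' (hMne.image w) with hμ
      obtain ⟨m0, hm0M, hm0⟩ := mem_image.1 ((M.image w).min'_mem (hMne.image w))
      have hμle : ∀ m ∈ M, μ ≤ w m := fun m hm =>
        min'_le _ _ (mem_image_of_mem w hm)
      have hμnn : 0 ≤ μ := by rw [hμ, ← hm0]; exact hw _ (hME hm0M)
      calc ∑ e ∈ B, w e ≤ ∑ _e ∈ B, μ := by
            refine sum_le_sum ?_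
            intro e he
            rw [hμ, ← hm0]
            exact (hB_spec e he).2 m0 hm0M
        _ = B.card • μ := by rw [sum_const]
        _ ≤ S.card • μ := by
            exact nsmul_le_nsmul_left hμnn hScard
        _ ≤ ∑ p ∈ S, w p.1 := by
            refine Finset.card_nsmul_le_sum S _ _ ?_
            intro p hp
            exact hμle p.1 (mem_product.1 ((sdiff_subset) hp)).1
  -- assemble
  have hsplit : ∑ e ∈ M', w e = ∑ e ∈ A, w e + ∑ e ∈ B, w e :=
    (sum_filter_add_sum_filter_not M' P w).symm
  have hTsum : ∑ p ∈ T, w p.1 = 2 * ∑ e ∈ M, w e := by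
    rw [hT, Finset.sum_product]
    simp [two_mul, Finset.sum_add_distrib]
  calc ∑ e ∈ M', w e = ∑ e ∈ A, w e + ∑ e ∈ B, w e := hsplit
    _ ≤ ∑ p ∈ I, w p.1 + ∑ p ∈ S, w p.1 := add_le_add hsumA hsumB
    _ = ∑ p ∈ T, w p.1 := by rw [hS, add_comm, sum_sdiff hIT]
    _ = 2 * ∑ e ∈ M, w e := hTsum
end

section
/- Let K ≥ 1 and let x be a matching with at most K matched pairs, all of whose matched pairs (i,j) satisfy 1/K < p_ij ≤ 2/K. Let σ be a permutation rendering the matched positions in some order such that whenever advertiser i's position is rendered before advertiser i''s position, v_i ≥ v_{i'}/2. Then Welfare(x, σ) ≥ Welfare^base(x)/14. -/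
open Finset

set_option maxHeartbeats 2000000 in
/-- let `x` be a matching with at most `K` matched pairs, all of whose
matched pairs `(i,j)` satisfy `1/K < p_ij ≤ 2/K`, and let `σ` be a rendering order such
that whenever advertiser `i`'s position is rendered before advertiser `i'`'s position
one has `v_i ≥ v_{i'}/2`.  Then `Welfare(x, σ) ≥ Welfare^base(x)/14`. -/
theorem stmt_18 {n m : ℕ} (K : ℕ) (hK : 1 ≤ K)
    (p : Fin n → Fin m → ℝ) (hp : ∀ i j, p i j ∈ Set.Icc (0 : ℝ) 1)
    (v : Fin n → ℝ) (hv0 : ∀ i, 0 ≤ v i)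
    (x : Fin n → Fin m → ℝ)
    (hbin : ∀ i j, x i j = 0 ∨ x i j = 1)
    (hrow : ∀ i, ∑ j, x i j ≤ 1) (hcol : ∀ j, ∑ i, x i j ≤ 1)
    (hcard : ∑ i, ∑ j, x i j ≤ (K : ℝ))
    (hpK : ∀ i j, x i j = 1 → 1 / (K : ℝ) < p i j ∧ p i j ≤ 2 / (K : ℝ))
    (σ : Equiv.Perm (Fin m))
    (hσ : ∀ i j i' j', x i j = 1 → x i' j' = 1 → σ j < σ j' → v i' / 2 ≤ v i) :
    (∑ i, v i * ∑ j, x i j * p i j) / 14 ≤ ∑ i, v i * cascadeCTR p x σ i := by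
  classical
  have hK0 : (0:ℝ) < K := by exact_mod_cast Nat.pos_of_ne_zero (by omega)
  have hxnn : ∀ i j, 0 ≤ x i j := fun i j => by rcases hbin i j with h | h <;> simp [h]
  -- column uniqueness
  have huniq : ∀ j i0, x i0 j = 1 → ∀ i, i ≠ i0 → x i j = 0 := by
    intro j i0 h1 i hne
    by_contra hzero
    have hx1 : x i j = 1 := (hbin i j).resolve_left hzero
    have hsub : ({i, i0} : Finset (Fin n)) ⊆ univ := subset_univ _
    have h2 : (2:ℝ) ≤ ∑ i', x i' j := by
      have := Finset.sum_le_sum_of_subset_of_nonneg hsub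
        (fun k _ _ => hxnn k j)
      rw [Finset.sum_pair hne, hx1, h1] at this
      linarith
    linarith [hcol j]
  set q : Fin m → ℝ := fun j => ∑ i, x i j * p i j with hqdef
  set w : Fin m → ℝ := fun j => ∑ i, v i * x i j with hwdef
  set P : Fin m → ℝ := fun j => ∏ j' ∈ univ.filter (fun j' => σ j' < σ j), (1 - q j') with hPdef
  set M : Finset (Fin m) := univ.filter (fun j => ∃ i, x i j = 1) with hMdef
  have hMmem : ∀ j, j ∈ M ↔ ∃ i, x i j = 1 := by intro j; simp [hMdef]
  have hq0 : ∀ j ∉ M, q j = 0 := by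
    intro j hj
    have : ∀ i, x i j = 0 := by
      intro i
      rcases hbin i j with h | h
      · exact h
      · exact absurd ((hMmem j).2 ⟨i, h⟩) hj
    simp [hqdef, this]
  have hwq : ∀ j ∈ M, ∃ i0, x i0 j = 1 ∧ w j = v i0 ∧ q j = p i0 j := by
    intro j hj
    obtain ⟨i0, h0⟩ := (hMmem j).1 hj
    refine ⟨i0, h0, ?_, ?_⟩
    · show (∑ i, v i * x i j) = v i0
      rw [Finset.sum_eq_single i0]
      · rw [h0]; ring
      · intro i _ hne; rw [huniq j i0 h0 i hne]; ring
      · simp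
    · show (∑ i, x i j * p i j) = p i0 j
      rw [Finset.sum_eq_single i0]
      · rw [h0]; ring
      · intro i _ hne; rw [huniq j i0 h0 i hne]; ring
      · simp
  have hqnn : ∀ j, 0 ≤ q j := by
    intro j
    exact Finset.sum_nonneg fun i _ => mul_nonneg (hxnn i j) (hp i j).1
  have hqub : ∀ j, q j ≤ 2 / K := by
    intro j
    by_cases hj : j ∈ M
    · obtain ⟨i0, h0, _, hq⟩ := hwq j hj
      rw [hq]; exact (hpK i0 j h0).2
    · rw [hq0 j hj]; positivity
  have hqlb : ∀ j ∈ M, 1 / K < q j := by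
    intro j hj
    obtain ⟨i0, h0, _, hq⟩ := hwq j hj
    rw [hq]; exact (hpK i0 j h0).1
  have hwnn : ∀ j, 0 ≤ w j := fun j =>
    Finset.sum_nonneg fun i _ => mul_nonneg (hv0 i) (hxnn i j)
  -- key column identities
  have key : ∀ j, w j * q j = ∑ i, v i * (x i j * p i j) := by
    intro j
    by_cases hj : j ∈ M
    · obtain ⟨i0, h0, hw, hq⟩ := hwq j hj
      rw [hw, hq, Finset.sum_eq_single i0]
      · rw [h0]; ring
      · intro i _ hne; rw [huniq j i0 h0 i hne]; ring
      · simp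
    · have hz : ∀ i, x i j = 0 := by
        intro i
        rcases hbin i j with h | h
        · exact h
        · exact absurd ((hMmem j).2 ⟨i, h⟩) hj
      have : w j = 0 := by simp [hwdef, hz]
      rw [this]
      simp [hz]
  have lhs_eq : (∑ i, v i * ∑ j, x i j * p i j) = ∑ j, w j * q j := by
    simp_rw [Finset.mul_sum]
    rw [Finset.sum_comm]
    exact Finset.sum_congr rfl fun j _ => (key j).symm
  have rhs_eq : (∑ i, v i * cascadeCTR p x σ i) = ∑ j, w j * q j * P j := by
    unfold cascadeCTR
    simp_rw [Finset.mul_sum]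
    rw [Finset.sum_comm]
    refine Finset.sum_congr rfl fun j _ => ?_
    have : ∑ i, v i * (x i j * p i j * P j) = (∑ i, v i * (x i j * p i j)) * P j := by
      rw [Finset.sum_mul]; exact Finset.sum_congr rfl fun i _ => by ring
    rw [this, ← key j]
  rw [lhs_eq, rhs_eq]
  -- restrict to M
  have hsum1 : ∑ j, w j * q j = ∑ j ∈ M, w j * q j := by
    refine (Finset.sum_subset (subset_univ M) ?_).symm
    intro j _ hj; rw [hq0 j hj]; ring
  have hsum2 : ∑ j, w j * q j * P j = ∑ j ∈ M, w j * q j * P j := by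
    refine (Finset.sum_subset (subset_univ M) ?_).symm
    intro j _ hj; rw [hq0 j hj]; ring
  rw [hsum1, hsum2]
  -- ordering property on positions
  have horder : ∀ j ∈ M, ∀ j' ∈ M, σ j < σ j' → w j' ≤ 2 * w j := by
    intro j hj j' hj' hlt
    obtain ⟨i0, h0, hw0, _⟩ := hwq j hj
    obtain ⟨i1, h1, hw1, _⟩ := hwq j' hj'
    have := hσ i0 j i1 j' h0 h1 hlt
    rw [hw0, hw1]; linarith
  -- cardinality bound
  have hcolsum1 : ∀ j ∈ M, ∑ i, x i j = 1 := by
    intro j hj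
    obtain ⟨i0, h0, _, _⟩ := hwq j hj
    rw [Finset.sum_eq_single i0]
    · exact h0
    · intro i _ hne; exact huniq j i0 h0 i hne
    · simp
  have hcolsum0 : ∀ j ∉ M, ∑ i, x i j = 0 := by
    intro j hj
    apply Finset.sum_eq_zero
    intro i _
    rcases hbin i j with h | h
    · exact h
    · exact absurd ((hMmem j).2 ⟨i, h⟩) hj
  have hTK : (M.card : ℝ) ≤ K := by
    have hx : ∑ i, ∑ j, x i j = (M.card : ℝ) := by
      rw [Finset.sum_comm]
      rw [← Finset.sum_subset (subset_univ M) (fun j _ hj => hcolsum0 j hj)]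
      rw [Finset.sum_congr rfl (fun j hj => hcolsum1 j hj)]
      simp
    linarith [hcard]
  have hsumwqnn : 0 ≤ ∑ j ∈ M, w j * q j :=
    Finset.sum_nonneg fun j _ => mul_nonneg (hwnn j) (hqnn j)
  by_cases hA : M.card ≤ 1
  · -- few matched positions: products are 1
    have hP1 : ∀ j ∈ M, P j = 1 := by
      intro j hj
      show (∏ j' ∈ univ.filter (fun j' => σ j' < σ j), (1 - q j')) = 1
      apply Finset.prod_eq_one
      intro j' hj'
      rw [Finset.mem_filter] at hj'
      have hj'M : j' ∉ M := by
        intro hmem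
        have := Finset.card_le_one.mp hA j' hmem j hj
        rw [this] at hj'
        exact lt_irrefl _ hj'.2
      rw [hq0 j' hj'M]; ring
    have : ∑ j ∈ M, w j * q j * P j = ∑ j ∈ M, w j * q j := by
      refine Finset.sum_congr rfl fun j hj => ?_
      rw [hP1 j hj]; ring
    rw [this]
    linarith [hsumwqnn]
  · push_neg at hA
    have hK2 : 2 ≤ K := by
      have : (2:ℝ) ≤ M.card := by exact_mod_cast hA
      have : (2:ℝ) ≤ K := le_trans this hTK
      exact_mod_cast this
    have hK2' : (2:ℝ) ≤ K := by exact_mod_cast hK2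
    set b : ℝ := 1 - 2 / K with hbdef
    have hb0 : 0 ≤ b := by
      have : 2 / (K:ℝ) ≤ 1 := by rw [div_le_one hK0]; linarith
      simp [hbdef]; linarith
    have hb1 : b < 1 := by
      have : 0 < 2 / (K:ℝ) := by positivity
      simp [hbdef]; linarith
    set c : Fin m → ℕ := fun j => (M.filter (fun j' => σ j' < σ j)).card with hcdef
    have hcmono : ∀ j ∈ M, ∀ j' ∈ M, σ j' < σ j → c j' < c j := by
      intro j hj j' hj' hlt
      apply Finset.card_lt_card
      constructor
      · intro z hz
        rw [Finset.mem_filter] at hz ⊢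
        exact ⟨hz.1, lt_trans hz.2 hlt⟩
      · intro hsub
        have : j' ∈ M.filter (fun z => σ z < σ j') :=
          hsub (Finset.mem_filter.mpr ⟨hj', hlt⟩)
        rw [Finset.mem_filter] at this
        exact lt_irrefl _ this.2
    have hclt : ∀ j ∈ M, c j < M.card := by
      intro j hj
      apply Finset.card_lt_card
      constructor
      · exact Finset.filter_subset _ _
      · intro hsub
        have : j ∈ M.filter (fun z => σ z < σ j) := hsub hj
        rw [Finset.mem_filter] at this
        exact lt_irrefl _ this.2
    have hcinj : ∀ j ∈ M, ∀ j' ∈ M, c j = c j' → j = j' := by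
      intro j hj j' hj' hc
      rcases lt_trichotomy (σ j) (σ j') with h | h | h
      · exact absurd (hcmono j' hj' j hj h) (by omega)
      · exact σ.injective h
      · exact absurd (hcmono j hj j' hj' h) (by omega)
    have himage : M.image c = Finset.range M.card := by
      apply Finset.eq_of_subset_of_card_le
      · intro r hr
        rw [Finset.mem_image] at hr
        obtain ⟨j, hj, rfl⟩ := hr
        exact Finset.mem_range.mpr (hclt j hj)
      · rw [Finset.card_range, Finset.card_image_of_injOn hcinj]
    set g : Fin m → ℝ := fun j => b ^ c j with hgdef
    have hgnn : ∀ j, 0 ≤ g j := fun j => pow_nonneg hb0 _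
    have hsumg : ∑ j ∈ M, g j = ∑ r ∈ Finset.range M.card, b ^ r := by
      rw [← himage, Finset.sum_image hcinj]
    set T : ℕ := M.card with hTdef
    have hT0 : (0:ℝ) < T := by
      have : 0 < T := by omega
      exact_mod_cast this
    have h2K : (0:ℝ) < 2 / K := by positivity
    have hb_ne : b ≠ 1 := ne_of_lt hb1
    have hgeom : ∑ r ∈ Finset.range T, b ^ r = (1 - b ^ T) / (2 / K) := by
      rw [geom_sum_eq hb_ne]
      have h1 : b - 1 = -(2 / (K:ℝ)) := by rw [hbdef]; ring
      rw [h1, div_neg, ← neg_div, neg_sub]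
    have hbTle : b ^ T ≤ 1 / (1 + (2 / K) * T) := by
      have hBern : 1 + (T:ℝ) * (2 / K) ≤ (1 + 2 / K) ^ T :=
        one_add_mul_le_pow (by linarith) T
      have hprod : b ^ T * (1 + 2 / K) ^ T ≤ 1 := by
        rw [← mul_pow]
        have hbase : b * (1 + 2 / K) = 1 - (2 / K) ^ 2 := by rw [hbdef]; ring
        rw [hbase]
        apply pow_le_one₀
        · nlinarith [div_le_one_of_le₀ hK2' (le_of_lt hK0)]
        · nlinarith [h2K]
      have hpos : (0:ℝ) < 1 + (2 / K) * T := by positivity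
      rw [le_div_iff₀ hpos]
      calc b ^ T * (1 + 2 / K * T) ≤ b ^ T * (1 + 2 / K) ^ T := by
            apply mul_le_mul_of_nonneg_left _ (pow_nonneg hb0 T)
            calc 1 + 2 / K * (T:ℝ) = 1 + (T:ℝ) * (2 / K) := by ring
            _ ≤ (1 + 2 / K) ^ T := hBern
      _ ≤ 1 := hprod
    have haT : (2 / (K:ℝ)) * T ≤ 2 := by
      rw [div_mul_eq_mul_div, div_le_iff₀ hK0]
      linarith [hTK]
    have hsumg_ge : (T:ℝ) / 3 ≤ ∑ r ∈ Finset.range T, b ^ r := by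
      rw [hgeom]
      have hpos : (0:ℝ) < 1 + (2 / K) * T := by positivity
      have step1 : (T:ℝ) / 3 ≤ (T:ℝ) / (1 + (2 / K) * T) := by
        apply div_le_div_of_nonneg_left (le_of_lt hT0) hpos
        linarith
      have step2 : (T:ℝ) / (1 + (2 / K) * T) ≤ (1 - b ^ T) / (2 / K) := by
        rw [div_le_div_iff₀ hpos h2K]
        have h3 : b ^ T * (1 + (2 / K) * T) ≤ 1 := by
          rw [← le_div_iff₀ hpos]; exact hbTle
        nlinarith [h3]
      linarith
    -- sup of w over later-rendered positions
    set m' : Fin m → ℝ := fun j =>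
      (insert j (M.filter fun j' => c j ≤ c j')).sup' (Finset.insert_nonempty _ _) w
      with hm'def
    have hwm : ∀ j ∈ M, w j ≤ m' j := fun j hj =>
      Finset.le_sup' w (Finset.mem_insert_self _ _)
    have hm2w : ∀ j ∈ M, m' j ≤ 2 * w j := by
      intro j hj
      apply Finset.sup'_le
      intro z hz
      rcases Finset.mem_insert.mp hz with rfl | hz
      · linarith [hwnn z]
      · rw [Finset.mem_filter] at hz
        obtain ⟨hzM, hcz⟩ := hz
        by_cases hzj : z = j
        · subst hzj; linarith [hwnn z]
        · have hσlt : σ j < σ z := by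
            rcases lt_trichotomy (σ z) (σ j) with h | h | h
            · exact absurd (hcmono j hj z hzM h) (by omega)
            · exact absurd (σ.injective h) hzj
            · exact h
          exact horder j hj z hzM hσlt
    have hmanti : ∀ j ∈ M, ∀ j' ∈ M, c j' ≤ c j → m' j ≤ m' j' := by
      intro j hj j' hj' hc
      apply Finset.sup'_le
      intro z hz
      apply Finset.le_sup'
      rcases Finset.mem_insert.mp hz with rfl | hz
      · exact Finset.mem_insert_of_mem (Finset.mem_filter.mpr ⟨hj, hc⟩)
      · rw [Finset.mem_filter] at hz
        exact Finset.mem_insert_of_mem (Finset.mem_filter.mpr ⟨hz.1, le_trans hc hz.2⟩)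
    have hmono : MonovaryOn m' g (↑M : Set (Fin m)) := by
      intro j hj j' hj' hlt
      rw [Finset.mem_coe] at hj hj'
      have hcle : c j' ≤ c j := by
        by_contra hcon
        push_neg at hcon
        have : b ^ c j' ≤ b ^ c j :=
          pow_le_pow_of_le_one hb0 (le_of_lt hb1) (le_of_lt hcon)
        have hgj : g j' ≤ g j := this
        have : g j < g j' := hlt
        linarith
      exact hmanti j hj j' hj' hcle
    have cheb : (∑ j ∈ M, m' j) * ∑ j ∈ M, g j ≤ (T:ℝ) * ∑ j ∈ M, m' j * g j := by
      have := hmono.sum_mul_sum_le_card_mul_sum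
      rw [hTdef]
      exact_mod_cast this
    have hmgle : ∑ j ∈ M, m' j * g j ≤ 2 * ∑ j ∈ M, w j * g j := by
      rw [Finset.mul_sum]
      apply Finset.sum_le_sum
      intro j hj
      calc m' j * g j ≤ (2 * w j) * g j :=
            mul_le_mul_of_nonneg_right (hm2w j hj) (hgnn j)
      _ = 2 * (w j * g j) := by ring
    have hwlem : ∑ j ∈ M, w j ≤ ∑ j ∈ M, m' j :=
      Finset.sum_le_sum fun j hj => hwm j hj
    have hsumwnn : 0 ≤ ∑ j ∈ M, w j := Finset.sum_nonneg fun j _ => hwnn j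
    have hsumgnn : 0 ≤ ∑ j ∈ M, g j := Finset.sum_nonneg fun j _ => hgnn j
    have hcore : (∑ j ∈ M, w j) / 6 ≤ ∑ j ∈ M, w j * g j := by
      have h1 : (∑ j ∈ M, w j) * ((T:ℝ) / 3) ≤ (∑ j ∈ M, w j) * (∑ j ∈ M, g j) := by
        apply mul_le_mul_of_nonneg_left _ hsumwnn
        rw [hsumg]; exact hsumg_ge
      have h2 : (∑ j ∈ M, w j) * (∑ j ∈ M, g j) ≤ (∑ j ∈ M, m' j) * ∑ j ∈ M, g j :=
        mul_le_mul_of_nonneg_right hwlem hsumgnn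
      have h3 : (T:ℝ) * ∑ j ∈ M, m' j * g j ≤ (T:ℝ) * (2 * ∑ j ∈ M, w j * g j) :=
        mul_le_mul_of_nonneg_left hmgle (le_of_lt hT0)
      -- (∑w) * T/3 ≤ T * 2 * ∑ w g
      have h4 : (∑ j ∈ M, w j) * ((T:ℝ) / 3) ≤ (T:ℝ) * (2 * ∑ j ∈ M, w j * g j) := by
        linarith
      nlinarith [hT0, h4]
    -- product lower bound
    have hPg : ∀ j ∈ M, b ^ c j ≤ P j := by
      intro j hj
      have hPeq : P j = ∏ j' ∈ M.filter (fun j' => σ j' < σ j), (1 - q j') := by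
        show (∏ j' ∈ univ.filter (fun j' => σ j' < σ j), (1 - q j'))
          = ∏ j' ∈ M.filter (fun j' => σ j' < σ j), (1 - q j')
        refine (Finset.prod_subset ?_ ?_).symm
        · intro z hz
          rw [Finset.mem_filter] at hz ⊢
          exact ⟨Finset.mem_univ z, hz.2⟩
        · intro z hz hz'
          rw [Finset.mem_filter] at hz
          have : z ∉ M := by
            intro hzM
            exact hz' (Finset.mem_filter.mpr ⟨hzM, hz.2⟩)
          rw [hq0 z this]; ring
      rw [hPeq]
      have : b ^ c j = ∏ _j' ∈ M.filter (fun j' => σ j' < σ j), b := by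
        rw [Finset.prod_const, hcdef]
      rw [this]
      apply Finset.prod_le_prod
      · intro z _; exact hb0
      · intro z _
        have := hqub z
        rw [hbdef]; linarith
    -- final chain
    have hRge : (1 / (K:ℝ)) * ∑ j ∈ M, w j * g j ≤ ∑ j ∈ M, w j * q j * P j := by
      rw [Finset.mul_sum]
      apply Finset.sum_le_sum
      intro j hj
      have hq1 : 1 / (K:ℝ) ≤ q j := le_of_lt (hqlb j hj)
      have hgP : g j ≤ P j := hPg j hj
      have h1 : (1 / (K:ℝ)) * g j ≤ q j * g j :=
        mul_le_mul_of_nonneg_right hq1 (hgnn j)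
      have h2 : q j * g j ≤ q j * P j :=
        mul_le_mul_of_nonneg_left hgP (hqnn j)
      calc 1 / (K:ℝ) * (w j * g j) = w j * (1 / (K:ℝ) * g j) := by ring
      _ ≤ w j * (q j * P j) := by
          apply mul_le_mul_of_nonneg_left _ (hwnn j)
          linarith
      _ = w j * q j * P j := by ring
    have hLle : ∑ j ∈ M, w j * q j ≤ (2 / (K:ℝ)) * ∑ j ∈ M, w j := by
      rw [Finset.mul_sum]
      apply Finset.sum_le_sum
      intro j hj
      calc w j * q j ≤ w j * (2 / K) :=
            mul_le_mul_of_nonneg_left (hqub j) (hwnn j)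
      _ = 2 / K * w j := by ring
    have hfin : (1 / (K:ℝ)) * ((∑ j ∈ M, w j) / 6) ≤ ∑ j ∈ M, w j * q j * P j := by
      calc (1 / (K:ℝ)) * ((∑ j ∈ M, w j) / 6)
          ≤ (1 / (K:ℝ)) * ∑ j ∈ M, w j * g j := by
            apply mul_le_mul_of_nonneg_left hcore (by positivity)
      _ ≤ ∑ j ∈ M, w j * q j * P j := hRge
    calc (∑ j ∈ M, w j * q j) / 14 ≤ ((2 / (K:ℝ)) * ∑ j ∈ M, w j) / 14 := by
          linarith [hLle]
    _ = (∑ j ∈ M, w j) / (7 * K) := by field_simp; ring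
    _ ≤ (1 / (K:ℝ)) * ((∑ j ∈ M, w j) / 6) := by
        have heq : (1 / (K:ℝ)) * ((∑ j ∈ M, w j) / 6) = (∑ j ∈ M, w j) / (6 * K) := by
          field_simp
        rw [heq]
        apply div_le_div_of_nonneg_left hsumwnn (by positivity)
        linarith
    _ ≤ ∑ j ∈ M, w j * q j * P j := hfin
end
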